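/- arXiv:2403.03668 — 8 statements merged into one kernel-verified Lean document; each statement's English description precedes it below -/
import Mathlib

section
/- Every connected graph with independence number at most 2 has a Hamiltonian path. -/
open SimpleGraph

variable {V : Type*}

/-- `G` has independence number at most `k`: every independent set has at most `k` vertices. -/
def IndepBound (G : SimpleGraph V) (k : ℕ) : Prop :=
  ∀ s : Finset V, (∀ a ∈ s, ∀ b ∈ s, a ≠ b → ¬ G.Adj a b) → s.card ≤ k

/-- The induced subgraph on `A` has independence number at most `k`. -/
def IndepBoundOn (G : SimpleGraph V) (A : Set V) (k : ℕ) : Prop :=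
  ∀ s : Finset V, ↑s ⊆ A → (∀ a ∈ s, ∀ b ∈ s, a ≠ b → ¬ G.Adj a b) → s.card ≤ k

/-- `x` is a cut vertex (articulation point): `G - x` is disconnected. -/
def IsCutVertex (G : SimpleGraph V) (x : V) : Prop :=
  ¬ (G.induce ({x}ᶜ : Set V)).Preconnected

/-- `S` is a vertex cut: `G - S` is disconnected. -/
def IsCutSet (G : SimpleGraph V) (S : Set V) : Prop :=
  ¬ (G.induce Sᶜ).Preconnected

/-- `G` has a Hamiltonian path with endpoints `u` and `v`. -/
def HasHamPathBetween [DecidableEq V] (G : SimpleGraph V) (u v : V) : Prop :=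
  ∃ p : G.Walk u v, p.IsHamiltonian

/-- `G` has a Hamiltonian path starting at `u`. -/
def HasHamPathFrom [DecidableEq V] (G : SimpleGraph V) (u : V) : Prop :=
  ∃ v, ∃ p : G.Walk u v, p.IsHamiltonian

/-- `G` has a Hamiltonian path. -/
def HasHamPath [DecidableEq V] (G : SimpleGraph V) : Prop :=
  ∃ u v, ∃ p : G.Walk u v, p.IsHamiltonian

/-- `G` has a path cover of size two: two vertex-disjoint paths, one starting at `u`
and the other starting at `v`, whose vertex sets partition `V(G)`. -/
def HasPathCover2 (G : SimpleGraph V) (u v : V) : Prop :=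
  ∃ (a b : V) (p : G.Walk u a) (q : G.Walk v b), p.IsPath ∧ q.IsPath ∧
    ∀ w, (w ∈ p.support ∧ w ∉ q.support) ∨ (w ∈ q.support ∧ w ∉ p.support)

/-- `G` is `s`-connected: more than `s` vertices, and removing any fewer than `s`
vertices leaves the graph connected. -/
def SConnected (G : SimpleGraph V) (s : ℕ) : Prop :=
  s < Nat.card V ∧ ∀ S : Set V, S.ncard < s → (G.induce Sᶜ).Connected

/-!
Paths can be grown one vertex at a time until they are Hamiltonian. If a path `u … z` misses a
vertex, connectivity gives a vertex `v` off the path adjacent to some `w` on it. Either `v` is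
adjacent to `u` or `z`, or else, as `{v, u, z}` is not independent, `u ~ z`; then going from `v`
to `w`, back along the path to `u`, over to `z` and back to the successor of `w` covers one
vertex more.
-/

namespace SimpleGraph

variable {G : SimpleGraph V}

lemma IndepBound.adj_of_not_adj_of_not_adj (hα : IndepBound G 2) {u v w : V} (huv : u ≠ v)
    (huw : u ≠ w) (hvw : v ≠ w) (hnuv : ¬G.Adj u v) (hnuw : ¬G.Adj u w) : G.Adj v w := by
  classical
  by_contra hnvw
  have hindep : ∀ a ∈ ({u, v, w} : Finset V), ∀ b ∈ ({u, v, w} : Finset V),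
      a ≠ b → ¬G.Adj a b := by
    simp only [Finset.mem_insert, Finset.mem_singleton]
    rintro a (rfl | rfl | rfl) b (rfl | rfl | rfl) hab <;> simp_all [G.adj_comm]
  have := hα _ hindep
  rw [Finset.card_insert_of_notMem (by simp [huv, huw]), Finset.card_pair hvw] at this
  omega

lemma IndepBound.exists_isPath_length_succ (hα : IndepBound G 2) {u z v w : V}
    (p : G.Walk u z) (hp : p.IsPath) (hv : v ∉ p.support) (hw : w ∈ p.support)
    (hvw : G.Adj v w) :
    ∃ (a b : V) (q : G.Walk a b), q.IsPath ∧ q.length = p.length + 1 := by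
  by_cases hvu : G.Adj v u
  · exact ⟨v, z, .cons hvu p, hp.cons hv, rfl⟩
  by_cases hvz : G.Adj v z
  · exact ⟨v, u, .cons hvz p.reverse, hp.reverse.cons (by simpa using hv), by simp⟩
  -- Otherwise `{v, u, z}` is not independent, so `u ~ z`, and for `p = q ++ (w, c) :: r`
  -- the walk `v, w, q⁻¹, z, r⁻¹` ending at `c` is a longer path.
  obtain ⟨q, r, rfl⟩ := (Walk.mem_support_iff_exists_append).1 hw
  cases r with
  | nil => exact absurd hvw hvz
  | @cons _ c _ hwc r =>
    have hsupp : (q.append (.cons hwc r)).support = q.support ++ r.support := by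
      simp [Walk.support_append]
    have hnodup := hp.support_nodup
    rw [hsupp] at hnodup hv
    have hvu' : v ≠ u := by
      rintro rfl; exact hv (List.mem_append_left _ q.start_mem_support)
    have hvz' : v ≠ z := by
      rintro rfl; exact hv (List.mem_append_right _ r.end_mem_support)
    have huz : u ≠ z := fun h =>
      List.disjoint_of_nodup_append hnodup q.start_mem_support (h ▸ r.end_mem_support)
    have huz_adj : G.Adj u z :=
      hα.adj_of_not_adj_of_not_adj hvu' hvz' huz hvu hvz
    refine ⟨v, c, .cons hvw (q.reverse.append (.cons huz_adj r.reverse)), ?_, ?_⟩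
    · have hperm : (q.support.reverse ++ r.support.reverse).Perm (q.support ++ r.support) :=
        (List.reverse_perm _).append (List.reverse_perm _)
      refine Walk.IsPath.mk' ?_
      simp only [Walk.support_cons, Walk.support_append, Walk.support_reverse, List.tail_cons]
      exact List.nodup_cons.2 ⟨fun h => hv (hperm.subset h), hperm.nodup_iff.2 hnodup⟩
    · simp only [Walk.length_cons, Walk.length_append, Walk.length_reverse]

lemma IndepBound.exists_isPath_length_eq [Fintype V] (hconn : G.Connected)
    (hα : IndepBound G 2) {n : ℕ} (hn : n < Fintype.card V) :
    ∃ (u z : V) (p : G.Walk u z), p.IsPath ∧ p.length = n := by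
  induction n with
  | zero =>
    obtain ⟨v⟩ := hconn.nonempty
    exact ⟨v, v, .nil, .nil, rfl⟩
  | succ n ih =>
    obtain ⟨u, z, p, hp, rfl⟩ := ih (by omega)
    obtain ⟨b, hb⟩ : ∃ b, b ∉ p.support := by
      classical
      by_contra! hall
      have := (hp.isHamiltonian_of_mem hall).length_eq
      omega
    obtain ⟨d, -, hd, hd'⟩ :=
      ((hconn u b).some).exists_boundary_dart {x | x ∈ p.support} p.start_mem_support hb
    exact hα.exists_isPath_length_succ p hp hd' hd d.adj.symm

end SimpleGraph

/-- Every connected graph with independence number at most 2 has a Hamiltonian path. -/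
theorem stmt_0 [Fintype V] [DecidableEq V] (G : SimpleGraph V)
    (hconn : G.Connected) (hα : IndepBound G 2) : HasHamPath G := by
  have : Nonempty V := hconn.nonempty
  obtain ⟨u, z, p, hp, hlen⟩ :=
    hα.exists_isPath_length_eq hconn (n := Fintype.card V - 1) (by simp [Fintype.card_pos])
  exact ⟨u, z, p, Walk.isHamiltonian_iff_isPath_and_length_eq.2 ⟨hp, hlen⟩⟩
end

section
/- Let G be a connected finite simple graph with independence number at most 2 and let u be a vertex of G. Then G has a Hamiltonian path starting at u if and only if u is not a cut vertex of G. -/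
open SimpleGraph

variable {V : Type*}

/-!
The tail of a Hamiltonian path from `u` runs through all of `G - u`, so `u` is not a cut vertex.

Conversely, if `G - u` is connected, then by induction it has a Hamiltonian path `v ⋯ b`
(started at one of its own non-cut vertices). If `u` is adjacent to `v` or to `b`, prepend `u`.
Otherwise `v` and `b` are adjacent, since `{u, v, b}` is not independent, so the path closes up
into a cycle through every vertex but `u`; opened at a neighbour of `u`, this cycle becomes a
path that `u` can be prepended to.
-/

variable {G : SimpleGraph V}

theorem IndepBound.induce {k : ℕ} (hα : IndepBound G k) (s : Set V) :
    IndepBound (G.induce s) k := by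
  intro t ht
  rw [← t.card_map (Function.Embedding.subtype _)]
  refine hα _ ?_
  simp only [Finset.mem_map, Function.Embedding.coe_subtype]
  rintro _ ⟨a, ha, rfl⟩ _ ⟨b, hb, rfl⟩ hab
  exact ht a ha b hb (ne_of_apply_ne _ hab)

theorem IndepBound.adj_of_not_adj_of_not_adj (hα : IndepBound G 2) {x y z : V}
    (hxy : x ≠ y) (hxz : x ≠ z) (hyz : y ≠ z) (hnxy : ¬G.Adj x y) (hnxz : ¬G.Adj x z) :
    G.Adj y z := by
  classical
  by_contra hnyz
  have hcard := hα {x, y, z} (by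
    simp only [Finset.mem_insert, Finset.mem_singleton]
    rintro a (rfl | rfl | rfl) c (rfl | rfl | rfl) hac <;> simp_all [G.adj_comm])
  rw [Finset.card_eq_three.mpr ⟨x, y, z, hxy, hxz, hyz, rfl⟩] at hcard
  omega

namespace SimpleGraph.Walk

variable [DecidableEq V]

theorem IsHamiltonian.preconnected_induce_compl_singleton {u v : V} {p : G.Walk u v}
    (hp : p.IsHamiltonian) : (G.induce {u}ᶜ).Preconnected := by
  rintro ⟨a, ha⟩ b
  have hnil : ¬p.Nil := fun hn => ha (by simpa [nil_iff_support_eq.mp hn] using hp.mem_support a)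
  have hnodup := hp.isPath.support_nodup
  rw [← p.cons_tail_support] at hnodup
  have htail : {x | x ∈ p.tail.support} = {u}ᶜ := by
    ext x
    rw [Set.mem_ofPred_eq, p.support_tail_of_not_nil hnil, Set.mem_compl_singleton_iff]
    refine ⟨fun hx hxu => (List.nodup_cons.mp hnodup).1 (hxu ▸ hx), fun hxu => ?_⟩
    have hx := hp.mem_support x
    rw [← p.cons_tail_support, List.mem_cons] at hx
    exact hx.resolve_left hxu
  have hconn := p.tail.connected_induce_support
  rw [htail] at hconn
  exact hconn.preconnected _ _

theorem IsPath.isHamiltonian_cons {u v b : V} {q : G.Walk v b} (hq : q.IsPath)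
    (hsupp : ∀ x, x ∈ q.support ↔ x ≠ u) (h : G.Adj u v) : (cons h q).IsHamiltonian :=
  (hq.cons fun hu => (hsupp u).mp hu rfl).isHamiltonian_of_mem fun x => by
    rw [support_cons, List.mem_cons, hsupp]
    exact eq_or_ne x u

/-- Closing `q` up by the edge `b v` gives a cycle, which is then opened at `x`. -/
theorem IsPath.exists_isPath_of_adj {v b x : V} {q : G.Walk v b} (hq : q.IsPath)
    (hbv : G.Adj b v) (hx : x ∈ q.support) :
    ∃ (y : V) (r : G.Walk x y), r.IsPath ∧ ∀ z, z ∈ r.support ↔ z ∈ q.support := by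
  let c := cons hbv q
  have hxc : x ∈ c.support := List.mem_cons_of_mem _ hx
  let d := c.rotate x hxc
  have hrot : d.support.tail ~r q.support := c.support_rotate x hxc
  have hd : ¬d.Nil := fun hn => by
    simpa [nil_iff_support_eq.mp hn] using hrot.perm.length_eq
  refine ⟨_, d.tail.reverse, ?_, fun z => ?_⟩
  · refine (IsPath.mk' ?_).reverse
    rw [d.support_tail_of_not_nil hd]
    exact hrot.perm.nodup_iff.mpr hq.support_nodup
  · rw [support_reverse, List.mem_reverse, d.support_tail_of_not_nil hd, hrot.perm.mem_iff]

end SimpleGraph.Walk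

theorem hasHamPathFrom_of_isPath [DecidableEq V] (hα : IndepBound G 2) {u v b x : V}
    (hux : G.Adj u x) {q : G.Walk v b} (hq : q.IsPath)
    (hsupp : ∀ z, z ∈ q.support ↔ z ≠ u) :
    HasHamPathFrom G u := by
  by_cases huv : G.Adj u v
  · exact ⟨b, _, hq.isHamiltonian_cons hsupp huv⟩
  by_cases hub : G.Adj u b
  · exact ⟨v, _, hq.reverse.isHamiltonian_cons (by simpa using hsupp) hub⟩
  have hx : x ∈ q.support := (hsupp x).mpr hux.ne'
  have hvb : v ≠ b := by
    rintro rfl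
    rw [Walk.nil_iff_support_eq.mp (Walk.isPath_iff_nil.mp hq), List.mem_singleton] at hx
    exact huv (hx ▸ hux)
  have hbv : G.Adj b v := (hα.adj_of_not_adj_of_not_adj ((hsupp v).mp q.start_mem_support).symm
    ((hsupp b).mp q.end_mem_support).symm hvb huv hub).symm
  obtain ⟨y, r, hr, hrsupp⟩ := hq.exists_isPath_of_adj hbv hx
  exact ⟨y, _, hr.isHamiltonian_cons (fun z => (hrsupp z).trans (hsupp z)) hux⟩

theorem hasHamPathFrom_of_preconnected_induce [Finite V] [dec : DecidableEq V]
    (hconn : G.Connected) (hα : IndepBound G 2) {u : V} (hu : (G.induce {u}ᶜ).Preconnected) :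
    HasHamPathFrom G u := by
  induction V using Finite.induction_subsingleton_or_nontrivial generalizing dec with
  | hbase V => exact ⟨u, .nil, .of_subsingleton⟩
  | hstep V ih =>
    obtain ⟨w, hw⟩ := exists_ne u
    have : Nonempty ({u}ᶜ : Set V) := ⟨⟨w, hw⟩⟩
    have hconn' : (G.induce {u}ᶜ).Connected := ⟨hu⟩
    obtain ⟨v, hv⟩ := hconn'.exists_preconnected_induce_compl_singleton_of_finite
    have hcard : Nat.card ({u}ᶜ : Set V) < Nat.card V := Finite.card_subtype_lt (x := u) (by simp)
    obtain ⟨b, p, hp⟩ := ih _ hcard hconn' (hα.induce _) hv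
    obtain ⟨x, hux⟩ := hconn.preconnected.exists_adj_of_nontrivial u
    refine hasHamPathFrom_of_isPath hα hux
      (hp.isPath.map (f := (Embedding.induce _).toHom) Subtype.val_injective) fun z => ?_
    rw [Walk.support_map, List.mem_map]
    exact ⟨fun ⟨y, _, hy⟩ => hy ▸ y.2, fun hz => ⟨⟨z, hz⟩, hp.mem_support _, rfl⟩⟩

/-- A connected graph with independence number at most 2 has a Hamiltonian path starting
at u iff u is not a cut vertex. -/
theorem stmt_3 [Fintype V] [DecidableEq V] (G : SimpleGraph V)
    (hconn : G.Connected) (hα : IndepBound G 2) (u : V) :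
    HasHamPathFrom G u ↔ ¬ IsCutVertex G u := by
  rw [IsCutVertex, not_not]
  exact ⟨fun ⟨_, _, hp⟩ => hp.preconnected_induce_compl_singleton,
    hasHamPathFrom_of_preconnected_induce hconn hα⟩
end

section
/- Let G be a connected finite simple graph with independence number at most 2 and let u, v be distinct vertices. Then G has a Hamiltonian path from u to v if and only if: (a) neither u nor v is a cut vertex of G, (b) for every cut vertex x of G, u and v lie in different components of G − x, and (c) {u,v} is not a vertex cut of size two in G. -/
open SimpleGraph

variable {V : Type*}

open List

section Aux
variable {V : Type*}


section Helpers

lemma induce_adj_iff {G : SimpleGraph V} {s : Set V} {a b : s} :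
    (G.induce s).Adj a b ↔ G.Adj a b := by
  simp only [SimpleGraph.induce, Function.Embedding.coe_subtype, comap_adj]

lemma exists_walk_of_chain' (G : SimpleGraph V) :
    ∀ (l : List V) (a b : V), l.Chain' G.Adj → l.head? = some a → l.getLast? = some b →
      ∃ p : G.Walk a b, p.support = l
  | [], a, b, _, h, _ => by simp at h
  | [x], a, b, _, hh, hl => by
    rcases (by simpa using hh : x = a) with rfl
    rcases (by simpa using hl : x = b) with rfl
    exact ⟨Walk.nil, rfl⟩
  | x :: y :: t, a, b, hch, hh, hl => by
    rcases (by simpa using hh : x = a) with rfl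
    obtain ⟨hadj, hch'⟩ := List.isChain_cons_cons.mp hch
    obtain ⟨p, hp⟩ := exists_walk_of_chain' G (y :: t) y b hch' rfl (by simpa using hl)
    exact ⟨Walk.cons hadj p, by simp [hp]⟩

lemma closed_walk {W : Type*} (G' : SimpleGraph W) {H : Set W}
    (hcl : ∀ ⦃z y⦄, z ∈ H → G'.Adj z y → y ∈ H) :
    ∀ {a b : W} (_ : G'.Walk a b), a ∈ H → b ∈ H := by
  intro a b q
  induction q with
  | nil => exact id
  | cons h p ih => exact fun ha => ih (hcl ha h)

lemma not_reachable_outside (G : SimpleGraph V) (s : Set V) (H : Set V)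
    (hcl : ∀ z ∈ H, ∀ y, G.Adj z y → y ∈ s → y ∈ H)
    (w : V) (hw : w ∈ H) (hws : w ∈ s) (y : V) (hy : y ∈ s) (hyH : y ∉ H) :
    ¬ (G.induce s).Reachable ⟨w, hws⟩ ⟨y, hy⟩ := by
  intro hr
  refine hr.elim fun q => hyH ?_
  exact closed_walk (G.induce s) (H := {a : s | a.1 ∈ H})
    (fun z y' hz hadj => hcl z.1 hz y'.1 (induce_adj_iff.mp hadj) y'.2) q hw

lemma reachable_of_chain' (G : SimpleGraph V) (s : Set V) :
    ∀ (l : List V) (_ : l.Chain' G.Adj) (hs : ∀ x ∈ l, x ∈ s)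
      (a : V) (ha : a ∈ l) (b : V) (hb : b ∈ l),
      (G.induce s).Reachable ⟨a, hs a ha⟩ ⟨b, hs b hb⟩ := by
  have key : ∀ (l : List V) (_ : l.Chain' G.Adj) (hs : ∀ x ∈ l, x ∈ s)
      (x : V) (hx : l.head? = some x) (b : V) (hb : b ∈ l),
      (G.induce s).Reachable ⟨x, hs x (List.mem_of_mem_head? hx)⟩ ⟨b, hs b hb⟩ := by
    intro l
    induction l with
    | nil => simp
    | cons c t ih =>
      intro hch hs x hx b hb
      rcases (by simpa using hx : c = x) with rfl
      rcases List.mem_cons.mp hb with rfl | hbt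
      · rfl
      · rcases t with _ | ⟨d, t'⟩
        · simp at hbt
        · have hadj : (G.induce s).Adj ⟨c, hs c (by simp)⟩ ⟨d, hs d (by simp)⟩ :=
            induce_adj_iff.mpr (List.isChain_cons_cons.mp hch).1
          have := ih (List.isChain_cons_cons.mp hch).2 (fun z hz => hs z (List.mem_cons_of_mem _ hz))
            d rfl b hbt
          exact (hadj.reachable).trans this
  intro l hch hs a ha b hb
  rcases l with _ | ⟨c, t⟩
  · simp at ha
  · exact (key (c::t) hch hs c rfl a ha).symm.trans (key (c::t) hch hs c rfl b hb)

lemma two_mem_split {α : Type*} {l : List α} {x y : α} (hx : x ∈ l) (hy : y ∈ l)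
    (hxy : x ≠ y) :
    ∃ S₁ c₁ S₂ c₂ S₃, l = S₁ ++ c₁ :: (S₂ ++ c₂ :: S₃) ∧
      ((c₁ = x ∧ c₂ = y) ∨ (c₁ = y ∧ c₂ = x)) := by
  obtain ⟨S₁, T, rfl⟩ := List.append_of_mem hx
  rcases List.mem_append.mp hy with hyS | hyT
  · obtain ⟨A, B, rfl⟩ := List.append_of_mem hyS
    exact ⟨A, y, B, x, T, by simp, Or.inr ⟨rfl, rfl⟩⟩
  · have hyT' : y ∈ T := by
      rcases List.mem_cons.mp hyT with rfl | h
      · exact absurd rfl hxy.symm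
      · exact h
    obtain ⟨A, B, rfl⟩ := List.append_of_mem hyT'
    exact ⟨S₁, x, A, y, B, by simp, Or.inl ⟨rfl, rfl⟩⟩

end Helpers

lemma no_reroute (G : SimpleGraph V)
    (u v : V) (l : List V) (hnd : l.Nodup) (hch : l.Chain' G.Adj)
    (hhd : l.head? = some u) (hlast : l.getLast? = some v)
    (hmax : ∀ l' : List V, l'.Nodup → l'.Chain' G.Adj → l'.head? = some u →
      l'.getLast? = some v → l'.length ≤ l.length)
    (H : Set V) (hHl : ∀ z ∈ H, z ∉ l)
    (m : List V) (hmch : m.Chain' G.Adj) (hmnd : m.Nodup)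
    (h₁ h₂ : V) (hmh : m.head? = some h₁) (hml : m.getLast? = some h₂) (hmH : ∀ y ∈ m, y ∈ H)
    (S₁ S₂ S₃ : List V) (c₁ c₂ : V)
    (hdec : l = S₁ ++ c₁ :: (S₂ ++ c₂ :: S₃))
    (hadj₁ : G.Adj c₁ h₁) (hadj₂ : G.Adj c₂ h₂)
    (hok : S₂ = [] ∨ ∃ b S₂' a S₃', S₂ = b :: S₂' ∧ S₃ = a :: S₃' ∧ G.Adj b a) :
    False := by
  have hm0 : m ≠ [] := by intro h; rw [h] at hmh; simp at hmh
  set l' := S₁ ++ c₁ :: (m ++ c₂ :: (S₂.reverse ++ S₃)) with hl'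
  have hperm : l'.Perm (l ++ m) := by
    rw [hdec, hl']
    have h1 : (m ++ c₂ :: (S₂.reverse ++ S₃)).Perm ((S₂ ++ c₂ :: S₃) ++ m) := by
      refine (List.perm_append_comm).trans (List.Perm.append_right m ?_)
      refine Perm.trans ?_ (List.perm_middle).symm
      exact List.Perm.cons c₂ (List.Perm.append_right S₃ (List.reverse_perm S₂))
    calc S₁ ++ c₁ :: (m ++ c₂ :: (S₂.reverse ++ S₃))
        ~ S₁ ++ c₁ :: ((S₂ ++ c₂ :: S₃) ++ m) := (h1.cons c₁).append_left S₁
      _ = (S₁ ++ c₁ :: (S₂ ++ c₂ :: S₃)) ++ m := by simp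
  have hnd' : l'.Nodup := hperm.nodup_iff.mpr
    (List.nodup_append'.mpr ⟨hnd, hmnd, fun a hal ham => hHl a (hmH a ham) hal⟩)
  obtain ⟨hS₁, hrest, hlink₁⟩ := List.isChain_append.mp (hdec ▸ hch)
  obtain ⟨hlink₂, hrest₂⟩ := List.isChain_cons.mp hrest
  obtain ⟨hS₂, hrest₃, hlink₃⟩ := List.isChain_append.mp hrest₂
  obtain ⟨hlink₄, hS₃⟩ := List.isChain_cons.mp hrest₃
  have hT : (S₂.reverse ++ S₃).Chain' G.Adj := by
    refine List.isChain_append.mpr ⟨?_, hS₃, ?_⟩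
    · exact List.isChain_reverse.mpr (hS₂.imp fun a b h => h.symm)
    · intro x hx y hy
      rcases hok with rfl | ⟨b, S₂', a, S₃', rfl, rfl, hba⟩
      · simp at hx
      · rw [List.getLast?_reverse] at hx
        simp only [List.head?_cons, Option.mem_some_iff] at hx hy
        subst hx; subst hy; exact hba
  have hc₂T : (c₂ :: (S₂.reverse ++ S₃)).Chain' G.Adj := by
    refine List.isChain_cons.mpr ⟨?_, hT⟩
    intro y hy
    cases S₂ with
    | nil =>
      simp only [List.reverse_nil, List.nil_append] at hy
      exact hlink₄ y hy
    | cons b S₂' =>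
      rw [List.head?_append_of_ne_nil _ (by simp), List.head?_reverse] at hy
      exact (hlink₃ y hy c₂ (by simp)).symm
  have hmc : (m ++ c₂ :: (S₂.reverse ++ S₃)).Chain' G.Adj := by
    refine List.isChain_append.mpr ⟨hmch, hc₂T, ?_⟩
    intro x hx y hy
    rw [hml] at hx
    simp only [Option.mem_some_iff, List.head?_cons] at hx hy
    subst hx; subst hy; exact hadj₂.symm
  have hch' : l'.Chain' G.Adj := by
    rw [hl']
    refine List.isChain_append.mpr ⟨hS₁, ?_, ?_⟩
    · refine List.isChain_cons.mpr ⟨?_, hmc⟩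
      intro y hy
      rw [List.head?_append_of_ne_nil _ hm0, hmh] at hy
      simp only [Option.mem_some_iff] at hy
      subst hy; exact hadj₁
    · intro x hx y hy
      simp only [List.head?_cons, Option.mem_some_iff] at hy
      subst hy
      exact hlink₁ x hx c₁ (by simp)
  have hhd' : l'.head? = some u := by
    rw [hdec] at hhd
    rw [hl']
    cases S₁ with
    | nil => simpa using hhd
    | cons s S' => simpa using hhd
  have hlast' : l'.getLast? = some v := by
    rw [hdec] at hlast
    rw [hl']
    rcases hok with rfl | ⟨b, S₂', a, S₃', rfl, rfl, hba⟩
    · rw [show S₁ ++ c₁ :: (m ++ c₂ :: (List.reverse [] ++ S₃)) = (S₁ ++ c₁ :: m) ++ c₂ :: S₃ by simp,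
        List.getLast?_append_cons]
      rw [show S₁ ++ c₁ :: ([] ++ c₂ :: S₃) = (S₁ ++ [c₁]) ++ c₂ :: S₃ by simp,
        List.getLast?_append_cons] at hlast
      exact hlast
    · rw [show S₁ ++ c₁ :: (m ++ c₂ :: ((b :: S₂').reverse ++ a :: S₃')) =
        (S₁ ++ c₁ :: (m ++ c₂ :: (b :: S₂').reverse)) ++ a :: S₃' by simp,
        List.getLast?_append_cons]
      rw [show S₁ ++ c₁ :: ((b :: S₂') ++ c₂ :: a :: S₃') =
        (S₁ ++ c₁ :: ((b :: S₂') ++ [c₂])) ++ a :: S₃' by simp,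
        List.getLast?_append_cons] at hlast
      exact hlast
  have hlen := hmax l' hnd' hch' hhd' hlast'
  have hle : l'.length = l.length + m.length := by rw [hperm.length_eq]; simp
  have : 0 < m.length := List.length_pos_iff.mpr hm0
  omega

lemma succ_arg [DecidableEq V] (G : SimpleGraph V) (hα : IndepBound G 2)
    (u v : V) (l : List V) (hnd : l.Nodup) (hch : l.Chain' G.Adj)
    (hhd : l.head? = some u) (hlast : l.getLast? = some v)
    (hmax : ∀ l' : List V, l'.Nodup → l'.Chain' G.Adj → l'.head? = some u →
      l'.getLast? = some v → l'.length ≤ l.length)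
    (w : V) (H : Set V) (hw : w ∈ H) (hHl : ∀ z ∈ H, z ∉ l)
    (hHpath : ∀ h₁ ∈ H, ∀ h₂ ∈ H, ∃ m : List V, m.Chain' G.Adj ∧ m.Nodup ∧
      m.head? = some h₁ ∧ m.getLast? = some h₂ ∧ ∀ y ∈ m, y ∈ H)
    (S₁ S₂ S₃ : List V) (c₁ c₂ : V) (hdec : l = S₁ ++ c₁ :: (S₂ ++ c₂ :: S₃))
    (h₁ : V) (hh₁ : h₁ ∈ H) (hadj₁ : G.Adj c₁ h₁)
    (h₂ : V) (hh₂ : h₂ ∈ H) (hadj₂ : G.Adj c₂ h₂)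
    (hS₃ : S₃ ≠ []) : False := by
  obtain ⟨m, hmch, hmnd, hmh, hml, hmH⟩ := hHpath h₁ hh₁ h₂ hh₂
  cases S₂ with
  | nil =>
    exact no_reroute G u v l hnd hch hhd hlast hmax H hHl m hmch hmnd h₁ h₂ hmh hml hmH
      S₁ [] S₃ c₁ c₂ hdec hadj₁ hadj₂ (Or.inl rfl)
  | cons b S₂' =>
    cases S₃ with
    | nil => exact hS₃ rfl
    | cons a S₃' =>
      have hbA : ∀ h ∈ H, ¬ G.Adj b h := by
        intro hb hbH hadjb
        obtain ⟨m', c1, c2, c3, c4, c5⟩ := hHpath h₁ hh₁ hb hbH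
        exact no_reroute G u v l hnd hch hhd hlast hmax H hHl m' c1 c2 h₁ hb c3 c4 c5
          S₁ [] (S₂' ++ c₂ :: a :: S₃') c₁ b (by simp [hdec]) hadj₁ hadjb (Or.inl rfl)
      have haA : ∀ h ∈ H, ¬ G.Adj a h := by
        intro ha haH hadja
        obtain ⟨m', c1, c2, c3, c4, c5⟩ := hHpath h₂ hh₂ ha haH
        exact no_reroute G u v l hnd hch hhd hlast hmax H hHl m' c1 c2 h₂ ha c3 c4 c5
          (S₁ ++ c₁ :: b :: S₂') [] S₃' c₂ a (by simp [hdec]) hadj₂ hadja (Or.inl rfl)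
      have hba : ¬ G.Adj b a := fun hba =>
        no_reroute G u v l hnd hch hhd hlast hmax H hHl m hmch hmnd h₁ h₂ hmh hml hmH
          S₁ (b :: S₂') (a :: S₃') c₁ c₂ hdec hadj₁ hadj₂
          (Or.inr ⟨b, S₂', a, S₃', rfl, rfl, hba⟩)
      have hbl : b ∈ l := by rw [hdec]; simp
      have hal : a ∈ l := by rw [hdec]; simp
      have hwb : w ≠ b := fun h => hHl w hw (h ▸ hbl)
      have hwa : w ≠ a := fun h => hHl w hw (h ▸ hal)
      have hab : b ≠ a := by
        have h2 : (c₁ :: ((b :: S₂') ++ c₂ :: a :: S₃')).Nodup :=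
          (List.nodup_append'.mp (hdec ▸ hnd)).2.1
        have h3 : ((b :: S₂') ++ c₂ :: a :: S₃').Nodup := h2.of_cons
        have hd := (List.nodup_append'.mp h3).2.2
        intro h; exact hd (show b ∈ b :: S₂' by simp) (show b ∈ c₂ :: a :: S₃' by simp [h])
      have hcard : ({b, a, w} : Finset V).card ≤ 2 := by
        refine hα _ ?_
        intro x hx y hy hxy
        simp only [Finset.mem_insert, Finset.mem_singleton] at hx hy
        rcases hx with rfl | rfl | rfl <;> rcases hy with rfl | rfl | rfl
        · exact absurd rfl hxy
        · exact hba
        · exact fun h => hbA _ hw h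
        · exact fun h => hba h.symm
        · exact absurd rfl hxy
        · exact fun h => haA _ hw h
        · exact fun h => hbA _ hw h.symm
        · exact fun h => haA _ hw h.symm
        · exact absurd rfl hxy
      have : ({b, a, w} : Finset V).card = 3 := by
        rw [Finset.card_insert_of_notMem (by simp [hab, hwb.symm]),
          Finset.card_insert_of_notMem (by simp [hwa.symm]), Finset.card_singleton]
      omega

lemma reverse_dir [Fintype V] [DecidableEq V] (G : SimpleGraph V)
    (hconn : G.Connected) (hα : IndepBound G 2) (u v : V) (huv : u ≠ v)
    (h1 : ¬ IsCutVertex G u) (h2 : ¬ IsCutVertex G v)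
    (h3 : ∀ x : V, IsCutVertex G x →
      ∃ (hu : u ∈ ({x}ᶜ : Set V)) (hv : v ∈ ({x}ᶜ : Set V)),
        ¬ (G.induce ({x}ᶜ : Set V)).Reachable ⟨u, hu⟩ ⟨v, hv⟩)
    (h4 : ¬ IsCutSet G {u, v}) : HasHamPathBetween G u v := by
  classical
  obtain ⟨q0⟩ := hconn.preconnected u v
  have hP0 : (Walk.toPath q0).1.support.Nodup ∧ (Walk.toPath q0).1.support.Chain' G.Adj ∧
      (Walk.toPath q0).1.support.head? = some u ∧ (Walk.toPath q0).1.support.getLast? = some v :=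
    ⟨(Walk.toPath q0).2.support_nodup, Walk.isChain_adj_support _,
      by rw [Walk.support_eq_cons]; rfl,
      by rw [List.getLast?_eq_getLast (Walk.support_ne_nil _), Walk.getLast_support]⟩
  set S : Set ℕ := {n | ∃ l : List V, (l.Nodup ∧ l.Chain' G.Adj ∧ l.head? = some u ∧
    l.getLast? = some v) ∧ l.length = n} with hS
  have hbdd : BddAbove S := ⟨Fintype.card V, by rintro n ⟨l, hl, rfl⟩; exact hl.1.length_le_card⟩
  have hSne : S.Nonempty := ⟨_, ⟨_, hP0, rfl⟩⟩
  obtain ⟨l, hPl, hlen⟩ := Nat.sSup_mem hSne hbdd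
  obtain ⟨hnd, hch, hhd, hlast⟩ := hPl
  have hmax : ∀ l' : List V, l'.Nodup → l'.Chain' G.Adj → l'.head? = some u →
      l'.getLast? = some v → l'.length ≤ l.length := by
    intro l' a b c d
    rw [hlen]
    exact le_csSup hbdd ⟨l', ⟨a, b, c, d⟩, rfl⟩
  have hul : u ∈ l := List.mem_of_mem_head? (by rw [hhd]; rfl)
  have hvl : v ∈ l := List.mem_of_mem_getLast? (by rw [hlast]; rfl)
  by_cases hcov : ∀ x : V, x ∈ l
  · obtain ⟨p, hp⟩ := exists_walk_of_chain' G l u v hch hhd hlast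
    exact ⟨p, fun a => by rw [hp]; exact List.count_eq_one_of_mem hnd (hcov a)⟩
  exfalso
  push_neg at hcov
  obtain ⟨w, hwl⟩ := hcov
  set H : Set V := {z | ∃ q : G.Walk w z, ∀ y ∈ q.support, y ∉ l} with hH
  have hwH : w ∈ H := ⟨Walk.nil, by
    intro y hy
    simp only [Walk.support_nil, List.mem_singleton] at hy
    exact hy ▸ hwl⟩
  have hHl : ∀ z ∈ H, z ∉ l := by rintro z ⟨q, hq⟩; exact hq z q.end_mem_support
  have hHcl : ∀ z ∈ H, ∀ y, G.Adj z y → y ∉ l → y ∈ H := by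
    rintro z ⟨q, hq⟩ y hadj hyl
    refine ⟨q.append (Walk.cons hadj Walk.nil), ?_⟩
    intro t ht
    rw [Walk.mem_support_append_iff] at ht
    rcases ht with h | h
    · exact hq t h
    · rcases (by simpa using h : t = z ∨ t = y) with rfl | rfl
      · exact hq t q.end_mem_support
      · exact hyl
  have hHpath : ∀ h₁ ∈ H, ∀ h₂ ∈ H, ∃ m : List V, m.Chain' G.Adj ∧ m.Nodup ∧
      m.head? = some h₁ ∧ m.getLast? = some h₂ ∧ ∀ y ∈ m, y ∈ H := by
    rintro h₁ ⟨q₁, hq₁⟩ h₂ ⟨q₂, hq₂⟩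
    have hrsub : ∀ y ∈ (q₁.reverse.append q₂).bypass.support, y ∉ l := by
      intro y hy
      have h := Walk.support_bypass_subset _ hy
      rw [Walk.mem_support_append_iff] at h
      rcases h with h | h
      · exact hq₁ y (by rwa [Walk.support_reverse, List.mem_reverse] at h)
      · exact hq₂ y h
    refine ⟨(q₁.reverse.append q₂).bypass.support, Walk.isChain_adj_support _,
      (Walk.bypass_isPath _).support_nodup, ?_, ?_, ?_⟩
    · rw [Walk.support_eq_cons]; rfl
    · rw [List.getLast?_eq_getLast (Walk.support_ne_nil _), Walk.getLast_support]
    · intro y hy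
      refine ⟨q₁.append ((q₁.reverse.append q₂).bypass.takeUntil y hy), ?_⟩
      intro t ht
      rw [Walk.mem_support_append_iff] at ht
      rcases ht with h | h
      · exact hq₁ t h
      · exact hrsub t (Walk.support_takeUntil_subset _ hy h)
  have hclosure : ∀ (s : Set V), (∀ x, x ∈ l → (∃ h ∈ H, G.Adj x h) → x ∉ s) →
      ∀ z ∈ H, ∀ y, G.Adj z y → y ∈ s → y ∈ H := by
    intro s hs z hz y hadj hys
    by_cases hyl : y ∈ l
    · exact absurd hys (hs y hyl ⟨z, hz, hadj.symm⟩)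
    · exact hHcl z hz y hadj hyl
  obtain ⟨z₀, hz₀l, hz₀A⟩ : ∃ z, z ∈ l ∧ ∃ h ∈ H, G.Adj z h := by
    by_contra hA
    push_neg at hA
    have hcl : ∀ ⦃z y⦄, z ∈ H → G.Adj z y → y ∈ H := by
      intro z y hz hadj
      by_cases hyl : y ∈ l
      · exact absurd hadj.symm (hA y hyl z hz)
      · exact hHcl z hz y hadj hyl
    exact (hconn.preconnected w u).elim fun q => hHl u (closed_walk G hcl q hwH) hul
  have hwu : w ≠ u := fun h => hwl (h ▸ hul)
  have hwv : w ≠ v := fun h => hwl (h ▸ hvl)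
  by_cases hAuv : ∀ x, x ∈ l → (∃ h ∈ H, G.Adj x h) → (x = u ∨ x = v)
  · by_cases hboth : (∃ h ∈ H, G.Adj u h) ∧ (∃ h ∈ H, G.Adj v h)
    · obtain ⟨⟨hu', huH, huadj⟩, ⟨hv', hvH, hvadj⟩⟩ := hboth
      rcases l with _ | ⟨a0, t⟩
      · simp at hhd
      obtain rfl : u = a0 := by simpa using hhd.symm
      rcases t with _ | ⟨b0, t'⟩
      · exact huv (by simpa using hlast)
      rcases t' with _ | ⟨c0, t''⟩
      · obtain rfl : v = b0 := by simpa using hlast.symm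
        obtain ⟨m, m1, m2, m3, m4, m5⟩ := hHpath hu' huH hv' hvH
        exact no_reroute G u v _ hnd hch hhd hlast hmax H hHl m m1 m2 hu' hv' m3 m4 m5
          [] [] [] u v rfl huadj hvadj (Or.inl rfl)
      · have hb0l : b0 ∈ (u :: b0 :: c0 :: t'') := by simp
        rw [List.nodup_cons, List.nodup_cons] at hnd
        have hb0u : b0 ≠ u := fun h => hnd.1 (by simp [h])
        have hvtail : v ∈ c0 :: t'' := by
          have h5 := hlast
          rw [List.getLast?_cons_cons, List.getLast?_cons_cons] at h5
          exact List.mem_of_mem_getLast? (by rw [h5]; rfl)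
        have hb0v : b0 ≠ v := fun h => hnd.2.1 (h.symm ▸ hvtail)
        have hpc := not_not.mp h4
        exact not_reachable_outside G ({u, v}ᶜ) H
          (hclosure _ (fun x hx hxA hxs => by
            rcases hAuv x hx hxA with rfl | rfl <;> simp at hxs))
          w hwH (by simp [hwu, hwv]) b0 (by simp [hb0u, hb0v])
          (fun hb0H => hHl b0 hb0H hb0l) (hpc _ _)
    · rw [not_and_or] at hboth
      have hz₀uv := hAuv z₀ hz₀l hz₀A
      have hsingle : ∀ x, x ∈ l → (∃ h ∈ H, G.Adj x h) → x = z₀ := by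
        intro x hx hxA
        rcases hboth with hnu | hnv
        · rcases hAuv x hx hxA with rfl | rfl
          · exact absurd hxA hnu
          · rcases hz₀uv with rfl | rfl
            · exact absurd hz₀A hnu
            · rfl
        · rcases hAuv x hx hxA with rfl | rfl
          · rcases hz₀uv with rfl | rfl
            · rfl
            · exact absurd hz₀A hnv
          · exact absurd hxA hnv
      rcases hz₀uv with hz0 | hz0
      · have hpc := not_not.mp h1
        exact not_reachable_outside G ({u}ᶜ) H
          (hclosure _ (fun x hx hxA hxs => by rw [hsingle x hx hxA, hz0] at hxs; simp at hxs))
          w hwH (by simpa using hwu)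
          v (by simpa using huv.symm) (fun hvH => hHl v hvH hvl) (hpc _ _)
      · have hpc := not_not.mp h2
        exact not_reachable_outside G ({v}ᶜ) H
          (hclosure _ (fun x hx hxA hxs => by rw [hsingle x hx hxA, hz0] at hxs; simp at hxs))
          w hwH (by simpa using hwv)
          u (by simpa using huv) (fun huH => hHl u huH hul) (hpc _ _)
  · push_neg at hAuv
    obtain ⟨z, hzl, hzA, hzu, hzv⟩ := hAuv
    by_cases hone : ∀ x, x ∈ l → (∃ h ∈ H, G.Adj x h) → x = z
    · have hcut : IsCutVertex G z := by
        intro hpc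
        exact not_reachable_outside G ({z}ᶜ) H
          (hclosure _ (fun x hx hxA hxs => by rw [hone x hx hxA] at hxs; simp at hxs))
          w hwH (by simpa using show w ≠ z from fun h => hwl (h ▸ hzl))
          u (by simpa using Ne.symm hzu) (fun huH => hHl u huH hul) (hpc _ _)
      obtain ⟨hu', hv', hnr⟩ := h3 z hcut
      have huvadj : ¬ G.Adj u v := fun h => hnr ((induce_adj_iff.mpr h).reachable)
      have huA : ∀ h ∈ H, ¬ G.Adj u h := fun h hH' hadj => hzu (hone u hul ⟨h, hH', hadj⟩).symm
      have hvA : ∀ h ∈ H, ¬ G.Adj v h := fun h hH' hadj => hzv (hone v hvl ⟨h, hH', hadj⟩).symm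
      have hcard : ({u, v, w} : Finset V).card ≤ 2 := by
        refine hα _ ?_
        intro x hx y hy hxy
        simp only [Finset.mem_insert, Finset.mem_singleton] at hx hy
        rcases hx with rfl | rfl | rfl <;> rcases hy with rfl | rfl | rfl
        · exact absurd rfl hxy
        · exact huvadj
        · exact fun h => huA _ hwH h
        · exact fun h => huvadj h.symm
        · exact absurd rfl hxy
        · exact fun h => hvA _ hwH h
        · exact fun h => huA _ hwH h.symm
        · exact fun h => hvA _ hwH h.symm
        · exact absurd rfl hxy
      have hc3 : ({u, v, w} : Finset V).card = 3 := by
        rw [Finset.card_insert_of_notMem (by simp [huv, hwu.symm]),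
          Finset.card_insert_of_notMem (by simp [hwv.symm]), Finset.card_singleton]
      omega
    · push_neg at hone
      obtain ⟨z', hz'l, hz'A, hz'z⟩ := hone
      obtain ⟨S₁, c₁, S₂, c₂, S₃, hdec2, hcc⟩ := two_mem_split hzl hz'l (Ne.symm hz'z)
      have hA₁ : ∃ h ∈ H, G.Adj c₁ h := by
        rcases hcc with ⟨h6, _⟩ | ⟨h6, _⟩ <;> rw [h6] <;> first | exact hzA | exact hz'A
      have hA₂ : ∃ h ∈ H, G.Adj c₂ h := by
        rcases hcc with ⟨_, h6⟩ | ⟨_, h6⟩ <;> rw [h6] <;> first | exact hzA | exact hz'A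
      obtain ⟨h₁, hh₁H, hadj₁⟩ := hA₁
      obtain ⟨h₂, hh₂H, hadj₂⟩ := hA₂
      by_cases h3e : S₃ = []
      · subst h3e
        have hc₂v : c₂ = v := by
          have h5 := hlast
          rw [hdec2, show S₁ ++ c₁ :: (S₂ ++ [c₂]) = (S₁ ++ c₁ :: S₂) ++ [c₂] by simp,
            List.getLast?_concat] at h5
          exact Option.some_inj.mp h5
        have hc₁z : c₁ = z := by
          rcases hcc with ⟨h6, _⟩ | ⟨_, h7⟩
          · exact h6
          · exact absurd (h7.symm.trans hc₂v) hzv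
        have hS₁ne : S₁ ≠ [] := by
          intro h
          rw [hdec2, h] at hhd
          simp only [List.nil_append, List.head?_cons, Option.some_inj] at hhd
          exact hzu (hc₁z ▸ hhd)
        have hch_r : l.reverse.Chain' G.Adj :=
          List.isChain_reverse.mpr (hch.imp fun _ _ h => h.symm)
        have hnd_r := List.nodup_reverse.mpr hnd
        have hhd_r : l.reverse.head? = some v := by rw [List.head?_reverse, hlast]
        have hlast_r : l.reverse.getLast? = some u := by rw [List.getLast?_reverse, hhd]
        have hmax_r : ∀ l' : List V, l'.Nodup → l'.Chain' G.Adj → l'.head? = some v →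
            l'.getLast? = some u → l'.length ≤ l.reverse.length := by
          intro l' a b c d
          rw [List.length_reverse]
          have := hmax l'.reverse (List.nodup_reverse.mpr a)
            (List.isChain_reverse.mpr (b.imp fun _ _ h => h.symm))
            (by rw [List.head?_reverse, d]) (by rw [List.getLast?_reverse, c])
          simpa using this
        have hHl_r : ∀ t ∈ H, t ∉ l.reverse := fun t ht h => hHl t ht (List.mem_reverse.mp h)
        have hdec_r : l.reverse = [] ++ c₂ :: (S₂.reverse ++ c₁ :: S₁.reverse) := by
          rw [hdec2]; simp
        exact succ_arg G hα v u l.reverse hnd_r hch_r hhd_r hlast_r hmax_r w H hwH hHl_r hHpath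
          [] S₂.reverse S₁.reverse c₂ c₁ hdec_r h₂ hh₂H hadj₂ h₁ hh₁H hadj₁
          (by simpa using hS₁ne)
      · exact succ_arg G hα u v l hnd hch hhd hlast hmax w H hwH hHl hHpath
          S₁ S₂ S₃ c₁ c₂ hdec2 h₁ hh₁H hadj₁ h₂ hh₂H hadj₂ h3e

lemma forward_dir [Fintype V] [DecidableEq V] (G : SimpleGraph V)
    (u v : V) (huv : u ≠ v) (p : G.Walk u v) (hp : p.IsHamiltonian) :
      (¬ IsCutVertex G u ∧ ¬ IsCutVertex G v) ∧
      (∀ x : V, IsCutVertex G x →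
        ∃ (hu : u ∈ ({x}ᶜ : Set V)) (hv : v ∈ ({x}ᶜ : Set V)),
          ¬ (G.induce ({x}ᶜ : Set V)).Reachable ⟨u, hu⟩ ⟨v, hv⟩) ∧
      ¬ IsCutSet G {u, v} := by
  classical
  have hnd : p.support.Nodup := List.nodup_iff_count_eq_one.mpr (fun a _ => hp a)
  have hcov : ∀ x : V, x ∈ p.support := fun x => List.count_pos_iff.mp (by rw [hp x]; omega)
  have hch : p.support.Chain' G.Adj := Walk.isChain_adj_support p
  have hhd : p.support.head? = some u := by rw [Walk.support_eq_cons]; rfl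
  have hlast : p.support.getLast? = some v := by
    rw [List.getLast?_eq_getLast (Walk.support_ne_nil _), Walk.getLast_support]
  -- decompose support = u :: t with t = t' ++ [v]
  obtain ⟨t, ht⟩ : ∃ t, p.support = u :: t := by
    rcases e : p.support with _ | ⟨a, t⟩
    · exact absurd e p.support_ne_nil
    · rw [e] at hhd
      have h9 : a = u := by simpa using hhd
      exact ⟨t, by rw [h9]⟩
  have htne : t ≠ [] := by
    intro h
    rw [ht, h] at hlast
    exact huv (by simpa using hlast)
  have hut : u ∉ t := by
    have := hnd
    rw [ht, List.nodup_cons] at this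
    exact this.1
  have htch : t.Chain' G.Adj := by
    have := hch; rw [ht] at this; exact (List.isChain_cons.mp this).2
  have htlast : t.getLast? = some v := by
    rw [ht, show u :: t = [u] ++ t from rfl, List.getLast?_append_of_ne_nil _ htne] at hlast
    exact hlast
  -- (a) u is not a cut vertex
  have hnotu : ¬ IsCutVertex G u := by
    refine not_not.mpr ?_
    rintro ⟨a, ha⟩ ⟨b, hb⟩
    have hat : a ∈ t := by
      have := hcov a; rw [ht] at this
      rcases List.mem_cons.mp this with rfl | h
      · simp at ha
      · exact h
    have hbt : b ∈ t := by
      have := hcov b; rw [ht] at this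
      rcases List.mem_cons.mp this with rfl | h
      · simp at hb
      · exact h
    have hts : ∀ x ∈ t, x ∈ ({u}ᶜ : Set V) := by
      intro x hx
      simp only [Set.mem_compl_iff, Set.mem_singleton_iff]
      intro h; exact hut (h ▸ hx)
    exact reachable_of_chain' G _ t htch hts a hat b hbt
  -- (a') v is not a cut vertex : use the reversed walk
  have hnotv : ¬ IsCutVertex G v := by
    refine not_not.mpr ?_
    have hrnd : p.reverse.support.Nodup := by rwa [Walk.support_reverse, List.nodup_reverse]
    have hrch : p.reverse.support.Chain' G.Adj := Walk.isChain_adj_support _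
    obtain ⟨s, hs⟩ : ∃ s, p.reverse.support = v :: s := by
      rcases e : p.reverse.support with _ | ⟨a, s⟩
      · exact absurd e (Walk.support_ne_nil _)
      · have h8 : p.reverse.support.head? = some v := by rw [Walk.support_eq_cons]; rfl
        rw [e] at h8
        have h9 : a = v := by simpa using h8
        exact ⟨s, by rw [h9]⟩
    have hvs : v ∉ s := by
      have := hrnd; rw [hs, List.nodup_cons] at this; exact this.1
    have hsch : s.Chain' G.Adj := by
      have := hrch; rw [hs] at this; exact (List.isChain_cons.mp this).2
    rintro ⟨a, ha⟩ ⟨b, hb⟩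
    have hcov' : ∀ x : V, x ∈ p.reverse.support := by
      intro x; rw [Walk.support_reverse, List.mem_reverse]; exact hcov x
    have hat : a ∈ s := by
      have := hcov' a; rw [hs] at this
      rcases List.mem_cons.mp this with rfl | h
      · simp at ha
      · exact h
    have hbt : b ∈ s := by
      have := hcov' b; rw [hs] at this
      rcases List.mem_cons.mp this with rfl | h
      · simp at hb
      · exact h
    have hts : ∀ x ∈ s, x ∈ ({v}ᶜ : Set V) := by
      intro x hx
      simp only [Set.mem_compl_iff, Set.mem_singleton_iff]
      intro h; exact hvs (h ▸ hx)
    exact reachable_of_chain' G _ s hsch hts a hat b hbt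
  refine ⟨⟨hnotu, hnotv⟩, ?_, ?_⟩
  · -- (b)
    intro x hx
    have hxu : u ≠ x := fun h => hnotu (h ▸ hx)
    have hxv : v ≠ x := fun h => hnotv (h ▸ hx)
    refine ⟨by simpa using hxu, by simpa using hxv, ?_⟩
    intro hr
    apply hx
    -- decompose support around x
    obtain ⟨l₁, l₂, hdec⟩ := List.append_of_mem (hcov x)
    have hl₁ne : l₁ ≠ [] := by
      intro h
      rw [hdec, h] at hhd
      simp only [List.nil_append, List.head?_cons, Option.some_inj] at hhd
      exact hxu hhd.symm
    have hl₂ne : l₂ ≠ [] := by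
      intro h
      rw [hdec, h, List.getLast?_concat] at hlast
      have h9 : x = v := by simpa using hlast
      exact hxv h9.symm
    have hchd := hdec ▸ hch
    obtain ⟨hch₁, hrest, _⟩ := List.isChain_append.mp hchd
    have hch₂ : l₂.Chain' G.Adj := (List.isChain_cons.mp hrest).2
    have hndd := hdec ▸ hnd
    have hxl₁ : x ∉ l₁ := by
      have := (List.nodup_append'.mp hndd).2.2
      intro h; exact this h (by simp)
    have hxl₂ : x ∉ l₂ := by
      have := (List.nodup_append'.mp hndd).2.1
      rw [List.nodup_cons] at this
      exact this.1
    have hul₁ : u ∈ l₁ := by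
      have h9 : l₁.head? = some u := by
        rw [hdec, List.head?_append_of_ne_nil _ hl₁ne] at hhd
        exact hhd
      exact List.mem_of_mem_head? (l := l₁) (by rw [h9]; rfl)
    have hvl₂ : v ∈ l₂ := by
      have h9 : l₂.getLast? = some v := by
        rw [hdec, show l₁ ++ x :: l₂ = (l₁ ++ [x]) ++ l₂ by simp,
          List.getLast?_append_of_ne_nil _ hl₂ne] at hlast
        exact hlast
      exact List.mem_of_mem_getLast? (l := l₂) (by rw [h9]; rfl)
    have hs₁ : ∀ y ∈ l₁, y ∈ ({x}ᶜ : Set V) := by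
      intro y hy
      simp only [Set.mem_compl_iff, Set.mem_singleton_iff]
      intro h; exact hxl₁ (h ▸ hy)
    have hs₂ : ∀ y ∈ l₂, y ∈ ({x}ᶜ : Set V) := by
      intro y hy
      simp only [Set.mem_compl_iff, Set.mem_singleton_iff]
      intro h; exact hxl₂ (h ▸ hy)
    rintro ⟨a, ha⟩ ⟨b, hb⟩
    have hmem : ∀ (c : V), c ≠ x → c ∈ l₁ ∨ c ∈ l₂ := by
      intro c hc
      have := hcov c; rw [hdec] at this
      rcases List.mem_append.mp this with h | h
      · exact Or.inl h
      · rcases List.mem_cons.mp h with rfl | h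
        · exact absurd rfl hc
        · exact Or.inr h
    have hra : ∀ (c : V) (hc : c ∈ ({x}ᶜ : Set V)),
        (G.induce ({x}ᶜ : Set V)).Reachable ⟨c, hc⟩ ⟨u, by simpa using hxu⟩ ∨
        (G.induce ({x}ᶜ : Set V)).Reachable ⟨c, hc⟩ ⟨v, by simpa using hxv⟩ := by
      intro c hc
      rcases hmem c (by simpa using hc) with h | h
      · exact Or.inl (reachable_of_chain' G _ l₁ hch₁ hs₁ c h u hul₁)
      · exact Or.inr (reachable_of_chain' G _ l₂ hch₂ hs₂ c h v hvl₂)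
    rcases hra a ha with h | h <;> rcases hra b hb with h' | h'
    · exact h.trans h'.symm
    · exact h.trans (hr.trans h'.symm)
    · exact h.trans (hr.symm.trans h'.symm)
    · exact h.trans h'.symm
  · -- (c)
    refine not_not.mpr ?_
    obtain ⟨t', htd⟩ : ∃ t', t = t' ++ [v] := by
      refine ⟨t.dropLast, ?_⟩
      have := List.dropLast_append_getLast htne
      rw [List.getLast?_eq_getLast htne] at htlast
      rw [Option.some_inj] at htlast
      rw [htlast] at this
      exact this.symm
    have ht'ch : t'.Chain' G.Adj := by
      have := htd ▸ htch
      exact (List.isChain_append.mp this).1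
    have htnd : t.Nodup := by
      have := hnd; rw [ht, List.nodup_cons] at this; exact this.2
    have hvt' : v ∉ t' := by
      have h9 := htd ▸ htnd
      have hd := (List.nodup_append'.mp h9).2.2
      exact fun h => hd h (by simp)
    have hs' : ∀ y ∈ t', y ∈ ({u, v} : Set V)ᶜ := by
      intro y hy
      simp only [Set.mem_compl_iff, Set.mem_insert_iff, Set.mem_singleton_iff]
      rintro (rfl | rfl)
      · exact hut (htd ▸ List.mem_append_left _ hy)
      · exact hvt' hy
    rintro ⟨a, ha⟩ ⟨b, hb⟩
    have hmem : ∀ (c : V), c ∈ ({u, v} : Set V)ᶜ → c ∈ t' := by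
      intro c hc
      simp only [Set.mem_compl_iff, Set.mem_insert_iff, Set.mem_singleton_iff, not_or] at hc
      have := hcov c
      rw [ht, htd] at this
      rcases List.mem_cons.mp this with rfl | h
      · exact absurd rfl hc.1
      · rcases List.mem_append.mp h with h | h
        · exact h
        · exact absurd (by simpa using h) hc.2
    exact reachable_of_chain' G _ t' ht'ch hs' a (hmem a ha) b (hmem b hb)

end Aux

/-- Characterization of Hamiltonian paths with prescribed endpoints in connected graphs
with independence number at most 2. -/
theorem stmt_4 [Fintype V] [DecidableEq V] (G : SimpleGraph V)
    (hconn : G.Connected) (hα : IndepBound G 2) (u v : V) (huv : u ≠ v) :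
    HasHamPathBetween G u v ↔
      (¬ IsCutVertex G u ∧ ¬ IsCutVertex G v) ∧
      (∀ x : V, IsCutVertex G x →
        ∃ (hu : u ∈ ({x}ᶜ : Set V)) (hv : v ∈ ({x}ᶜ : Set V)),
          ¬ (G.induce ({x}ᶜ : Set V)).Reachable ⟨u, hu⟩ ⟨v, hv⟩) ∧
      ¬ IsCutSet G {u, v} := by
  constructor
  · rintro ⟨p, hp⟩
    exact forward_dir G u v huv p hp
  · rintro ⟨⟨ha, hb⟩, hc, hd⟩
    exact reverse_dir G hconn hα u v huv ha hb hc hd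
end

section
/- Let G be a connected finite simple graph with independence number at most 2. Then for every pair of distinct vertices u, v, the vertex set of G can be partitioned into two vertex-disjoint paths, one starting at u and the other starting at v. -/
open SimpleGraph

variable {V : Type*}

/-!
Take two disjoint paths, from `u` and from `v`, covering as many vertices as possible. If some
vertex is left over, connectivity gives an uncovered `w` adjacent to a covered `x`. When `w` is
adjacent to the end `a` or `b` of one of the paths, that path grows. Otherwise `{w, a, b}` is not
independent, so `a ~ b`, and the two paths join into a single `u`–`v` path through all covered
vertices. Cutting this path just after `x` and attaching `w` to `x` gives two disjoint paths from
`u` and `v` covering one more vertex.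
-/

namespace SimpleGraph

variable {G : SimpleGraph V} {u v w x : V} {s : Finset V}

lemma Connected.exists_adj_mem_notMem (hG : G.Connected) (hx : x ∈ s) (hw : w ∉ s) :
    ∃ y ∈ s, ∃ z ∉ s, G.Adj y z := by
  obtain ⟨d, -, hd⟩ := (hG.preconnected x w).some.exists_boundary_dart (↑s) hx hw
  exact ⟨d.fst, hd.1, d.snd, hd.2, d.adj⟩

variable [DecidableEq V]

/-- Nodup of the concatenated supports says at once that both walks are paths and that they are
vertex-disjoint. -/
def HasPathCover2On (G : SimpleGraph V) (u v : V) (s : Finset V) : Prop :=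
  ∃ (a b : V) (p : G.Walk u a) (q : G.Walk v b),
    (p.support ++ q.support).Nodup ∧ (p.support ++ q.support).toFinset = s

lemma hasPathCover2On_of_perm {a b : V} {p : G.Walk u a} {q : G.Walk v b} {l : List V}
    (hperm : (p.support ++ q.support).Perm l) (hl : l.Nodup) :
    HasPathCover2On G u v l.toFinset :=
  ⟨a, b, p, q, hperm.nodup_iff.mpr hl, List.toFinset_eq_of_perm _ _ hperm⟩

lemma hasPathCover2On_pair (huv : u ≠ v) : HasPathCover2On G u v {u, v} :=
  ⟨u, v, Walk.nil, Walk.nil, by simp [huv], by simp⟩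

lemma HasPathCover2On.symm (h : HasPathCover2On G u v s) : HasPathCover2On G v u s := by
  obtain ⟨a, b, p, q, hnd, rfl⟩ := h
  exact hasPathCover2On_of_perm List.perm_append_comm hnd

lemma HasPathCover2On.start_mem (h : HasPathCover2On G u v s) : u ∈ s := by
  obtain ⟨a, b, p, q, -, rfl⟩ := h
  simp

lemma HasPathCover2On.hasPathCover2 [Fintype V] (h : HasPathCover2On G u v Finset.univ) :
    HasPathCover2 G u v := by
  obtain ⟨a, b, p, q, hnd, hcov⟩ := h
  obtain ⟨hp, hq, hdisj⟩ := List.nodup_append.mp hnd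
  refine ⟨a, b, p, q, Walk.isPath_def _ |>.mpr hp, Walk.isPath_def _ |>.mpr hq, fun z => ?_⟩
  have hz : z ∈ p.support ++ q.support := List.mem_toFinset.mp (hcov ▸ Finset.mem_univ z)
  rcases List.mem_append.mp hz with hz | hz
  · exact Or.inl ⟨hz, fun hz' => hdisj z hz z hz' rfl⟩
  · exact Or.inr ⟨hz, fun hz' => hdisj z hz' z hz rfl⟩

lemma hasPathCover2On_insert_of_isPath_of_ne {R : G.Walk u v} (hR : R.IsPath)
    (hx : x ∈ R.support) (hxv : x ≠ v) (hxw : G.Adj x w) (hw : w ∉ R.support) :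
    HasPathCover2On G u v (insert w R.support.toFinset) := by
  set D := R.dropUntil x hx
  have hD : ¬ D.Nil := Walk.not_nil_of_ne hxv
  have hsupp : R.support = (R.takeUntil x hx).support ++ D.tail.support := by
    conv_lhs => rw [← R.take_spec hx]
    rw [Walk.support_append, D.support_tail_of_not_nil hD]
  rw [← List.toFinset_cons]
  refine hasPathCover2On_of_perm (p := (R.takeUntil x hx).concat hxw) (q := D.tail.reverse)
    ?_ (List.nodup_cons.mpr ⟨hw, hR.support_nodup⟩)
  rw [Walk.support_concat, Walk.support_reverse, hsupp, List.append_assoc, List.singleton_append]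
  exact List.perm_middle.trans (((List.reverse_perm _).append_left _).cons w)

lemma hasPathCover2On_insert_of_isPath (huv : u ≠ v) {R : G.Walk u v} (hR : R.IsPath)
    (hx : x ∈ R.support) (hxw : G.Adj x w) (hw : w ∉ R.support) :
    HasPathCover2On G u v (insert w R.support.toFinset) := by
  by_cases hxv : x = v
  · -- no cut is possible after the endpoint `v`, so cut the reversed path after its start `v`
    subst hxv
    have h := hasPathCover2On_insert_of_isPath_of_ne hR.reverse R.reverse.start_mem_support
      huv.symm hxw (by rwa [Walk.support_reverse, List.mem_reverse])
    rw [Walk.support_reverse, List.toFinset_reverse] at h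
    exact h.symm
  · exact hasPathCover2On_insert_of_isPath_of_ne hR hx hxv hxw hw

lemma IndepBound.adj_of_not_adj (hα : IndepBound G 2) {a b : V} (hwa : w ≠ a) (hwb : w ≠ b)
    (hab : a ≠ b) (ha : ¬ G.Adj a w) (hb : ¬ G.Adj b w) : G.Adj a b := by
  by_contra hnab
  have hcard : ({w, a, b} : Finset V).card = 3 := by
    rw [Finset.card_insert_of_notMem (by simp [hwa, hwb]),
      Finset.card_insert_of_notMem (by simp [hab]), Finset.card_singleton]
  have hind : ∀ c ∈ ({w, a, b} : Finset V), ∀ d ∈ ({w, a, b} : Finset V),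
      c ≠ d → ¬ G.Adj c d := by
    simp only [Finset.mem_insert, Finset.mem_singleton]
    rintro c (rfl | rfl | rfl) d (rfl | rfl | rfl) hcd <;> simp_all [G.adj_comm]
  have := hα _ hind
  omega

lemma HasPathCover2On.insert (hα : IndepBound G 2) (h : HasPathCover2On G u v s) (hx : x ∈ s)
    (hw : w ∉ s) (hxw : G.Adj x w) : HasPathCover2On G u v (insert w s) := by
  obtain ⟨a, b, p, q, hnd, rfl⟩ := h
  have hwpq : w ∉ p.support ++ q.support := by simpa using hw
  by_cases haw : G.Adj a w
  · rw [← List.toFinset_cons]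
    refine hasPathCover2On_of_perm (p := p.concat haw) (q := q) ?_
      (List.nodup_cons.mpr ⟨hwpq, hnd⟩)
    simp
  by_cases hbw : G.Adj b w
  · rw [← List.toFinset_cons]
    refine hasPathCover2On_of_perm (p := p) (q := q.concat hbw) ?_
      (List.nodup_cons.mpr ⟨hwpq, hnd⟩)
    simp [← List.append_assoc]
  obtain ⟨-, -, hdisj⟩ := List.nodup_append.mp hnd
  have hab : G.Adj a b := hα.adj_of_not_adj
    (fun h => hwpq (by simp [h])) (fun h => hwpq (by simp [h]))
    (fun h => hdisj a p.end_mem_support b q.end_mem_support h) haw hbw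
  set R := p.append (Walk.cons hab q.reverse)
  have hR : R.support.Perm (p.support ++ q.support) := by
    simp only [R, Walk.support_append, Walk.support_cons, List.tail_cons, Walk.support_reverse]
    exact (List.reverse_perm _).append_left _
  rw [← List.toFinset_eq_of_perm _ _ hR]
  exact hasPathCover2On_insert_of_isPath
    (hdisj u p.start_mem_support v q.start_mem_support)
    (Walk.isPath_def _ |>.mpr (hR.nodup_iff.mpr hnd)) (hR.mem_iff.mpr (by simpa using hx)) hxw
    (fun h => hwpq (hR.mem_iff.mp h))

end SimpleGraph

theorem stmt_5_general [Fintype V] (G : SimpleGraph V)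
    (hconn : G.Connected) (hα : IndepBound G 2) (u v : V) (huv : u ≠ v) :
    HasPathCover2 G u v := by
  classical
  obtain ⟨s, hs, hmax⟩ := Finset.exists_max_image
    (Finset.univ.filter (HasPathCover2On G u v)) Finset.card
    ⟨{u, v}, Finset.mem_filter.mpr ⟨Finset.mem_univ _, hasPathCover2On_pair huv⟩⟩
  have hcover := (Finset.mem_filter.mp hs).2
  suffices hs_univ : s = Finset.univ from (hs_univ ▸ hcover).hasPathCover2
  rw [Finset.eq_univ_iff_forall]
  by_contra! ⟨w₀, hw₀⟩
  obtain ⟨x, hx, w, hw, hxw⟩ := hconn.exists_adj_mem_notMem hcover.start_mem hw₀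
  have hle := hmax (insert w s)
    (Finset.mem_filter.mpr ⟨Finset.mem_univ _, hcover.insert hα hx hw hxw⟩)
  rw [Finset.card_insert_of_notMem hw] at hle
  omega

/-- A connected graph with independence number at most 2 has a path cover PC(u,v) for
every pair of distinct vertices u, v. -/
theorem stmt_5 [Fintype V] [DecidableEq V] (G : SimpleGraph V)
    (hconn : G.Connected) (hα : IndepBound G 2) (u v : V) (huv : u ≠ v) :
    HasPathCover2 G u v :=
  stmt_5_general G hconn hα u v huv
end

section
/- A connected finite simple graph with independence number at most 2 has at most two cut vertices, and if it has exactly two cut vertices, then those two vertices are adjacent. -/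
open SimpleGraph

variable {V : Type*}

/-- Reachability in `G` avoiding the vertex `x`. -/
def ReachA (G : SimpleGraph V) (x a b : V) : Prop :=
  ∃ w : G.Walk a b, x ∉ w.support

lemma reachA_refl (G : SimpleGraph V) {x a : V} (h : a ≠ x) : ReachA G x a a :=
  ⟨Walk.nil, by simp [Ne.symm h]⟩

lemma reachA_symm {G : SimpleGraph V} {x a b : V} (h : ReachA G x a b) : ReachA G x b a := by
  obtain ⟨w, hw⟩ := h
  exact ⟨w.reverse, by simpa using hw⟩

lemma reachA_trans {G : SimpleGraph V} {x a b c : V}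
    (h1 : ReachA G x a b) (h2 : ReachA G x b c) : ReachA G x a c := by
  obtain ⟨w1, hw1⟩ := h1
  obtain ⟨w2, hw2⟩ := h2
  refine ⟨w1.append w2, ?_⟩
  rw [Walk.support_append]
  intro h
  rcases List.mem_append.1 h with h | h
  · exact hw1 h
  · exact hw2 (List.mem_of_mem_tail h)

lemma reachA_adj {G : SimpleGraph V} {x a b : V} (h : G.Adj a b) (ha : a ≠ x) (hb : b ≠ x) :
    ReachA G x a b :=
  ⟨Walk.cons h Walk.nil, by simp [Ne.symm ha, Ne.symm hb]⟩

lemma reachA_ne_left {G : SimpleGraph V} {x a b : V} (h : ReachA G x a b) : a ≠ x := by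
  obtain ⟨w, hw⟩ := h
  exact fun h' => hw (h' ▸ w.start_mem_support)

lemma reachA_ne_right {G : SimpleGraph V} {x a b : V} (h : ReachA G x a b) : b ≠ x := by
  obtain ⟨w, hw⟩ := h
  exact fun h' => hw (h' ▸ w.end_mem_support)

/-- A walk avoiding `x` yields reachability in the induced graph on `{x}ᶜ`. -/
lemma reachA_toInduce {G : SimpleGraph V} {x : V} {a b : V} (w : G.Walk a b)
    (hw : x ∉ w.support) (ha : a ∈ ({x}ᶜ : Set V)) (hb : b ∈ ({x}ᶜ : Set V)) :
    (G.induce ({x}ᶜ : Set V)).Reachable ⟨a, ha⟩ ⟨b, hb⟩ := by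
  induction w with
  | nil => exact Reachable.refl _
  | @cons u c d hadj p ih =>
    simp only [Walk.support_cons, List.mem_cons] at hw
    push_neg at hw
    have hc : c ∈ ({x}ᶜ : Set V) := by
      simp only [Set.mem_compl_iff, Set.mem_singleton_iff]
      exact fun h' => hw.2 (h' ▸ p.start_mem_support)
    have hadj' : (G.induce ({x}ᶜ : Set V)).Adj ⟨u, ha⟩ ⟨c, hc⟩ := by
      simp [hadj]
    exact (hadj'.reachable).trans (ih hw.2 hc hb)

lemma not_cutVertex_of_reachA {G : SimpleGraph V} {x : V}
    (h : ∀ a b : V, a ≠ x → b ≠ x → ReachA G x a b) : ¬ IsCutVertex G x := by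
  intro hcut
  apply hcut
  rintro ⟨a, ha⟩ ⟨b, hb⟩
  obtain ⟨w, hw⟩ := h a b ha hb
  exact reachA_toInduce w hw ha hb

lemma cutVertex_bad_pair {G : SimpleGraph V} {x : V} (hx : IsCutVertex G x) :
    ∃ u w : V, u ≠ x ∧ w ≠ x ∧ ¬ ReachA G x u w := by
  by_contra h
  push_neg at h
  exact not_cutVertex_of_reachA (fun a b ha hb => h a b ha hb) hx

/-- Escape: from any vertex `a ≠ x` one can reach a neighbor of `x` avoiding `x`. -/
lemma escape [DecidableEq V] {G : SimpleGraph V} (hconn : G.Preconnected) {x a : V} (ha : a ≠ x) :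
    ∃ b : V, G.Adj x b ∧ ReachA G x a b := by
  obtain ⟨w⟩ := hconn x a
  obtain ⟨p, hp⟩ := w.toPath
  cases p with
  | nil => exact absurd rfl (Ne.symm ha)
  | @cons _ c _ h q =>
    rw [Walk.cons_isPath_iff] at hp
    exact ⟨c, h, reachA_symm ⟨q, hp.2⟩⟩

lemma indep3 [DecidableEq V] {G : SimpleGraph V} (hα : IndepBound G 2)
    {u v w : V} (huv : u ≠ v) (huw : u ≠ w) (hvw : v ≠ w)
    (h1 : ¬ G.Adj u v) (h2 : ¬ G.Adj u w) (h3 : ¬ G.Adj v w) : False := by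
  have hcard := hα {u, v, w} ?_
  · have hc : ({u, v, w} : Finset V).card = 3 := by
      rw [Finset.card_insert_of_notMem (by simp [huv, huw]),
          Finset.card_insert_of_notMem (by simp [hvw]), Finset.card_singleton]
    omega
  · intro a ha b hb hab
    simp only [Finset.mem_insert, Finset.mem_singleton] at ha hb
    rcases ha with rfl | rfl | rfl <;> rcases hb with rfl | rfl | rfl <;>
      first
        | exact absurd rfl hab
        | assumption
        | (intro hadj; first
            | exact h1 hadj.symm
            | exact h2 hadj.symm
            | exact h3 hadj.symm)

lemma main_lemma [DecidableEq V] {G : SimpleGraph V}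
    (hconn : G.Connected) (hα : IndepBound G 2)
    {x y a : V} (hx : IsCutVertex G x) (hyx : y ≠ x)
    (hadj : G.Adj x a) (hay : a ≠ y) (hReach : ReachA G x a y) :
    ¬ IsCutVertex G y := by
  obtain ⟨u0, w0, hu0, hw0, hbad⟩ := cutVertex_bad_pair hx
  have hb0 : ∃ b0, b0 ≠ x ∧ ¬ ReachA G x b0 y := by
    by_cases h1 : ReachA G x u0 y
    · exact ⟨w0, hw0, fun h2 => hbad (reachA_trans h1 (reachA_symm h2))⟩
    · exact ⟨u0, hu0, h1⟩
  obtain ⟨b0, hb0x, hb0⟩ := hb0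
  obtain ⟨b, hxb, hb0b⟩ := escape hconn.preconnected hb0x
  have hbB : ¬ ReachA G x b y := fun h => hb0 (reachA_trans hb0b h)
  have hbx : b ≠ x := hxb.ne'
  have key : ∀ v, ReachA G x v y → ∀ w, w ≠ x → ¬ ReachA G x w y → ¬ G.Adj v w := by
    intro v hv w hwx hwB hadj'
    exact hwB (reachA_trans (reachA_symm (reachA_adj hadj' (reachA_ne_left hv) hwx)) hv)
  have hAclique : ∀ u v, ReachA G x u y → ReachA G x v y → u ≠ v → G.Adj u v := by
    intro u v hu hv huv
    by_contra hnadj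
    have hub : u ≠ b := fun h => hbB (h ▸ hu)
    have hvb : v ≠ b := fun h => hbB (h ▸ hv)
    exact indep3 hα huv hub hvb hnadj (key u hu b hbx hbB) (key v hv b hbx hbB)
  have hyA : ReachA G x y y := reachA_refl G hyx
  have hBclique : ∀ u v, u ≠ x → v ≠ x → ¬ ReachA G x u y → ¬ ReachA G x v y →
      u ≠ v → G.Adj u v := by
    intro u v hux hvx hu hv huv
    by_contra hnadj
    have huy : u ≠ y := fun h => hu (h ▸ hyA)
    have hvy : v ≠ y := fun h => hv (h ▸ hyA)
    exact indep3 hα huv huy hvy hnadj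
      (fun h => (key y hyA u hux hu) h.symm) (fun h => (key y hyA v hvx hv) h.symm)
  have hby : b ≠ y := fun h => hbB (h ▸ hyA)
  have hR : ∀ u, u ≠ y → ReachA G y u x := by
    intro u huy
    by_cases hux : u = x
    · rw [hux]; exact reachA_refl G (Ne.symm hyx)
    · by_cases hu : ReachA G x u y
      · by_cases hua : u = a
        · rw [hua]; exact reachA_adj hadj.symm hay (Ne.symm hyx)
        · exact reachA_trans (reachA_adj (hAclique u a hu hReach hua) huy hay)
            (reachA_adj hadj.symm hay (Ne.symm hyx))
      · by_cases hub : u = b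
        · rw [hub]; exact reachA_adj hxb.symm hby (Ne.symm hyx)
        · exact reachA_trans (reachA_adj (hBclique u b hux hbx hu hbB hub) huy hby)
            (reachA_adj hxb.symm hby (Ne.symm hyx))
  exact not_cutVertex_of_reachA
    (fun u w hu hw => reachA_trans (hR u hu) (reachA_symm (hR w hw)))

lemma cut_adj [DecidableEq V] {G : SimpleGraph V}
    (hconn : G.Connected) (hα : IndepBound G 2) {x y : V}
    (hx : IsCutVertex G x) (hy : IsCutVertex G y) (hxy : x ≠ y) : G.Adj x y := by
  by_contra hne
  obtain ⟨a, hxa, hya⟩ := escape hconn.preconnected (hxy.symm : y ≠ x)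
  have hay : a ≠ y := fun h => hne (h ▸ hxa)
  exact main_lemma hconn hα hx hxy.symm hxa hay (reachA_symm hya) hy

/-- A connected graph with independence number at most 2 has at most two cut vertices,
and if it has exactly two, they are adjacent. -/
theorem stmt_6 [Fintype V] [DecidableEq V] (G : SimpleGraph V)
    (hconn : G.Connected) (hα : IndepBound G 2) :
    {x : V | IsCutVertex G x}.ncard ≤ 2 ∧
    ({x : V | IsCutVertex G x}.ncard = 2 →
      ∀ x y : V, IsCutVertex G x → IsCutVertex G y → x ≠ y → G.Adj x y) := by
  have h3 : ¬ (2 < {x : V | IsCutVertex G x}.ncard) := by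
    intro h
    have hfin : {x : V | IsCutVertex G x}.Finite := Set.toFinite _
    rw [Set.ncard_eq_toFinset_card _ hfin, Finset.two_lt_card_iff] at h
    obtain ⟨x, y, z, hx, hy, hz, hxy, hxz, hyz⟩ := h
    simp only [Set.Finite.mem_toFinset, Set.mem_setOf_eq] at hx hy hz
    have hzy : G.Adj z y := cut_adj hconn hα hz hy hyz.symm
    have hxz' : G.Adj x z := cut_adj hconn hα hx hz hxz
    exact main_lemma hconn hα hx hxy.symm hxz' hyz.symm
      (reachA_adj hzy hxz.symm hxy.symm) hy
  refine ⟨by omega, fun _ x y hx hy hxy => cut_adj hconn hα hx hy hxy⟩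
end

section
/- Let G be a 2-connected finite simple graph with independence number at most 2 and let u, v be distinct vertices such that {u,v} is not a vertex cut of G. Then G has a Hamiltonian path from u to v. -/
open SimpleGraph

variable {V : Type*}

set_option linter.unusedSectionVars false

section AuxHam
open List
variable [DecidableEq V] {G : SimpleGraph V} {u v : V}

/-- A path in `G` from `u` to `v`, given as a list of vertices. -/
def IsPL (G : SimpleGraph V) (u v : V) (l : List V) : Prop :=
  l.Chain' G.Adj ∧ l.Nodup ∧ l.head? = some u ∧ l.getLast? = some v

lemma indep2 (hα : IndepBound G 2) {a b c : V} (hab : a ≠ b) (hac : a ≠ c) (hbc : b ≠ c)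
    (h1 : ¬ G.Adj a b) (h2 : ¬ G.Adj a c) : G.Adj b c := by
  by_contra h3
  have hcard : ({a, b, c} : Finset V).card = 3 := by
    rw [Finset.card_eq_three]; exact ⟨a, b, c, hab, hac, hbc, rfl⟩
  have := hα {a, b, c} ?_
  · omega
  · intro x hx y hy hxy
    simp only [Finset.mem_insert, Finset.mem_singleton] at hx hy
    rcases hx with rfl | rfl | rfl <;> rcases hy with rfl | rfl | rfl <;>
      first
        | exact absurd rfl hxy
        | exact h1 | exact h2 | exact h3
        | exact fun h => h1 h.symm | exact fun h => h2 h.symm | exact fun h => h3 h.symm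

lemma chain'_adj_reverse {l : List V} (h : l.Chain' G.Adj) : l.reverse.Chain' G.Adj :=
  isChain_reverse.2 (h.imp fun _ _ hab => hab.symm)

lemma walk_of_list : ∀ (l : List V), l.Chain' G.Adj → ∀ u v : V,
    l.head? = some u → l.getLast? = some v → ∃ p : G.Walk u v, p.support = l := by
  intro l
  induction l with
  | nil => intro _ u v h; simp at h
  | cons a t ih =>
    intro hc u v hh hl
    simp only [head?_cons, Option.some.injEq] at hh
    subst hh
    match t, hc, hl with
    | [], _, hl =>
      simp only [getLast?_singleton, Option.some.injEq] at hl
      subst hl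
      exact ⟨Walk.nil, rfl⟩
    | b :: t', hc, hl =>
      have hadj : G.Adj a b := (isChain_cons_cons.1 hc).1
      have hl' : (b :: t').getLast? = some v := by
        rwa [getLast?_cons_cons] at hl
      obtain ⟨p, hp⟩ := ih (isChain_cons_cons.1 hc).2 b v rfl hl'
      exact ⟨Walk.cons hadj p, by simp [hp]⟩

lemma exists_pathlist_in (S : Set V) (h : (G.induce S).Preconnected) {a b : V}
    (ha : a ∈ S) (hb : b ∈ S) :
    ∃ l : List V, l.Chain' G.Adj ∧ l.Nodup ∧ l.head? = some a ∧ l.getLast? = some b ∧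
      ∀ x ∈ l, x ∈ S := by
  obtain ⟨w⟩ := h ⟨a, ha⟩ ⟨b, hb⟩
  classical
  let p := w.toPath
  refine ⟨p.1.support.map Subtype.val, ?_, ?_, ?_, ?_, ?_⟩
  · refine List.isChain_map_of_isChain _ ?_ p.1.isChain_adj_support
    intro x y hxy; exact hxy
  · exact p.2.support_nodup.map Subtype.val_injective
  · rw [head?_map, p.1.support_eq_cons]; rfl
  · rw [getLast?_map, getLast?_eq_getLast p.1.support_ne_nil, p.1.getLast_support]; rfl
  · intro x hx
    obtain ⟨y, _, rfl⟩ := List.mem_map.1 hx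
    exact y.2

lemma first_hit (Q : V → Prop) [DecidablePred Q] :
    ∀ (l : List V), l.Chain' G.Adj → (∃ x ∈ l, Q x) →
    ∃ (l' : List V) (b : V), l' <+: l ∧ l'.Chain' G.Adj ∧ l'.head? = l.head? ∧
      l'.getLast? = some b ∧ Q b ∧ ∀ x ∈ l', x ≠ b → ¬ Q x := by
  intro l
  induction l with
  | nil => intro _ h; simp at h
  | cons a t ih =>
    intro hc hex
    by_cases hQa : Q a
    · exact ⟨[a], a, ⟨t, rfl⟩, isChain_singleton a, rfl, rfl, hQa, by
        intro x hx hxb; simp at hx; exact absurd hx hxb⟩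
    · have hext : ∃ x ∈ t, Q x := by
        obtain ⟨x, hx, hQx⟩ := hex
        rcases mem_cons.1 hx with rfl | hx'
        · exact absurd hQx hQa
        · exact ⟨x, hx', hQx⟩
      obtain ⟨l'', b, hpre, hch, hh, hlast, hQb, hother⟩ := ih hc.tail hext
      have hne : l'' ≠ [] := by
        intro h; rw [h] at hlast; simp at hlast
      have htne : t ≠ [] := by
        intro h; obtain ⟨x, hx, _⟩ := hext; simp [h] at hx
      refine ⟨a :: l'', b, ?_, ?_, rfl, ?_, hQb, ?_⟩
      · obtain ⟨r, rfl⟩ := hpre; exact ⟨r, rfl⟩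
      · show List.IsChain G.Adj _; rw [isChain_cons]
        refine ⟨?_, hch⟩
        intro y hy
        rw [hh] at hy
        have := (isChain_cons.1 hc).1 y hy
        exact this
      · rw [show a :: l'' = [a] ++ l'' from rfl, getLast?_append_of_ne_nil _ hne]; exact hlast
      · intro x hx hxb
        rcases mem_cons.1 hx with rfl | hx'
        · exact hQa
        · exact hother x hx' hxb

lemma longer_between {L : List V}
    (hLn : L.Nodup)
    (hmax : ∀ l, IsPL G u v l → l.length ≤ L.length)
    (A B c : List V)
    (hA : A.Chain' G.Adj) (hB : B.Chain' G.Adj) (hc : c.Chain' G.Adj)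
    (hAn : A.Nodup) (hBn : B.Nodup) (hcn : c.Nodup)
    (hAL : ∀ x ∈ A, x ∈ L) (hBL : ∀ x ∈ B, x ∈ L) (hcL : ∀ x ∈ c, x ∉ L)
    (hAB : ∀ x ∈ A, x ∉ B)
    (hcov : ∀ x ∈ L, x ∈ A ∨ x ∈ B)
    (hAh : A.head? = some u) (hBl : B.getLast? = some v)
    (hcne : c ≠ [])
    (jAc : ∀ x ∈ A.getLast?, ∀ y ∈ c.head?, G.Adj x y)
    (jcB : ∀ x ∈ c.getLast?, ∀ y ∈ B.head?, G.Adj x y) : False := by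
  have hAne : A ≠ [] := by intro h; rw [h] at hAh; simp at hAh
  have hBne : B ≠ [] := by intro h; rw [h] at hBl; simp at hBl
  set N : List V := A ++ (c ++ B) with hN
  have hchain : N.Chain' G.Adj := by
    refine hA.append (hc.append hB jcB) ?_
    intro x hx y hy
    rw [head?_append_of_ne_nil c hcne] at hy
    exact jAc x hx y hy
  have hnodup : N.Nodup := by
    rw [hN, nodup_append]
    refine ⟨hAn, ?_, ?_⟩
    · rw [nodup_append]
      exact ⟨hcn, hBn, fun x hx y hy hxy => by subst hxy; exact hcL x hx (hBL x hy)⟩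
    · intro x hx y hx' hxy
      subst hxy
      rcases mem_append.1 hx' with h | h
      · exact hcL x h (hAL x hx)
      · exact hAB x hx h
  have hhead : N.head? = some u := by
    rw [hN, head?_append_of_ne_nil A hAne]; exact hAh
  have hlast : N.getLast? = some v := by
    rw [hN, getLast?_append_of_ne_nil _ (by simp [hBne]),
      getLast?_append_of_ne_nil _ hBne]; exact hBl
  obtain ⟨hd, hhd⟩ : ∃ hd, c.head? = some hd := by
    cases hh : c.head? with
    | none => exact absurd (head?_eq_none_iff.1 hh) hcne
    | some x => exact ⟨x, rfl⟩
  have hdc : hd ∈ c := mem_of_mem_head? hhd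
  have hdN : hd ∈ N := by simp [hN, hdc]
  have hsub : (hd :: L) ⊆ N := by
    intro x hx
    rcases mem_cons.1 hx with rfl | hx'
    · exact hdN
    · rcases hcov x hx' with h | h
      · simp [hN, h]
      · simp [hN, h]
  have hlen : L.length + 1 ≤ N.length :=
    ((nodup_cons.2 ⟨hcL hd hdc, hLn⟩).subperm hsub).length_le
  have := hmax N ⟨hchain, hnodup, hhead, hlast⟩
  omega

lemma getLast?_take_succ {L : List V} {k : ℕ} (h : k < L.length) :
    (L.take (k+1)).getLast? = some (L[k]'h) := by
  rw [getLast?_eq_getElem?, length_take, Nat.min_eq_left (by omega)]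
  simp only [Nat.add_sub_cancel]
  rw [getElem?_take, if_pos (by omega), getElem?_eq_getElem h]

lemma no_consec {L : List V}
    (hLc : L.Chain' G.Adj) (hLn : L.Nodup)
    (hLh : L.head? = some u) (hLl : L.getLast? = some v)
    (hmax : ∀ l, IsPL G u v l → l.length ≤ L.length)
    {w : V} (hw : w ∉ L) {k : ℕ} (hk : k + 1 < L.length)
    (h1 : G.Adj w (L[k]'(by omega))) (h2 : G.Adj w (L[k+1]'hk)) : False := by
  refine longer_between hLn hmax (L.take (k+1)) (L.drop (k+1)) [w]
    (hLc.prefix (take_prefix _ _)) (hLc.suffix (drop_suffix _ _)) (isChain_singleton w)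
    ((take_prefix _ _).sublist.nodup hLn) ((drop_suffix _ _).sublist.nodup hLn)
    (nodup_singleton w)
    (fun x hx => take_subset _ _ hx) (fun x hx => drop_subset _ _ hx)
    (fun x hx => by simp at hx; subst hx; exact hw)
    ?_ ?_ ?_ ?_ (by simp) ?_ ?_
  · have h := hLn
    rw [← take_append_drop (k+1) L, nodup_append] at h
    exact fun x hx hx' => h.2.2 x hx x hx' rfl
  · intro x hx
    conv at hx => rw [← take_append_drop (k+1) L]
    exact mem_append.1 hx
  · rw [head?_take, if_neg (by omega)]; exact hLh
  · rw [getLast?_drop, if_neg (by omega)]; exact hLl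
  · intro x hx y hy
    rw [getLast?_take_succ (by omega : k < L.length)] at hx
    simp only [head?_cons, Option.mem_def, Option.some.injEq] at hx hy
    subst hx; subst hy
    exact h1.symm
  · intro x hx y hy
    simp only [getLast?_singleton, Option.mem_def, Option.some.injEq] at hx
    rw [head?_drop, getElem?_eq_getElem hk] at hy
    simp only [Option.mem_def, Option.some.injEq] at hy
    subst hx; subst hy
    exact h2

lemma getLast?_take' {M : List V} {t : ℕ} (h0 : 0 < t) (h : t ≤ M.length) :
    (M.take t).getLast? = M[t-1]? := by
  rw [getLast?_eq_getElem?, length_take, Nat.min_eq_left h, getElem?_take, if_pos (by omega)]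

lemma rot1 {L : List V}
    (hLc : L.Chain' G.Adj) (hLn : L.Nodup)
    (hLh : L.head? = some u) (hLl : L.getLast? = some v)
    (hmax : ∀ l, IsPL G u v l → l.length ≤ L.length)
    {w : V} (hw : w ∉ L) {i j : ℕ} (hij : i < j) (hj : j + 1 < L.length)
    (hwi : G.Adj w (L[i]'(by omega))) (hwj : G.Adj w (L[j]'(by omega)))
    (hsucc : G.Adj (L[i+1]'(by omega)) (L[j+1]'hj)) : False := by
  set seg : List V := (L.drop (i+1)).take (j-i) with hseg
  have E2 : (L.drop (i+1)).drop (j-i) = L.drop (j+1) := by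
    rw [drop_drop]; congr 1; omega
  have E : seg ++ L.drop (j+1) = L.drop (i+1) := by
    rw [hseg, ← E2, take_append_drop]
  have hsegsub : seg ⊆ L.drop (i+1) := take_subset _ _
  have hdropne : L.drop (j+1) ≠ [] := by
    intro h; have := congrArg length h; simp at this; omega
  have hsegne : seg ≠ [] := by
    intro h; have := congrArg length h
    simp only [hseg, length_take, length_drop, length_nil] at this
    omega
  have hBsub : ∀ x ∈ seg.reverse ++ L.drop (j+1), x ∈ L.drop (i+1) := by
    intro x hx
    rcases mem_append.1 hx with h | h
    · rw [← E]; exact mem_append.2 (Or.inl (mem_reverse.1 h))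
    · rw [← E]; exact mem_append.2 (Or.inr h)
  have hdisj : ∀ x ∈ L.take (i+1), x ∉ L.drop (i+1) := by
    have h := hLn
    rw [← take_append_drop (i+1) L, nodup_append] at h
    exact fun x hx hx' => h.2.2 x hx x hx' rfl
  have hsegLast : seg.getLast? = some (L[j]'(by omega)) := by
    rw [hseg, getLast?_take' (by omega) (by rw [length_drop]; omega), getElem?_drop]
    have : i + 1 + (j - i - 1) = j := by omega
    rw [this, getElem?_eq_getElem (by omega)]
  refine longer_between hLn hmax (L.take (i+1)) (seg.reverse ++ L.drop (j+1)) [w]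
    (hLc.prefix (take_prefix _ _)) ?_ (isChain_singleton w)
    ((take_prefix _ _).sublist.nodup hLn) ?_ (nodup_singleton w)
    (fun x hx => take_subset _ _ hx) (fun x hx => drop_subset _ _ (hBsub x hx))
    (fun x hx => by simp at hx; subst hx; exact hw)
    (fun x hx hx' => hdisj x hx (hBsub _ hx'))
    ?_ ?_ ?_ (by simp) ?_ ?_
  · refine (chain'_adj_reverse ((hLc.suffix (drop_suffix _ _)).prefix (take_prefix _ _))).append
      (hLc.suffix (drop_suffix _ _)) ?_
    intro x hx y hy
    rw [getLast?_reverse, head?_take, if_neg (by omega), head?_drop,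
      getElem?_eq_getElem (by omega : i + 1 < L.length)] at hx
    rw [head?_drop, getElem?_eq_getElem hj] at hy
    simp only [Option.mem_def, Option.some.injEq] at hx hy
    subst hx; subst hy
    exact hsucc
  · refine (((reverse_perm seg).append_right _).nodup_iff).2 ?_
    rw [E]
    exact (drop_suffix _ _).sublist.nodup hLn
  · intro x hx
    conv at hx => rw [← take_append_drop (i+1) L]
    rcases mem_append.1 hx with h | h
    · exact Or.inl h
    · rw [← E] at h
      rcases mem_append.1 h with h' | h'
      · exact Or.inr (mem_append.2 (Or.inl (mem_reverse.2 h')))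
      · exact Or.inr (mem_append.2 (Or.inr h'))
  · rw [head?_take, if_neg (by omega)]; exact hLh
  · rw [getLast?_append_of_ne_nil _ hdropne, getLast?_drop, if_neg (by omega)]; exact hLl
  · intro x hx y hy
    rw [getLast?_take_succ (by omega : i < L.length)] at hx
    simp only [head?_cons, Option.mem_def, Option.some.injEq] at hx hy
    subst hx; subst hy
    exact hwi.symm
  · intro x hx y hy
    simp only [getLast?_singleton, Option.mem_def, Option.some.injEq] at hx
    rw [head?_append_of_ne_nil _ (by simpa using hsegne), head?_reverse, hsegLast] at hy
    simp only [Option.mem_def, Option.some.injEq] at hy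
    subst hx; subst hy
    exact hwj

lemma rot2 {L : List V}
    (hLc : L.Chain' G.Adj) (hLn : L.Nodup)
    (hLh : L.head? = some u) (hLl : L.getLast? = some v)
    (hmax : ∀ l, IsPL G u v l → l.length ≤ L.length)
    {w : V} (hw : w ∉ L) {i j : ℕ}
    (hi : 0 < i) (hij : i < j) (hj : j + 1 = L.length)
    (hwi : G.Adj w (L[i]'(by omega))) (hwj : G.Adj w (L[j]'(by omega)))
    (hpred : G.Adj (L[i-1]'(by omega)) (L[j-1]'(by omega))) : False := by
  set D : List V := (L.drop i).dropLast with hD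
  have hlenD : D.length = L.length - i - 1 := by
    rw [hD, length_dropLast, length_drop]
  have hDpre : D <+: L.drop i := by
    rw [hD, dropLast_eq_take]; exact take_prefix _ _
  have hDne : D ≠ [] := by
    intro h; have := congrArg length h; rw [hlenD] at this; simp at this; omega
  have hgl : (L.drop i).getLast? = some v := by
    rw [getLast?_drop, if_neg (by omega)]; exact hLl
  have E : D ++ [v] = L.drop i := dropLast_append_getLast? v hgl
  have hv : (L[j]'(by omega)) = v := by
    have := hLl
    rw [getLast?_eq_getElem?, getElem?_eq_getElem (by omega : L.length - 1 < L.length)] at this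
    simp only [Option.some.injEq] at this
    rw [← this]; congr 1; omega
  have hDhead : D.head? = some (L[i]'(by omega)) := by
    rw [hD, dropLast_eq_take, head?_take, if_neg (by rw [length_drop]; omega), head?_drop,
      getElem?_eq_getElem (by omega : i < L.length)]
  have hDlast : D.getLast? = some (L[j-1]'(by omega)) := by
    rw [hD, dropLast_eq_take, getLast?_take' (by rw [length_drop]; omega) (by rw [length_drop]; omega),
      length_drop, getElem?_drop]
    have : i + (L.length - i - 1 - 1) = j - 1 := by omega
    rw [this, getElem?_eq_getElem (by omega : j - 1 < L.length)]
  set A : List V := L.take i ++ D.reverse with hA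
  have hpermA : A ++ [v] ~ L := by
    have h1 : A ++ [v] = L.take i ++ (D.reverse ++ [v]) := by rw [hA, append_assoc]
    rw [h1]
    have h2 : D.reverse ++ [v] ~ D ++ [v] := (reverse_perm D).append_right [v]
    calc L.take i ++ (D.reverse ++ [v]) ~ L.take i ++ (D ++ [v]) := (h2.append_left _)
      _ = L.take i ++ L.drop i := by rw [E]
      _ = L := take_append_drop i L
  have hnodupAv : (A ++ [v]).Nodup := hpermA.nodup_iff.2 hLn
  have htakene : L.take i ≠ [] := by
    intro h
    have h2 := congrArg length h
    rw [length_take, Nat.min_eq_left (by omega)] at h2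
    simp at h2
    omega
  refine longer_between hLn hmax A [v] [w]
    ?_ (isChain_singleton v) (isChain_singleton w)
    (nodup_append.1 hnodupAv).1 (nodup_singleton v) (nodup_singleton w)
    (fun x hx => hpermA.subset (mem_append.2 (Or.inl hx)))
    (fun x hx => by simp at hx; subst hx; exact mem_of_mem_getLast? hLl)
    (fun x hx => by simp at hx; subst hx; exact hw)
    (fun x hx hx' => (nodup_append.1 hnodupAv).2.2 x hx x hx' rfl)
    (fun x hx => mem_append.1 (hpermA.mem_iff.2 hx))
    ?_ (by simp) (by simp) ?_ ?_
  · refine (hLc.prefix (take_prefix _ _)).append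
      (chain'_adj_reverse ((hLc.suffix (drop_suffix _ _)).prefix hDpre)) ?_
    intro x hx y hy
    rw [getLast?_take' hi (by omega)] at hx
    rw [head?_reverse, hDlast] at hy
    rw [getElem?_eq_getElem (by omega : i - 1 < L.length)] at hx
    simp only [Option.mem_def, Option.some.injEq] at hx hy
    subst hx; subst hy
    exact hpred
  · rw [hA, head?_append_of_ne_nil _ htakene, head?_take, if_neg (by omega)]; exact hLh
  · intro x hx y hy
    rw [hA, getLast?_append_of_ne_nil _ (by simpa using hDne), getLast?_reverse, hDhead] at hx
    simp only [head?_cons, Option.mem_def, Option.some.injEq] at hx hy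
    subst hx; subst hy
    exact hwi.symm
  · intro x hx y hy
    simp only [getLast?_singleton, head?_cons, Option.mem_def, Option.some.injEq] at hx hy
    subst hx; subst hy
    exact hv ▸ hwj

lemma no_mid_pair {L : List V} (hα : IndepBound G 2)
    (hLc : L.Chain' G.Adj) (hLn : L.Nodup)
    (hLh : L.head? = some u) (hLl : L.getLast? = some v)
    (hmax : ∀ l, IsPL G u v l → l.length ≤ L.length)
    {w : V} (hw : w ∉ L) {i j : ℕ} (hij : i < j) (hj1 : j + 1 < L.length)
    (hwi : G.Adj w (L[i]'(by omega))) (hwj : G.Adj w (L[j]'(by omega))) : False := by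
  have hcons' : ∀ (k l : ℕ) (hk : k < L.length) (hl : l < L.length), l = k + 1 →
      G.Adj w (L[k]'hk) → G.Adj w (L[l]'hl) → False := by
    intro k l hk hl he h1 h2
    subst he
    exact no_consec hLc hLn hLh hLl hmax hw hl h1 h2
  by_cases hji : j = i + 1
  · subst hji
    exact hcons' i (i+1) (by omega) (by omega) rfl hwi hwj
  · have hni : ¬ G.Adj w (L[i+1]'(by omega)) :=
      fun h => hcons' i (i+1) (by omega) (by omega) rfl hwi h
    have hnj : ¬ G.Adj w (L[j+1]'hj1) :=
      fun h => hcons' j (j+1) (by omega) hj1 rfl hwj h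
    have hne2 : (L[i+1]'(by omega)) ≠ (L[j+1]'hj1) := by
      intro h; have := (hLn.getElem_inj_iff).1 h; omega
    have hw1 : w ≠ (L[i+1]'(by omega)) := fun h => hw (h ▸ getElem_mem _)
    have hw2 : w ≠ (L[j+1]'hj1) := fun h => hw (h ▸ getElem_mem _)
    exact rot1 hLc hLn hLh hLl hmax hw hij hj1 hwi hwj (indep2 hα hw1 hw2 hne2 hni hnj)

lemma classify_lt {L : List V} (hα : IndepBound G 2)
    (hLc : L.Chain' G.Adj) (hLn : L.Nodup)
    (hLh : L.head? = some u) (hLl : L.getLast? = some v)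
    (hmax : ∀ l, IsPL G u v l → l.length ≤ L.length)
    {w : V} (hw : w ∉ L) {i j : ℕ} (hij : i < j) (hj : j < L.length)
    (hwi : G.Adj w (L[i]'(by omega))) (hwj : G.Adj w (L[j]'hj)) :
    i = 0 ∧ j + 1 = L.length := by
  have hcons' : ∀ (k l : ℕ) (hk : k < L.length) (hl : l < L.length), l = k + 1 →
      G.Adj w (L[k]'hk) → G.Adj w (L[l]'hl) → False := by
    intro k l hk hl he h1 h2
    subst he
    exact no_consec hLc hLn hLh hLl hmax hw hl h1 h2
  have hjlen : j + 1 = L.length := by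
    by_contra hne
    exact no_mid_pair hα hLc hLn hLh hLl hmax hw hij (by omega) hwi hwj
  refine ⟨?_, hjlen⟩
  by_contra hne
  have hi : 0 < i := Nat.pos_of_ne_zero hne
  by_cases hji : j = i + 1
  · exact hcons' i j (by omega) hj hji hwi hwj
  · have hni1 : ¬ G.Adj w (L[i-1]'(by omega)) :=
      fun h => hcons' (i-1) i (by omega) (by omega) (by omega) h hwi
    have hnj1 : ¬ G.Adj w (L[j-1]'(by omega)) := by
      intro h
      rcases Nat.lt_or_ge i (j-1) with hlt | hge
      · exact no_mid_pair hα hLc hLn hLh hLl hmax hw hlt (by omega) hwi h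
      · exact hji (by omega)
    have hne2 : (L[i-1]'(by omega)) ≠ (L[j-1]'(by omega)) := by
      intro h; have := (hLn.getElem_inj_iff).1 h; omega
    have hw1 : w ≠ (L[i-1]'(by omega)) := fun h => hw (h ▸ getElem_mem _)
    have hw2 : w ≠ (L[j-1]'(by omega)) := fun h => hw (h ▸ getElem_mem _)
    exact rot2 hLc hLn hLh hLl hmax hw hi hij hjlen hwi hwj
      (indep2 hα hw1 hw2 hne2 hni1 hnj1)

lemma classify {L : List V} (hα : IndepBound G 2)
    (hLc : L.Chain' G.Adj) (hLn : L.Nodup)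
    (hLh : L.head? = some u) (hLl : L.getLast? = some v)
    (hmax : ∀ l, IsPL G u v l → l.length ≤ L.length)
    {w : V} (hw : w ∉ L) {a b : V}
    (ha : a ∈ L) (hb : b ∈ L) (hab : a ≠ b)
    (hwa : G.Adj w a) (hwb : G.Adj w b) :
    (a = u ∧ b = v) ∨ (a = v ∧ b = u) := by
  have hL0 : ∀ (h : 0 < L.length), L[0]'h = u := by
    intro h
    have := hLh
    rw [head?_eq_getElem?, getElem?_eq_getElem h] at this
    simpa using this
  have hLlast : ∀ (k : ℕ) (hk : k < L.length), k + 1 = L.length → L[k]'hk = v := by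
    intro k hk hke
    have := hLl
    rw [getLast?_eq_getElem?, getElem?_eq_getElem (by omega : L.length - 1 < L.length)] at this
    simp only [Option.some.injEq] at this
    rw [← this]; congr 1; omega
  obtain ⟨i, hi, rfl⟩ := mem_iff_getElem.1 ha
  obtain ⟨j, hj, rfl⟩ := mem_iff_getElem.1 hb
  have hijne : i ≠ j := by
    intro h; subst h; exact hab rfl
  rcases Nat.lt_or_ge i j with hlt | hge
  · obtain ⟨h0, hlen⟩ := classify_lt hα hLc hLn hLh hLl hmax hw hlt hj hwa hwb
    subst h0
    exact Or.inl ⟨hL0 _, hLlast j hj hlen⟩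
  · have hlt : j < i := by omega
    obtain ⟨h0, hlen⟩ := classify_lt hα hLc hLn hLh hLl hmax hw hlt hi hwb hwa
    subst h0
    exact Or.inr ⟨hLlast i hi hlen, hL0 _⟩

lemma split_last {l' : List V} (hc : l'.Chain' G.Adj) (hn : l'.Nodup)
    {w b : V} (hh : l'.head? = some w) (hl : l'.getLast? = some b) (hwb : w ≠ b) :
    ∃ (c : List V) (y : V), c ≠ [] ∧ c.Chain' G.Adj ∧ c.Nodup ∧ c.head? = some w ∧
      c.getLast? = some y ∧ G.Adj y b ∧ ∀ x ∈ c, x ∈ l' ∧ x ≠ b := by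
  set c := l'.dropLast with hcdef
  have E : c ++ [b] = l' := dropLast_append_getLast? b hl
  have hcne : c ≠ [] := by
    intro h
    rw [h] at E
    rw [← E] at hh
    simp at hh
    exact hwb (hh ▸ rfl)
  have hcc : c.Chain' G.Adj := hc.prefix ⟨[b], E⟩
  have hcn : c.Nodup := (dropLast_sublist l').nodup hn
  have hch : c.head? = some w := by
    rw [← E, head?_append_of_ne_nil _ hcne] at hh; exact hh
  obtain ⟨y, hy⟩ : ∃ y, c.getLast? = some y := by
    cases h : c.getLast? with
    | none => exact absurd (getLast?_eq_none_iff.1 h) hcne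
    | some z => exact ⟨z, rfl⟩
  have hdisj : ∀ x ∈ c, x ≠ b := by
    have h := hn
    rw [← E, nodup_append] at h
    intro x hx hxb
    exact h.2.2 x hx b (by simp) hxb
  refine ⟨c, y, hcne, hcc, hcn, hch, hy, ?_, fun x hx => ⟨E ▸ mem_append.2 (Or.inl hx), hdisj x hx⟩⟩
  · have : List.IsChain G.Adj l' := hc
    rw [← E, isChain_append] at this
    exact this.2.2 y hy b rfl

lemma chain_to_L {L : List V} (S : Set V) (hS : (G.induce S).Preconnected)
    {w t : V} (hwS : w ∈ S) (htS : t ∈ S) (hwL : w ∉ L) (htL : t ∈ L) :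
    ∃ (c : List V) (y b : V), c ≠ [] ∧ c.Chain' G.Adj ∧ c.Nodup ∧ c.head? = some w ∧
      c.getLast? = some y ∧ G.Adj y b ∧ b ∈ L ∧ b ∈ S ∧ ∀ x ∈ c, x ∉ L ∧ x ∈ S := by
  classical
  obtain ⟨l, hlc, hln, hlh, hll, hlS⟩ := exists_pathlist_in S hS hwS htS
  obtain ⟨l', b, hpre, hc', hh', hl', hQb, hother⟩ :=
    first_hit (· ∈ L) l hlc ⟨t, mem_of_mem_getLast? hll, htL⟩
  rw [hlh] at hh'
  have hn' : l'.Nodup := hpre.sublist.nodup hln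
  have hwb : w ≠ b := by
    intro h; subst h; exact hwL hQb
  obtain ⟨c, y, hcne, hcc, hcn, hch, hcl, hyb, hmem⟩ := split_last hc' hn' hh' hl' hwb
  refine ⟨c, y, b, hcne, hcc, hcn, hch, hcl, hyb, hQb, hlS b (hpre.subset (mem_of_mem_getLast? hl')), ?_⟩
  intro x hx
  obtain ⟨hxl', hxb⟩ := hmem x hx
  exact ⟨hother x hxl' hxb, hlS x (hpre.subset hxl')⟩

lemma final_config {L : List V}
    (hLn : L.Nodup) (hLh : L.head? = some u) (hLl : L.getLast? = some v)
    (hmax : ∀ l, IsPL G u v l → l.length ≤ L.length)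
    (huv : u ≠ v) (huL : u ∈ L) (hvL : v ∈ L)
    {c : List V} {xi xj h t : V}
    (hcne : c ≠ []) (hcc : c.Chain' G.Adj) (hcn : c.Nodup) (hcL : ∀ x ∈ c, x ∉ L)
    (hch : c.head? = some h) (hct : c.getLast? = some t)
    (hhxi : G.Adj h xi) (htxj : G.Adj t xj)
    (hxiL : xi ∈ L) (hxjL : xj ∈ L) (hxixj : xi ≠ xj)
    (hxiu : xi = u ∨ (xi ≠ u ∧ xi ≠ v))
    (hxjv : xj = v ∨ (xj ≠ u ∧ xj ≠ v))
    (hnotuv : ¬ (xi = u ∧ xj = v))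
    (hallpairs : ∀ p ∈ L, ∀ q ∈ L, p ≠ q → ¬(p = xi ∧ q = xj) → ¬(p = xj ∧ q = xi) →
      G.Adj p q) : False := by
  classical
  set R : List V := L.filter (fun z => z ∉ ([u, v, xi, xj] : List V)) with hRdef
  have hRmem : ∀ x, x ∈ R ↔ (x ∈ L ∧ x ≠ u ∧ x ≠ v ∧ x ≠ xi ∧ x ≠ xj) := by
    intro x
    rw [hRdef, mem_filter]
    simp
  have hRn : R.Nodup := hLn.filter _
  have hRL : ∀ x ∈ R, x ∈ L := fun x hx => ((hRmem x).1 hx).1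
  have hRchain : R.Chain' G.Adj := by
    refine (hRn.pairwise_of_forall_ne ?_).isChain
    intro p hp q hq hpq
    obtain ⟨hpL, _, _, hpxi, hpxj⟩ := (hRmem p).1 hp
    obtain ⟨hqL, _, _, _, _⟩ := (hRmem q).1 hq
    exact hallpairs p hpL q hqL hpq (fun hc => hpxi hc.1) (fun hc => hpxj hc.1)
  by_cases hxiu' : xi = u
  · have hxju : xj ≠ u := fun h' => hxixj (hxiu'.trans h'.symm)
    have hxjv2 : xj ≠ v := fun h' => hnotuv ⟨hxiu', h'⟩
    refine longer_between hLn hmax [u] (xj :: (R ++ [v])) c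
      (isChain_singleton u) ?_ hcc (nodup_singleton u) ?_ hcn
      (fun x hx => by simp at hx; subst hx; exact huL) ?_ hcL ?_ ?_ rfl ?_ hcne ?_ ?_
    · show List.IsChain G.Adj _; rw [isChain_cons]
      constructor
      · intro y hy
        have hymem : y ∈ L ∧ y ≠ xi ∧ y ≠ xj := by
          have : y ∈ R ++ [v] := mem_of_mem_head? hy
          rcases mem_append.1 this with h' | h'
          · obtain ⟨h1, _, _, h4, h5⟩ := (hRmem y).1 h'
            exact ⟨h1, h4, h5⟩
          · simp at h'; subst h'
            exact ⟨hvL, fun h' => huv (hxiu' ▸ h'.symm), fun h' => hxjv2 h'.symm⟩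
        exact hallpairs xj hxjL y hymem.1 (fun h' => hymem.2.2 h'.symm)
          (fun hc => hxixj hc.1.symm) (fun hc => hymem.2.1 hc.2)
      · refine hRchain.append (isChain_singleton v) ?_
        intro x hx y hy
        simp only [head?_cons, Option.mem_def, Option.some.injEq] at hy
        subst hy
        have hxR : x ∈ R := mem_of_mem_getLast? hx
        obtain ⟨hxL, _, hxv, hxxi, hxxj⟩ := (hRmem x).1 hxR
        exact hallpairs x hxL v hvL hxv (fun hc => hxjv2 hc.2.symm) (fun hc => hxxj hc.1)
    · rw [nodup_cons, nodup_append]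
      refine ⟨?_, hRn, nodup_singleton v, ?_⟩
      · intro h'
        rcases mem_append.1 h' with h'' | h''
        · exact ((hRmem xj).1 h'').2.2.2.2 rfl
        · simp at h''; exact hxjv2 h''
      · intro x hx y hx' hxy
        subst hxy
        simp at hx'
        subst hx'
        exact ((hRmem x).1 hx).2.2.1 rfl
    · intro x hx
      rcases mem_cons.1 hx with rfl | hx'
      · exact hxjL
      · rcases mem_append.1 hx' with h'' | h''
        · exact hRL x h''
        · simp at h''; subst h''; exact hvL
    · intro x hx hx'
      simp at hx
      rw [hx] at hx'
      rcases mem_cons.1 hx' with h'' | h''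
      · exact hxju h''.symm
      · rcases mem_append.1 h'' with h3 | h3
        · exact ((hRmem u).1 h3).2.1 rfl
        · simp at h3; exact huv h3
    · intro x hx
      by_cases h1 : x = u
      · exact Or.inl (by simp [h1])
      · by_cases h2 : x = v
        · exact Or.inr (by simp [h2])
        · by_cases h3 : x = xj
          · exact Or.inr (by simp [h3])
          · by_cases h4 : x = xi
            · exact absurd (h4.trans hxiu') h1
            · exact Or.inr (by
                refine mem_cons.2 (Or.inr (mem_append.2 (Or.inl ?_)))
                exact (hRmem x).2 ⟨hx, h1, h2, h4, h3⟩)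
    · rw [show xj :: (R ++ [v]) = (xj :: R) ++ [v] by simp, getLast?_concat]
    · intro x hx y hy
      simp only [getLast?_singleton, Option.mem_def, Option.some.injEq] at hx
      rw [hch] at hy
      simp only [Option.mem_def, Option.some.injEq] at hy
      subst hx; subst hy
      exact (hxiu' ▸ hhxi).symm
    · intro x hx y hy
      rw [hct] at hx
      simp only [head?_cons, Option.mem_def, Option.some.injEq] at hx hy
      subst hx; subst hy
      exact htxj
  · obtain ⟨hxiu2, hxiv2⟩ : xi ≠ u ∧ xi ≠ v := by
      rcases hxiu with h' | h'
      · exact absurd h' hxiu'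
      · exact h'
    have hAchain : (u :: (R ++ [xi])).Chain' G.Adj := by
      show List.IsChain G.Adj _; rw [isChain_cons]
      constructor
      · intro y hy
        have hymem : y ∈ L ∧ y ≠ u := by
          have : y ∈ R ++ [xi] := mem_of_mem_head? hy
          rcases mem_append.1 this with h' | h'
          · exact ⟨hRL y h', ((hRmem y).1 h').2.1⟩
          · simp at h'; subst h'; exact ⟨hxiL, hxiu2⟩
        refine hallpairs u huL y hymem.1 (fun h' => hymem.2 h'.symm) ?_ ?_
        · exact fun hc => hxiu2 hc.1.symm
        · intro hc
          rcases hxjv with h' | h'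
          · exact huv (hc.1.trans h')
          · exact h'.1 hc.1.symm
      · refine hRchain.append (isChain_singleton xi) ?_
        intro x hx y hy
        simp only [head?_cons, Option.mem_def, Option.some.injEq] at hy
        subst hy
        have hxR : x ∈ R := mem_of_mem_getLast? hx
        obtain ⟨hxL, _, _, hxxi, hxxj⟩ := (hRmem x).1 hxR
        exact hallpairs x hxL xi hxiL hxxi (fun hc => hxixj hc.2) (fun hc => hxxj hc.1)
    have hAlast : (u :: (R ++ [xi])).getLast? = some xi := by
      rw [show u :: (R ++ [xi]) = (u :: R) ++ [xi] by simp, getLast?_concat]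
    have hAnodup : (u :: (R ++ [xi])).Nodup := by
      rw [nodup_cons, nodup_append]
      refine ⟨?_, hRn, nodup_singleton xi, ?_⟩
      · intro h'
        rcases mem_append.1 h' with h'' | h''
        · exact ((hRmem u).1 h'').2.1 rfl
        · simp at h''; exact hxiu2 h''.symm
      · intro x hx y hx' hxy
        subst hxy
        simp at hx'
        subst hx'
        exact ((hRmem x).1 hx).2.2.2.1 rfl
    have hAsub : ∀ x ∈ u :: (R ++ [xi]), x ∈ L := by
      intro x hx
      rcases mem_cons.1 hx with rfl | hx'
      · exact huL
      · rcases mem_append.1 hx' with h'' | h''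
        · exact hRL x h''
        · simp at h''; subst h''; exact hxiL
    have hjAc : ∀ x ∈ (u :: (R ++ [xi])).getLast?, ∀ y ∈ c.head?, G.Adj x y := by
      intro x hx y hy
      rw [hAlast] at hx
      rw [hch] at hy
      simp only [Option.mem_def, Option.some.injEq] at hx hy
      subst hx; subst hy
      exact hhxi.symm
    by_cases hxjv' : xj = v
    · refine longer_between hLn hmax (u :: (R ++ [xi])) [v] c
        hAchain (isChain_singleton v) hcc hAnodup (nodup_singleton v) hcn
        hAsub (fun x hx => by simp at hx; subst hx; exact hvL) hcL ?_ ?_ rfl rfl hcne hjAc ?_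
      · intro x hx hx'
        simp at hx'
        rw [hx'] at hx
        rcases mem_cons.1 hx with h'' | h''
        · exact huv h''.symm
        · rcases mem_append.1 h'' with h3 | h3
          · exact ((hRmem v).1 h3).2.2.1 rfl
          · simp at h3; exact hxiv2 h3.symm
      · intro x hx
        by_cases h1 : x = u
        · exact Or.inl (by simp [h1])
        · by_cases h2 : x = v
          · exact Or.inr (by simp [h2])
          · by_cases h4 : x = xi
            · exact Or.inl (by simp [h4])
            · by_cases h3 : x = xj
              · exact absurd (h3.trans hxjv') h2
              · exact Or.inl (by
                  refine mem_cons.2 (Or.inr (mem_append.2 (Or.inl ?_)))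
                  exact (hRmem x).2 ⟨hx, h1, h2, h4, h3⟩)
      · intro x hx y hy
        rw [hct] at hx
        simp only [head?_cons, Option.mem_def, Option.some.injEq] at hx hy
        subst hx; subst hy
        exact hxjv' ▸ htxj
    · obtain ⟨hxju2, hxjv2⟩ : xj ≠ u ∧ xj ≠ v := by
        rcases hxjv with h' | h'
        · exact absurd h' hxjv'
        · exact h'
      refine longer_between hLn hmax (u :: (R ++ [xi])) [xj, v] c
        hAchain ?_ hcc hAnodup (by simp [hxjv2]) hcn
        hAsub ?_ hcL ?_ ?_ rfl (by simp) hcne hjAc ?_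
      · show List.IsChain G.Adj _; rw [isChain_cons]
        refine ⟨?_, isChain_singleton v⟩
        intro y hy
        simp only [head?_cons, Option.mem_def, Option.some.injEq] at hy
        subst hy
        exact hallpairs xj hxjL v hvL hxjv2 (fun hc => hxixj hc.1.symm)
          (fun hc => hxiv2 hc.2.symm)
      · intro x hx
        rcases mem_cons.1 hx with rfl | hx'
        · exact hxjL
        · simp at hx'; subst hx'; exact hvL
      · intro x hx hx'
        rcases mem_cons.1 hx' with h1 | h1
        · rw [h1] at hx
          rcases mem_cons.1 hx with h'' | h''
          · exact hxju2 h''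
          · rcases mem_append.1 h'' with h3 | h3
            · exact ((hRmem xj).1 h3).2.2.2.2 rfl
            · simp at h3; exact hxixj h3.symm
        · simp at h1
          rw [h1] at hx
          rcases mem_cons.1 hx with h'' | h''
          · exact huv h''.symm
          · rcases mem_append.1 h'' with h3 | h3
            · exact ((hRmem v).1 h3).2.2.1 rfl
            · simp at h3; exact hxiv2 h3.symm
      · intro x hx
        by_cases h1 : x = u
        · exact Or.inl (by simp [h1])
        · by_cases h2 : x = v
          · exact Or.inr (by simp [h2])
          · by_cases h4 : x = xi
            · exact Or.inl (by simp [h4])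
            · by_cases h3 : x = xj
              · exact Or.inr (by simp [h3])
              · exact Or.inl (by
                  refine mem_cons.2 (Or.inr (mem_append.2 (Or.inl ?_)))
                  exact (hRmem x).2 ⟨hx, h1, h2, h4, h3⟩)
      · intro x hx y hy
        rw [hct] at hx
        simp only [head?_cons, Option.mem_def, Option.some.injEq] at hx hy
        subst hx; subst hy
        exact htxj

lemma head_getElem {L : List V} (hLh : L.head? = some u) (h : 0 < L.length) :
    L[0]'h = u := by
  rw [head?_eq_getElem?, getElem?_eq_getElem h] at hLh
  simpa using hLh

lemma last_getElem {L : List V} (hLl : L.getLast? = some v) {k : ℕ} (hk : k < L.length)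
    (hke : k + 1 = L.length) : L[k]'hk = v := by
  rw [getLast?_eq_getElem?, getElem?_eq_getElem (by omega : L.length - 1 < L.length)] at hLl
  simp only [Option.some.injEq] at hLl
  rw [← hLl]; congr 1; omega

lemma adj_consec {L : List V} (hLc : L.Chain' G.Adj) {k l : ℕ}
    (hk : k < L.length) (hl : l < L.length) (hkl : l = k + 1) :
    G.Adj (L[k]'hk) (L[l]'hl) := by
  subst hkl
  have := isChain_iff_getElem.1 hLc k (by omega)
  simpa [get_eq_getElem] using this

lemma caseA_contra {L : List V} (hα : IndepBound G 2)
    (hLc : L.Chain' G.Adj) (hLn : L.Nodup)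
    (hLh : L.head? = some u) (hLl : L.getLast? = some v)
    (hmax : ∀ l, IsPL G u v l → l.length ≤ L.length)
    (huv : u ≠ v) (hlen3 : 3 ≤ L.length)
    (hprecon2 : (G.induce ({u,v}ᶜ : Set V)).Preconnected)
    {w : V} (hw : w ∉ L) (hwu : G.Adj w u) (hwv : G.Adj w v) : False := by
  classical
  have huL : u ∈ L := mem_of_mem_head? hLh
  have hvL : v ∈ L := mem_of_mem_getLast? hLl
  have hwune : w ≠ u := fun h => hw (h ▸ huL)
  have hwvne : w ≠ v := fun h => hw (h ▸ hvL)
  have hx1 : (1 : ℕ) < L.length := by omega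
  set x1 : V := L[1]'hx1 with hx1def
  have hx1L : x1 ∈ L := getElem_mem _
  have hx1u : x1 ≠ u := by
    intro h
    rw [← head_getElem hLh (by omega)] at h
    have := hLn.getElem_inj_iff.1 h
    omega
  have hx1v : x1 ≠ v := by
    intro h
    rw [← last_getElem hLl (by omega : L.length - 1 < L.length) (by omega)] at h
    have := hLn.getElem_inj_iff.1 h
    omega
  obtain ⟨c, y, b, hcne, hcc, hcn, hch, hct, hyb, hbL, hbS, hcmem⟩ :=
    chain_to_L ({u, v}ᶜ : Set V) hprecon2 (by simp [hwune, hwvne])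
      (by simp [hx1u, hx1v]) hw hx1L
  have hbu : b ≠ u := by intro h; subst h; simp at hbS
  have hbv : b ≠ v := by intro h; subst h; simp at hbS
  have hcL : ∀ x ∈ c, x ∉ L := fun x hx => (hcmem x hx).1
  have hyc : y ∈ c := mem_of_mem_getLast? hct
  have hyL : y ∉ L := hcL y hyc
  have hwint : ∀ z ∈ L, z ≠ u → z ≠ v → ¬ G.Adj w z := by
    intro z hz hzu hzv hadj
    rcases classify hα hLc hLn hLh hLl hmax hw huL hz (fun h => hzu h.symm) hwu hadj with
      ⟨_, h2⟩ | ⟨h1, _⟩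
    · exact hzv h2
    · exact huv h1
  have hyn : ∀ z ∈ L, z ≠ b → ¬ G.Adj y z := by
    intro z hz hzb hadj
    rcases classify hα hLc hLn hLh hLl hmax hyL hbL hz (fun h => hzb h.symm) hyb hadj with
      ⟨h1, _⟩ | ⟨h1, _⟩
    · exact hbu h1
    · exact hbv h1
  have hIc : ∀ p ∈ L, p ≠ u → p ≠ v → ∀ q ∈ L, q ≠ u → q ≠ v → p ≠ q → G.Adj p q := by
    intro p hp hpu hpv q hq hqu hqv hpq
    exact indep2 hα (fun h => hw (by rw [h]; exact hp)) (fun h => hw (by rw [h]; exact hq)) hpq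
      (hwint p hp hpu hpv) (hwint q hq hqu hqv)
  have hvI : ∀ z ∈ L, z ≠ b → z ≠ v → G.Adj z v := by
    intro z hz hzb hzv
    exact indep2 hα (fun h => hyL (by rw [h]; exact hz)) (fun h => hyL (by rw [h]; exact hvL)) hzv
      (hyn z hz hzb) (hyn v hvL (fun h => hbv h.symm))
  set RI : List V := L.filter (fun z => z ∉ ([u, v, b] : List V)) with hRIdef
  have hRImem : ∀ x, x ∈ RI ↔ (x ∈ L ∧ x ≠ u ∧ x ≠ v ∧ x ≠ b) := by
    intro x
    rw [hRIdef, mem_filter]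
    simp
  have hRIn : RI.Nodup := hLn.filter _
  have hRIchain : RI.Chain' G.Adj := by
    refine (hRIn.pairwise_of_forall_ne ?_).isChain
    intro p hp q hq hpq
    obtain ⟨h1, h2, h3, _⟩ := (hRImem p).1 hp
    obtain ⟨h1', h2', h3', _⟩ := (hRImem q).1 hq
    exact hIc p h1 h2 h3 q h1' h2' h3' hpq
  have hbva : RI = [] → G.Adj b v := by
    intro hRIe
    have hlast2 : L.length - 2 < L.length := by omega
    have heq : L[L.length - 2]'hlast2 = b := by
      by_contra hne
      have h2u : L[L.length - 2]'hlast2 ≠ u := by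
        intro h
        rw [← head_getElem hLh (by omega)] at h
        have := hLn.getElem_inj_iff.1 h
        omega
      have h2v : L[L.length - 2]'hlast2 ≠ v := by
        intro h
        rw [← last_getElem hLl (by omega : L.length - 1 < L.length) (by omega)] at h
        have := hLn.getElem_inj_iff.1 h
        omega
      have : L[L.length - 2]'hlast2 ∈ RI :=
        (hRImem _).2 ⟨getElem_mem _, h2u, h2v, hne⟩
      rw [hRIe] at this
      simp at this
    have hadj := adj_consec hLc hlast2 (by omega : L.length - 1 < L.length) (by omega)
    rw [heq, last_getElem hLl (by omega : L.length - 1 < L.length) (by omega)] at hadj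
    exact hadj
  refine longer_between hLn hmax [u] (b :: (RI ++ [v])) c
    (isChain_singleton u) ?_ hcc (nodup_singleton u) ?_ hcn
    (fun x hx => by simp at hx; rw [hx]; exact huL) ?_ hcL ?_ ?_ rfl ?_ hcne ?_ ?_
  · show List.IsChain G.Adj _; rw [isChain_cons]
    constructor
    · intro z hz
      rcases hRI : RI with _ | ⟨r, RI'⟩
      · rw [hRI] at hz
        simp only [nil_append, head?_cons, Option.mem_def, Option.some.injEq] at hz
        exact hz ▸ hbva hRI
      · rw [hRI] at hz
        simp only [cons_append, head?_cons, Option.mem_def, Option.some.injEq] at hz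
        have hr : r ∈ RI := by rw [hRI]; exact mem_cons_self
        obtain ⟨h1, h2, h3, h4⟩ := (hRImem r).1 hr
        exact hz ▸ hIc b hbL hbu hbv r h1 h2 h3 (fun h => h4 h.symm)
    · refine hRIchain.append (isChain_singleton v) ?_
      intro x hx z hz
      simp only [head?_cons, Option.mem_def, Option.some.injEq] at hz
      have hxR : x ∈ RI := mem_of_mem_getLast? hx
      obtain ⟨h1, _, h3, h4⟩ := (hRImem x).1 hxR
      exact hz ▸ hvI x h1 h4 h3
  · rw [nodup_cons, nodup_append]
    refine ⟨?_, hRIn, nodup_singleton v, ?_⟩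
    · intro h'
      rcases mem_append.1 h' with h'' | h''
      · exact ((hRImem b).1 h'').2.2.2 rfl
      · simp at h''; exact hbv h''
    · intro x hx y hx' hxy
      subst hxy
      simp at hx'
      rw [hx'] at hx
      exact ((hRImem v).1 hx).2.2.1 rfl
  · intro x hx
    rcases mem_cons.1 hx with rfl | hx'
    · exact hbL
    · rcases mem_append.1 hx' with h'' | h''
      · exact ((hRImem x).1 h'').1
      · simp at h''; rw [h'']; exact hvL
  · intro x hx hx'
    simp at hx
    rw [hx] at hx'
    rcases mem_cons.1 hx' with h'' | h''
    · exact hbu h''.symm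
    · rcases mem_append.1 h'' with h3 | h3
      · exact ((hRImem u).1 h3).2.1 rfl
      · simp at h3; exact huv h3
  · intro x hx
    by_cases h1 : x = u
    · exact Or.inl (by simp [h1])
    · by_cases h2 : x = v
      · exact Or.inr (by simp [h2])
      · by_cases h3 : x = b
        · exact Or.inr (by simp [h3])
        · exact Or.inr (by
            refine mem_cons.2 (Or.inr (mem_append.2 (Or.inl ?_)))
            exact (hRImem x).2 ⟨hx, h1, h2, h3⟩)
  · rw [show b :: (RI ++ [v]) = (b :: RI) ++ [v] by simp, getLast?_concat]
  · intro x hx z hz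
    simp only [getLast?_singleton, Option.mem_def, Option.some.injEq] at hx
    rw [hch] at hz
    simp only [Option.mem_def, Option.some.injEq] at hz
    exact hx ▸ hz ▸ hwu.symm
  · intro x hx z hz
    rw [hct] at hx
    simp only [head?_cons, Option.mem_def, Option.some.injEq] at hx hz
    exact hx ▸ hz ▸ hyb

lemma second_vertex {l : List V} (hc : l.Chain' G.Adj) (hn : l.Nodup) {a b : V}
    (hh : l.head? = some a) (hl : l.getLast? = some b) (hab : a ≠ b) :
    ∃ z ∈ l, G.Adj a z ∧ z ≠ a := by
  match l, hc, hn, hh, hl with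
  | [], _, _, hh, _ => simp at hh
  | [x], _, _, hh, hl =>
    simp at hh hl
    exact absurd (hh.symm.trans hl) hab
  | x :: z :: t, hc, hn, hh, hl =>
    simp only [head?_cons, Option.some.injEq] at hh
    refine ⟨z, by simp, hh ▸ (isChain_cons_cons.1 hc).1, ?_⟩
    intro h
    have hxz : x ∈ z :: t := by
      rw [show x = z from hh.trans h.symm]
      exact mem_cons_self
    exact (nodup_cons.1 hn).1 hxz

lemma config_allpairs (hα : IndepBound G 2) {L : List V} {xi xj h t : V}
    (hhL : h ∉ L) (htL : t ∉ L) (hxixj : xi ≠ xj)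
    (huniqh : ∀ z ∈ L, z ≠ xi → ¬ G.Adj h z) (huniqt : ∀ z ∈ L, z ≠ xj → ¬ G.Adj t z) :
    ∀ p ∈ L, ∀ q ∈ L, p ≠ q → ¬(p = xi ∧ q = xj) → ¬(p = xj ∧ q = xi) → G.Adj p q := by
  intro p hp q hq hpq hg1 hg2
  by_cases hpxi : p = xi
  · have hqxj : q ≠ xj := fun h' => hg1 ⟨hpxi, h'⟩
    have hpxj : p ≠ xj := fun h' => hxixj (hpxi ▸ h' ▸ rfl)
    exact indep2 hα (fun h' => htL (by rw [h']; exact hp)) (fun h' => htL (by rw [h']; exact hq))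
      hpq (huniqt p hp hpxj) (huniqt q hq hqxj)
  · by_cases hqxi : q = xi
    · have hpxj : p ≠ xj := fun h' => hg2 ⟨h', hqxi⟩
      have hqxj : q ≠ xj := fun h' => hxixj (hqxi ▸ h' ▸ rfl)
      exact indep2 hα (fun h' => htL (by rw [h']; exact hp)) (fun h' => htL (by rw [h']; exact hq))
        hpq (huniqt p hp hpxj) (huniqt q hq hqxj)
    · exact indep2 hα (fun h' => hhL (by rw [h']; exact hp)) (fun h' => hhL (by rw [h']; exact hq))
        hpq (huniqh p hp hpxi) (huniqh q hq hqxi)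

lemma maximal_covers [Fintype V] {L : List V} (hα : IndepBound G 2)
    (h2conn : SConnected G 2) (huv : u ≠ v) (hcut : ¬ IsCutSet G {u, v})
    (hLc : L.Chain' G.Adj) (hLn : L.Nodup)
    (hLh : L.head? = some u) (hLl : L.getLast? = some v)
    (hmax : ∀ l, IsPL G u v l → l.length ≤ L.length) :
    ∀ x, x ∈ L := by
  classical
  by_contra hcov
  push_neg at hcov
  obtain ⟨w₀, hw₀⟩ := hcov
  have huL : u ∈ L := mem_of_mem_head? hLh
  have hvL : v ∈ L := mem_of_mem_getLast? hLl
  have hprecon2 : (G.induce (({u, v} : Set V)ᶜ)).Preconnected := not_not.1 hcut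
  have hw₀u : w₀ ≠ u := fun h => hw₀ (by rw [h]; exact huL)
  have hw₀v : w₀ ≠ v := fun h => hw₀ (by rw [h]; exact hvL)
  have hlen3 : 3 ≤ L.length := by
    by_contra hlen
    have hL2 : L.length = 2 := by
      have hsub : [u, v] <+~ L := (by simp [huv] : ([u, v] : List V).Nodup).subperm
        (by intro x hx; simp at hx; rcases hx with rfl | rfl; exacts [huL, hvL])
      have := hsub.length_le
      simp at this
      omega
    have hmemL : ∀ x ∈ L, x = u ∨ x = v := by
      intro x hx
      obtain ⟨i, hi, rfl⟩ := mem_iff_getElem.1 hx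
      rcases (by omega : i = 0 ∨ i = 1) with rfl | rfl
      · exact Or.inl (head_getElem hLh hi)
      · exact Or.inr (last_getElem hLl hi (by omega))
    have hpv : (G.induce (({v} : Set V)ᶜ)).Preconnected :=
      (h2conn.2 {v} (by simp)).preconnected
    have hpu : (G.induce (({u} : Set V)ᶜ)).Preconnected :=
      (h2conn.2 {u} (by simp)).preconnected
    obtain ⟨l₁, hc₁, hn₁, hh₁, hl₁, hS₁⟩ := exists_pathlist_in _ hpv
      (by simp [huv] : u ∈ (({v} : Set V)ᶜ)) (by simp [hw₀v] : w₀ ∈ (({v} : Set V)ᶜ))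
    obtain ⟨zu, hzul, hzu_adj, hzu_ne⟩ := second_vertex hc₁ hn₁ hh₁ hl₁
      (fun h => hw₀u h.symm)
    have hzu_v : zu ≠ v := by
      intro h
      have := hS₁ zu hzul
      rw [h] at this
      simp at this
    obtain ⟨l₂, hc₂, hn₂, hh₂, hl₂, hS₂⟩ := exists_pathlist_in _ hpu
      (by simp [Ne.symm huv] : v ∈ (({u} : Set V)ᶜ)) (by simp [hw₀u] : w₀ ∈ (({u} : Set V)ᶜ))
    obtain ⟨zv, hzvl, hzv_adj, hzv_ne⟩ := second_vertex hc₂ hn₂ hh₂ hl₂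
      (fun h => hw₀v h.symm)
    have hzv_u : zv ≠ u := by
      intro h
      have := hS₂ zv hzvl
      rw [h] at this
      simp at this
    obtain ⟨l₃, hc₃, hn₃, hh₃, hl₃, hS₃⟩ := exists_pathlist_in _ hprecon2
      (by simp [hzu_ne, hzu_v] : zu ∈ (({u, v} : Set V)ᶜ))
      (by simp [hzv_u, hzv_ne] : zv ∈ (({u, v} : Set V)ᶜ))
    have hl₃L : ∀ x ∈ l₃, x ∉ L := by
      intro x hx hxL
      have hx' := hS₃ x hx
      rcases hmemL x hxL with rfl | rfl <;> simp at hx'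
    refine longer_between hLn hmax [u] [v] l₃ (isChain_singleton u) (isChain_singleton v) hc₃
      (nodup_singleton u) (nodup_singleton v) hn₃
      (by intro x hx; simp at hx; rw [hx]; exact huL)
      (by intro x hx; simp at hx; rw [hx]; exact hvL)
      hl₃L (by intro x hx; simp at hx; rw [hx]; simp [huv])
      (by intro x hx; rcases hmemL x hx with rfl | rfl; exacts [Or.inl (by simp), Or.inr (by simp)])
      rfl rfl (by intro h; rw [h] at hh₃; simp at hh₃) ?_ ?_
    · intro x hx y hy
      simp only [getLast?_singleton, Option.mem_def, Option.some.injEq] at hx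
      rw [hh₃] at hy
      simp only [Option.mem_def, Option.some.injEq] at hy
      exact hx ▸ hy ▸ hzu_adj
    · intro x hx y hy
      rw [hl₃] at hx
      simp only [head?_cons, Option.mem_def, Option.some.injEq] at hx hy
      exact hx ▸ hy ▸ hzv_adj.symm
  have hcaseB_or : (∃ w, w ∉ L ∧ G.Adj w u ∧ G.Adj w v) ∨
      ∀ w, w ∉ L → G.Adj w u → G.Adj w v → False := by
    by_cases h : ∃ w, w ∉ L ∧ G.Adj w u ∧ G.Adj w v
    · exact Or.inl h
    · exact Or.inr (fun w h1 h2 h3 => h ⟨w, h1, h2, h3⟩)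
  rcases hcaseB_or with ⟨w, hw, hwu, hwv⟩ | caseB
  · exact caseA_contra hα hLc hLn hLh hLl hmax huv hlen3 hprecon2 hw hwu hwv
  · have huniqB : ∀ y, y ∉ L → ∀ a ∈ L, G.Adj y a → ∀ z ∈ L, z ≠ a → ¬ G.Adj y z := by
      intro y hy a ha hya z hz hza hyz
      rcases classify hα hLc hLn hLh hLl hmax hy ha hz (fun h => hza h.symm) hya hyz with
        ⟨h1, h2⟩ | ⟨h1, h2⟩
      · exact caseB y hy (h1 ▸ hya) (h2 ▸ hyz)
      · exact caseB y hy (h2 ▸ hyz) (h1 ▸ hya)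
    have hfinal : ∀ (c : List V) (xi xj h t : V), c ≠ [] → c.Chain' G.Adj → c.Nodup →
        (∀ x ∈ c, x ∉ L) → c.head? = some h → c.getLast? = some t →
        G.Adj h xi → G.Adj t xj → xi ∈ L → xj ∈ L → xi ≠ xj →
        (xi = u ∨ (xi ≠ u ∧ xi ≠ v)) → (xj = v ∨ (xj ≠ u ∧ xj ≠ v)) →
        ¬(xi = u ∧ xj = v) → False := by
      intro c xi xj h t h1 h2 h3 h4 h5 h6 h7 h8 h9 h10 h11 h12 h13 h14
      have hhL : h ∉ L := h4 h (mem_of_mem_head? h5)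
      have htL' : t ∉ L := h4 t (mem_of_mem_getLast? h6)
      exact final_config hLn hLh hLl hmax huv huL hvL h1 h2 h3 h4 h5 h6 h7 h8 h9 h10 h11
        h12 h13 h14
        (config_allpairs hα hhL htL' h11
          (fun z hz hzxi => huniqB h hhL xi h9 h7 z hz hzxi)
          (fun z hz hzxj => huniqB t htL' xj h10 h8 z hz hzxj))
    have hx1lt : (1 : ℕ) < L.length := by omega
    set x1 : V := L[1]'hx1lt with hx1def
    have hx1L : x1 ∈ L := getElem_mem _
    have hx1u : x1 ≠ u := by
      intro h
      rw [← head_getElem hLh (by omega)] at h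
      have := hLn.getElem_inj_iff.1 h
      omega
    have hx1v : x1 ≠ v := by
      intro h
      rw [← last_getElem hLl (by omega : L.length - 1 < L.length) (by omega)] at h
      have := hLn.getElem_inj_iff.1 h
      omega
    obtain ⟨c₀, y₀, b₀, hcne₀, hcc₀, hcn₀, hch₀, hct₀, hyb₀, hb₀L, _, hc₀mem⟩ :=
      chain_to_L ((∅ : Set V)ᶜ) ((h2conn.2 ∅ (by simp)).preconnected)
        (by simp) (by simp) hw₀ huL
    have hy₀L : y₀ ∉ L := (hc₀mem y₀ (mem_of_mem_getLast? hct₀)).1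
    by_cases hb₀uv : b₀ = u ∨ b₀ = v
    · have hy₀u : y₀ ≠ u := fun h => hy₀L (by rw [h]; exact huL)
      have hy₀v : y₀ ≠ v := fun h => hy₀L (by rw [h]; exact hvL)
      obtain ⟨c₂, y₂, b₂, hcne₂, hcc₂, hcn₂, hch₂, hct₂, hyb₂, hb₂L, hb₂S, hc₂mem⟩ :=
        chain_to_L (({u, v} : Set V)ᶜ) hprecon2 (by simp [hy₀u, hy₀v])
          (by simp [hx1u, hx1v]) hy₀L hx1L
      have hb₂u : b₂ ≠ u := by intro h; rw [h] at hb₂S; simp at hb₂S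
      have hb₂v : b₂ ≠ v := by intro h; rw [h] at hb₂S; simp at hb₂S
      have hc₂L : ∀ x ∈ c₂, x ∉ L := fun x hx => (hc₂mem x hx).1
      rcases hb₀uv with hb₀u | hb₀v
      · exact hfinal c₂ b₀ b₂ y₀ y₂ hcne₂ hcc₂ hcn₂ hc₂L hch₂ hct₂ hyb₀ hyb₂ hb₀L hb₂L
          (fun h => hb₂u (h.symm.trans hb₀u)) (Or.inl hb₀u) (Or.inr ⟨hb₂u, hb₂v⟩)
          (fun hc => hb₂v hc.2)
      · exact hfinal c₂.reverse b₂ b₀ y₂ y₀ (by simp [hcne₂]) (chain'_adj_reverse hcc₂)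
          (nodup_reverse.2 hcn₂) (fun x hx => hc₂L x (mem_reverse.1 hx))
          (by rw [head?_reverse]; exact hct₂) (by rw [getLast?_reverse]; exact hch₂)
          hyb₂ hyb₀ hb₂L hb₀L (fun h => hb₂v (h.trans hb₀v))
          (Or.inr ⟨hb₂u, hb₂v⟩) (Or.inl hb₀v) (fun hc => hb₂u hc.1)
    · push_neg at hb₀uv
      obtain ⟨hb₀u, hb₀v⟩ := hb₀uv
      have hpre1 : (G.induce (({b₀} : Set V)ᶜ)).Preconnected :=
        (h2conn.2 {b₀} (by simp)).preconnected
      have hy₀b₀ : y₀ ≠ b₀ := fun h => hy₀L (by rw [h]; exact hb₀L)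
      have hub₀ : u ≠ b₀ := fun h => hb₀u h.symm
      obtain ⟨c₁, y₁, b₁, hcne₁, hcc₁, hcn₁, hch₁, hct₁, hyb₁, hb₁L, hb₁S, hc₁mem⟩ :=
        chain_to_L (({b₀} : Set V)ᶜ) hpre1 (by simp [hy₀b₀])
          (by simp [hub₀]) hy₀L huL
      have hb₁b₀ : b₁ ≠ b₀ := by intro h; rw [h] at hb₁S; simp at hb₁S
      have hc₁L : ∀ x ∈ c₁, x ∉ L := fun x hx => (hc₁mem x hx).1
      by_cases hb₁u : b₁ = u
      · exact hfinal c₁.reverse b₁ b₀ y₁ y₀ (by simp [hcne₁]) (chain'_adj_reverse hcc₁)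
          (nodup_reverse.2 hcn₁) (fun x hx => hc₁L x (mem_reverse.1 hx))
          (by rw [head?_reverse]; exact hct₁) (by rw [getLast?_reverse]; exact hch₁)
          hyb₁ hyb₀ hb₁L hb₀L hb₁b₀ (Or.inl hb₁u) (Or.inr ⟨hb₀u, hb₀v⟩)
          (fun hc => hb₀v hc.2)
      · by_cases hb₁v : b₁ = v
        · exact hfinal c₁ b₀ b₁ y₀ y₁ hcne₁ hcc₁ hcn₁ hc₁L hch₁ hct₁ hyb₀ hyb₁ hb₀L hb₁L
            (fun h => hb₁b₀ h.symm) (Or.inr ⟨hb₀u, hb₀v⟩) (Or.inl hb₁v)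
            (fun hc => hb₀u hc.1)
        · exact hfinal c₁ b₀ b₁ y₀ y₁ hcne₁ hcc₁ hcn₁ hc₁L hch₁ hct₁ hyb₀ hyb₁ hb₀L hb₁L
            (fun h => hb₁b₀ h.symm) (Or.inr ⟨hb₀u, hb₀v⟩) (Or.inr ⟨hb₁u, hb₁v⟩)
            (fun hc => hb₀u hc.1)

theorem aux_stmt_7 [Fintype V]
    (h2conn : SConnected G 2) (hα : IndepBound G 2) (huv : u ≠ v)
    (hcut : ¬ IsCutSet G {u, v}) :
    ∃ p : G.Walk u v, p.IsHamiltonian := by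
  classical
  obtain ⟨l₀, hc₀, hn₀, hh₀, hl₀, -⟩ := exists_pathlist_in ((∅ : Set V)ᶜ)
    ((h2conn.2 ∅ (by simp)).preconnected) (by simp : u ∈ ((∅ : Set V)ᶜ))
    (by simp : v ∈ ((∅ : Set V)ᶜ))
  set P : ℕ → Prop := fun k => ∃ l : List V, IsPL G u v l ∧ l.length = k with hP
  have hP0 : P l₀.length := ⟨l₀, ⟨hc₀, hn₀, hh₀, hl₀⟩, rfl⟩
  obtain ⟨L, hL, hLlen⟩ := Nat.findGreatest_spec (P := P) (n := Fintype.card V)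
    hn₀.length_le_card hP0
  have hmax : ∀ l, IsPL G u v l → l.length ≤ L.length := by
    intro l hl
    have h1 : l.length ≤ Nat.findGreatest P (Fintype.card V) :=
      Nat.le_findGreatest hl.2.1.length_le_card ⟨l, hl, rfl⟩
    omega
  obtain ⟨hLc, hLn, hLh, hLl⟩ := hL
  have hcov := maximal_covers hα h2conn huv hcut hLc hLn hLh hLl hmax
  obtain ⟨p, hp⟩ := walk_of_list L hLc u v hLh hLl
  refine ⟨p, fun a => ?_⟩
  rw [hp]
  exact count_eq_one_of_mem hLn (hcov a)


end AuxHam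

/-- In a 2-connected graph with independence number at most 2, if {u,v} is not a vertex
cut, then there is a Hamiltonian path from u to v. -/
theorem stmt_7 [Fintype V] [DecidableEq V] (G : SimpleGraph V)
    (h2conn : SConnected G 2) (hα : IndepBound G 2) (u v : V) (huv : u ≠ v)
    (hcut : ¬ IsCutSet G {u, v}) :
    HasHamPathBetween G u v :=
  aux_stmt_7 h2conn hα huv hcut
end

section
/- Let G be a connected finite simple graph with independence number at most 3 containing three pairwise adjacent cut vertices x, y, z. Then G − {x,y,z} has at most 3 connected components, all of which are cliques, and each of x, y, z has a component of G − {x,y,z} none of whose vertices is adjacent to either of the other two cut vertices. -/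
open SimpleGraph

variable {V : Type*}

/-!
For a cut vertex `x`, some component of `G - x` misses the edge `yz`; since `G` is connected it
contains a neighbour of `x`, and the component of `G - {x, y, z}` through that neighbour sees `x`
but neither `y` nor `z`. These private components of `x`, `y`, `z` are distinct. Vertices in
distinct components are non-adjacent, so one vertex per component is an independent set: there
are at most three components, and two non-adjacent vertices in one of them, together with
representatives of the other two, would be four independent vertices.
-/

section

variable {G : SimpleGraph V}

namespace SimpleGraph

lemma ConnectedComponent.connectedComponentMk_out {W : Type*} {H : SimpleGraph W}
    (c : H.ConnectedComponent) : H.connectedComponentMk c.out = c :=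
  Quot.out_eq c

lemma ne_and_not_adj_of_connectedComponentMk_ne {A : Set V} {u v : A}
    (h : (G.induce A).connectedComponentMk u ≠ (G.induce A).connectedComponentMk v) :
    (u : V) ≠ v ∧ ¬ G.Adj u v :=
  ⟨fun huv => h (by rw [Subtype.ext huv]),
    fun hadj => h (ConnectedComponent.connectedComponentMk_eq_of_adj hadj)⟩

lemma exists_connectedComponent_ne_of_not_preconnected {W : Type*} {H : SimpleGraph W}
    (h : ¬ H.Preconnected) (u : W) :
    ∃ c : H.ConnectedComponent, c ≠ H.connectedComponentMk u := by
  by_contra! hall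
  exact h fun a b => ConnectedComponent.eq.mp ((hall _).trans (hall _).symm)

lemma ConnectedComponent.exists_adj_of_connected (hG : G.Connected) {S : Set V}
    (hS : S.Nonempty) (c : (G.induce Sᶜ).ConnectedComponent) :
    ∃ v ∈ c.supp, ∃ s ∈ S, G.Adj s v := by
  obtain ⟨u, hu⟩ := c.nonempty_supp
  obtain ⟨s, hs⟩ := hS
  obtain ⟨d, -, ⟨w, hw, hwd⟩, hd⟩ := (hG.preconnected u s).some.exists_boundary_dart
    (Subtype.val '' c.supp) ⟨u, hu, rfl⟩ (by rintro ⟨w, -, hws⟩; exact w.2 (hws ▸ hs))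
  by_cases hdS : d.snd ∈ S
  · exact ⟨w, hw, d.snd, hdS, by rw [hwd]; exact d.adj.symm⟩
  · have hadj : (G.induce Sᶜ).Adj w ⟨d.snd, hdS⟩ := by
      change G.Adj (w : V) d.snd
      rw [hwd]
      exact d.adj
    exact absurd ⟨_, (c.mem_supp_congr_adj hadj).mp hw, rfl⟩ hd

end SimpleGraph

lemma IndepBound.natCard_le {k : ℕ} (hα : IndepBound G k) {ι : Type*} [Finite ι] (f : ι → V)
    (hf : Pairwise fun i j => f i ≠ f j ∧ ¬ G.Adj (f i) (f j)) : Nat.card ι ≤ k := by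
  have := Fintype.ofFinite ι
  have hinj : f.Injective := fun i j hij => by_contra fun hne => (hf hne).1 hij
  rw [Nat.card_eq_fintype_card, ← Finset.card_univ, ← Finset.card_map ⟨f, hinj⟩]
  refine hα _ ?_
  simp only [Finset.mem_map, Finset.mem_univ, true_and, Function.Embedding.coeFn_mk]
  rintro _ ⟨i, rfl⟩ _ ⟨j, rfl⟩ hne
  exact (hf fun hij => hne (congrArg f hij)).2

lemma IndepBound.natCard_connectedComponent_le [Finite V] {k : ℕ} (hα : IndepBound G k)
    (A : Set V) : Nat.card (G.induce A).ConnectedComponent ≤ k :=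
  hα.natCard_le (fun c => (c.out : V)) fun c d hcd =>
    ne_and_not_adj_of_connectedComponentMk_ne <| by
      rwa [c.connectedComponentMk_out, d.connectedComponentMk_out]

lemma IndepBound.isClique_supp [Finite V] {k : ℕ} (hα : IndepBound G k) {A : Set V}
    (hk : k ≤ Nat.card (G.induce A).ConnectedComponent) (c : (G.induce A).ConnectedComponent) :
    G.IsClique (Subtype.val '' c.supp) := by
  classical
  rintro _ ⟨u, hu, rfl⟩ _ ⟨v, hv, rfl⟩ hne
  by_contra hadj
  let f : Option (G.induce A).ConnectedComponent → A := fun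
    | none => v
    | some d => if d = c then u else d.out
  have hf : ∀ d, (G.induce A).connectedComponentMk (f (some d)) = d := by
    intro d
    by_cases hd : d = c
    · simpa [f, hd] using hu
    · simpa [f, hd] using d.connectedComponentMk_out
  have hfv : ∀ d, (f (some d) : V) ≠ v ∧ ¬ G.Adj (f (some d)) v := by
    intro d
    by_cases hd : d = c
    · simpa [f, hd] using And.intro hne hadj
    · exact ne_and_not_adj_of_connectedComponentMk_ne (by rwa [hf, hv])
  have hcard := hα.natCard_le (fun i => (f i : V)) <| by
    rintro (_ | d) (_ | d') hdd'
    · exact absurd rfl hdd'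
    · exact ⟨(hfv d').1.symm, fun h => (hfv d').2 h.symm⟩
    · exact hfv d
    · exact ne_and_not_adj_of_connectedComponentMk_ne (by rwa [hf, hf, Ne, ← Option.some_inj])
  rw [Finite.card_option] at hcard
  omega

lemma IsCutVertex.exists_private_component (hG : G.Connected) {x y z : V}
    (hx : IsCutVertex G x) (hxy : x ≠ y) (hxz : x ≠ z) (hyz : G.Adj y z) :
    ∃ c : (G.induce ({x, y, z} : Set V)ᶜ).ConnectedComponent,
      (∃ w ∈ c.supp, G.Adj x w) ∧ ∀ w ∈ c.supp, ¬ G.Adj y ↑w ∧ ¬ G.Adj z ↑w := by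
  set H := G.induce ({x} : Set V)ᶜ
  have hy : y ∈ ({x} : Set V)ᶜ := hxy.symm
  have hz : z ∈ ({x} : Set V)ᶜ := hxz.symm
  have hzy : H.connectedComponentMk ⟨z, hz⟩ = H.connectedComponentMk ⟨y, hy⟩ :=
    (ConnectedComponent.connectedComponentMk_eq_of_adj
      (show H.Adj ⟨y, hy⟩ ⟨z, hz⟩ from hyz)).symm
  obtain ⟨c, hc⟩ := exists_connectedComponent_ne_of_not_preconnected hx ⟨y, hy⟩
  obtain ⟨w, hw, s, hs, hsw⟩ := c.exists_adj_of_connected hG (Set.singleton_nonempty x)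
  have hxw : G.Adj x w := Set.mem_singleton_iff.mp hs ▸ hsw
  have hfar : ∀ v ∈ c.supp, ¬ G.Adj y v ∧ ¬ G.Adj z v := fun v hv =>
    ⟨fun h => hc ((c.mem_supp_congr_adj (G := H) (v := ⟨y, hy⟩) h).mpr hv).symm,
      fun h => hc (hzy.symm.trans
        ((c.mem_supp_congr_adj (G := H) (v := ⟨z, hz⟩) h).mpr hv)).symm⟩
  have hwS : (w : V) ∈ ({x, y, z} : Set V)ᶜ := by
    have hwy : (w : V) ≠ y := fun h =>
      hc (hw.symm.trans (by rw [(Subtype.ext h : w = ⟨y, hy⟩)]))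
    have hwz : (w : V) ≠ z := fun h =>
      hc (hw.symm.trans (by rw [(Subtype.ext h : w = ⟨z, hz⟩), hzy]))
    have hwx : (w : V) ≠ x := w.2
    simp [hwx, hwy, hwz]
  have hsub : ({x, y, z} : Set V)ᶜ ⊆ ({x} : Set V)ᶜ :=
    Set.compl_subset_compl.mpr (Set.singleton_subset_iff.mpr (Set.mem_insert x _))
  refine ⟨(G.induce _).connectedComponentMk ⟨w, hwS⟩, ⟨⟨w, hwS⟩, rfl, hxw⟩,
    fun v hv => hfar (Set.inclusion hsub v) ?_⟩
  rw [← hw]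
  exact ConnectedComponent.eq.mpr
    ((ConnectedComponent.eq.mp hv).map (G.induceHomOfLE hsub).toHom)

end

theorem stmt_12_general [Fintype V] (G : SimpleGraph V)
    (hconn : G.Connected) (hα : IndepBound G 3) (x y z : V)
    (hx : IsCutVertex G x) (hy : IsCutVertex G y) (hz : IsCutVertex G z)
    (haxy : G.Adj x y) (haxz : G.Adj x z) (hayz : G.Adj y z) :
    Nat.card (G.induce (({x, y, z} : Set V)ᶜ)).ConnectedComponent ≤ 3 ∧
    (∀ c : (G.induce (({x, y, z} : Set V)ᶜ)).ConnectedComponent,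
      G.IsClique (Subtype.val '' c.supp)) ∧
    (∃ c : (G.induce (({x, y, z} : Set V)ᶜ)).ConnectedComponent,
      (∃ w ∈ c.supp, G.Adj x w) ∧ ∀ w ∈ c.supp, ¬ G.Adj y ↑w ∧ ¬ G.Adj z ↑w) ∧
    (∃ c : (G.induce (({x, y, z} : Set V)ᶜ)).ConnectedComponent,
      (∃ w ∈ c.supp, G.Adj y w) ∧ ∀ w ∈ c.supp, ¬ G.Adj x ↑w ∧ ¬ G.Adj z ↑w) ∧
    (∃ c : (G.induce (({x, y, z} : Set V)ᶜ)).ConnectedComponent,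
      (∃ w ∈ c.supp, G.Adj z w) ∧ ∀ w ∈ c.supp, ¬ G.Adj x ↑w ∧ ¬ G.Adj y ↑w) := by
  have hpx := hx.exists_private_component hconn haxy.ne haxz.ne hayz
  have hpy := hy.exists_private_component hconn haxy.ne.symm hayz.ne haxz
  have hpz := hz.exists_private_component hconn haxz.ne.symm hayz.ne.symm haxy
  rw [Set.insert_comm y x {z}] at hpy
  rw [Set.insert_comm z x {y}, Set.pair_comm z y] at hpz
  obtain ⟨cx, ⟨wx, hwx, hxwx⟩, hcx⟩ := hpx
  obtain ⟨cy, ⟨wy, hwy, hywy⟩, hcy⟩ := hpy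
  obtain ⟨cz, ⟨wz, hwz, hzwz⟩, hcz⟩ := hpz
  have hcard : Nat.card (G.induce (({x, y, z} : Set V)ᶜ)).ConnectedComponent = 3 := by
    refine le_antisymm (hα.natCard_connectedComponent_le _) ?_
    have hcxy : cx ≠ cy := by rintro rfl; exact (hcx wy hwy).1 hywy
    have hcxz : cx ≠ cz := by rintro rfl; exact (hcx wz hwz).2 hzwz
    have hcyz : cy ≠ cz := by rintro rfl; exact (hcy wz hwz).2 hzwz
    calc 3 = ({cx, cy, cz} : Set _).ncard :=
          (Set.ncard_eq_three.mpr ⟨_, _, _, hcxy, hcxz, hcyz, rfl⟩).symm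
      _ ≤ _ := Set.ncard_le_card _
  exact ⟨hcard.le, hα.isClique_supp hcard.ge, ⟨cx, ⟨wx, hwx, hxwx⟩, hcx⟩,
    ⟨cy, ⟨wy, hwy, hywy⟩, hcy⟩, ⟨cz, ⟨wz, hwz, hzwz⟩, hcz⟩⟩

/-- If G is connected with independence number at most 3 and x, y, z are three pairwise
adjacent cut vertices, then G - {x,y,z} has at most 3 components, all cliques, and each
of x, y, z has a private component whose vertices are not adjacent to the other two
cut vertices. -/
theorem stmt_12 [Fintype V] [DecidableEq V] (G : SimpleGraph V)
    (hconn : G.Connected) (hα : IndepBound G 3) (x y z : V)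
    (hxy : x ≠ y) (hxz : x ≠ z) (hyz : y ≠ z)
    (hx : IsCutVertex G x) (hy : IsCutVertex G y) (hz : IsCutVertex G z)
    (haxy : G.Adj x y) (haxz : G.Adj x z) (hayz : G.Adj y z) :
    Nat.card (G.induce (({x, y, z} : Set V)ᶜ)).ConnectedComponent ≤ 3 ∧
    (∀ c : (G.induce (({x, y, z} : Set V)ᶜ)).ConnectedComponent,
      G.IsClique (Subtype.val '' c.supp)) ∧
    (∃ c : (G.induce (({x, y, z} : Set V)ᶜ)).ConnectedComponent,
      (∃ w ∈ c.supp, G.Adj x w) ∧ ∀ w ∈ c.supp, ¬ G.Adj y ↑w ∧ ¬ G.Adj z ↑w) ∧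
    (∃ c : (G.induce (({x, y, z} : Set V)ᶜ)).ConnectedComponent,
      (∃ w ∈ c.supp, G.Adj y w) ∧ ∀ w ∈ c.supp, ¬ G.Adj x ↑w ∧ ¬ G.Adj z ↑w) ∧
    (∃ c : (G.induce (({x, y, z} : Set V)ᶜ)).ConnectedComponent,
      (∃ w ∈ c.supp, G.Adj z w) ∧ ∀ w ∈ c.supp, ¬ G.Adj x ↑w ∧ ¬ G.Adj y ↑w) :=
  stmt_12_general G hconn hα x y z hx hy hz haxy haxz hayz
end

section
/- Let G be an s-connected finite simple graph with s ≥ 1, let x be a vertex, and let Y be a set of vertices with x ∉ Y. Set m = min(s, |Y|). Then there exist m distinct vertices y1, …, ym ∈ Y and m paths P1, …, Pm in G, pairwise disjoint except for the common vertex x, such that each Pi starts at x, ends at yi, and meets Y only in yi. -/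
open SimpleGraph

variable {V : Type*}


set_option linter.unusedSectionVars false

namespace MengerAux

variable {α : Type*}

/-- Prefix of `l` up to (and including) the first element satisfying `P`. -/
def takeTo (P : α → Prop) [DecidablePred P] : List α → List α
  | [] => []
  | a :: l => if P a then [a] else a :: takeTo P l

variable {P : α → Prop} [DecidablePred P]

theorem takeTo_prefix (l : List α) : takeTo P l <+: l := by
  induction l with
  | nil => simp [takeTo]
  | cons a l ih =>
    by_cases h : P a
    · simp [takeTo, h]
    · simpa [takeTo, h] using ih

theorem mem_of_mem_takeTo {l : List α} {w : α} (h : w ∈ takeTo P l) : w ∈ l :=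
  (takeTo_prefix l).subset h

theorem takeTo_head? {a : α} (l : List α) : (takeTo P (a :: l)).head? = some a := by
  by_cases h : P a <;> simp [takeTo, h]

/-- Structure of `takeTo` assuming a hit exists. -/
theorem takeTo_spec {l : List α} (h : ∃ w ∈ l, P w) :
    ∃ l₀ c, takeTo P l = l₀ ++ [c] ∧ P c ∧ ∀ w ∈ l₀, ¬ P w := by
  induction l with
  | nil => simp at h
  | cons a l ih =>
    by_cases ha : P a
    · exact ⟨[], a, by simp [takeTo, ha], ha, by simp⟩
    · obtain ⟨w, hw, hPw⟩ := h
      rcases List.mem_cons.1 hw with rfl | hw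
      · exact absurd hPw ha
      · obtain ⟨l₀, c, heq, hc, hl₀⟩ := ih ⟨w, hw, hPw⟩
        exact ⟨a :: l₀, c, by simp [takeTo, ha, heq], hc, by
          intro w hw'
          rcases List.mem_cons.1 hw' with rfl | hw'
          · exact ha
          · exact hl₀ w hw'⟩

theorem takeTo_chain' {R : α → α → Prop} {l : List α} (h : List.Chain' R l) :
    List.Chain' R (takeTo P l) :=
  h.prefix (takeTo_prefix l)

/-- Suffix of `l` from the last element satisfying `P`. -/
def dropTo (P : α → Prop) [DecidablePred P] (l : List α) : List α :=
  (takeTo P l.reverse).reverse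

theorem dropTo_suffix (l : List α) : dropTo P l <:+ l := by
  have := takeTo_prefix (P := P) l.reverse
  rw [← List.reverse_suffix] at this
  simpa [dropTo] using this

theorem mem_of_mem_dropTo {l : List α} {w : α} (h : w ∈ dropTo P l) : w ∈ l :=
  (dropTo_suffix l).subset h

theorem dropTo_getLast? {l : List α} (h : l ≠ []) : (dropTo P l).getLast? = l.getLast? := by
  have h' : l.reverse ≠ [] := by simpa using h
  obtain ⟨a, t, ht⟩ := List.exists_cons_of_ne_nil h'
  rw [dropTo, List.getLast?_reverse, ht, takeTo_head?, ← List.head?_reverse, ht]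
  simp

theorem dropTo_spec {l : List α} (h : ∃ w ∈ l, P w) :
    ∃ c r, dropTo P l = c :: r ∧ P c ∧ ∀ w ∈ r, ¬ P w := by
  have h' : ∃ w ∈ l.reverse, P w := by simpa using h
  obtain ⟨l₀, c, heq, hc, hl₀⟩ := takeTo_spec h'
  exact ⟨c, l₀.reverse, by simp [dropTo, heq], hc, by simpa using hl₀⟩

theorem dropTo_chain' {R : α → α → Prop} {l : List α} (h : List.Chain' R l) :
    List.Chain' R (dropTo P l) :=
  h.suffix (dropTo_suffix l)

/-- A walk in the digraph given by relation `R`, from `a` to `b`, as a list of vertices. -/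
def DW (R : α → α → Prop) (a b : α) (l : List α) : Prop :=
  l.Chain' R ∧ l.head? = some a ∧ l.getLast? = some b

theorem DW.ne_nil {R : α → α → Prop} {a b : α} {l : List α} (h : DW R a b l) : l ≠ [] := by
  rintro rfl; simp [DW] at h

theorem DW.start_mem {R : α → α → Prop} {a b : α} {l : List α} (h : DW R a b l) : a ∈ l := by
  obtain ⟨c, t, rfl⟩ := List.exists_cons_of_ne_nil h.ne_nil
  obtain ⟨-, h2, -⟩ := h
  simp_all

theorem DW.end_mem {R : α → α → Prop} {a b : α} {l : List α} (h : DW R a b l) : b ∈ l := by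
  have := h.2.2
  rw [List.getLast?_eq_getLast h.ne_nil] at this
  exact (Option.some_inj.1 this) ▸ List.getLast_mem h.ne_nil

theorem DW.singleton {R : α → α → Prop} (a : α) : DW R a a [a] := by simp [DW, List.Chain']

theorem DW.reverse {R : α → α → Prop} {a b : α} {l : List α} (h : DW R a b l) :
    DW (flip R) b a l.reverse :=
  ⟨List.isChain_reverse.2 (by simpa [flip, List.Chain'] using h.1), by simpa using h.2.2, by simpa using h.2.1⟩

theorem DW.mono {R S : α → α → Prop} (hRS : ∀ c d, R c d → S c d) {a b : α} {l : List α}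
    (h : DW R a b l) : DW S a b l :=
  ⟨h.1.imp hRS, h.2.1, h.2.2⟩

theorem DW.takeTo {R : α → α → Prop} {a b : α} {l : List α} (h : DW R a b l)
    (hw : ∃ w ∈ l, P w) :
    ∃ c, P c ∧ DW R a c (takeTo P l) ∧ (∀ w ∈ takeTo P l, P w → w = c) := by
  obtain ⟨l₀, c, heq, hc, hl₀⟩ := takeTo_spec hw
  obtain ⟨a', t, rfl⟩ := List.exists_cons_of_ne_nil h.ne_nil
  have ha : a' = a := by have := h.2.1; simp_all
  subst ha
  refine ⟨c, hc, ⟨takeTo_chain' h.1, takeTo_head? t, by simp [heq]⟩, ?_⟩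
  intro w hw' hPw
  rw [heq] at hw'
  rcases List.mem_append.1 hw' with hw' | hw'
  · exact absurd hPw (hl₀ w hw')
  · simpa using hw'

theorem DW.dropTo {R : α → α → Prop} {a b : α} {l : List α} (h : DW R a b l)
    (hw : ∃ w ∈ l, P w) :
    ∃ c, P c ∧ DW R c b (dropTo P l) ∧ (∀ w ∈ dropTo P l, P w → w = c) := by
  obtain ⟨c, r, heq, hc, hr⟩ := dropTo_spec hw
  refine ⟨c, hc, ⟨dropTo_chain' h.1, by simp [heq], by rw [dropTo_getLast? h.ne_nil]; exact h.2.2⟩,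
    ?_⟩
  intro w hw' hPw
  rw [heq] at hw'
  rcases List.mem_cons.1 hw' with rfl | hw'
  · rfl
  · exact absurd hPw (hr w hw')

/-- Glue two walks sharing endpoint `t`. -/
theorem DW.append {R : α → α → Prop} {a t b : α} {l₁ l₂ : List α}
    (h₁ : DW R a t l₁) (h₂ : DW R t b l₂) :
    DW R a b (l₁ ++ l₂.tail) ∧ ∀ w ∈ l₁ ++ l₂.tail, w ∈ l₁ ∨ w ∈ l₂ := by
  obtain ⟨t', l₂', rfl⟩ := List.exists_cons_of_ne_nil h₂.ne_nil
  have ht : t = t' := by have := h₂.2.1; simp_all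
  subst ht
  constructor
  · refine ⟨List.isChain_append.2 ⟨h₁.1, h₂.1.tail, ?_⟩, ?_, ?_⟩
    · intro p hp q hq
      rw [h₁.2.2] at hp
      have := (List.isChain_cons.1 h₂.1).1
      simp only [Option.mem_def, Option.some_inj] at hp
      subst hp
      exact this q hq
    · rw [List.head?_append_of_ne_nil _ h₁.ne_nil, h₁.2.1]
    · simp only [List.tail_cons]
      rcases eq_or_ne l₂' [] with rfl | hne
      · have hb : t = b := by simpa using h₂.2.2
        rw [List.append_nil, h₁.2.2, hb]
      · rw [List.getLast?_append_of_ne_nil _ hne]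
        have := h₂.2.2
        rwa [show (t :: l₂') = [t] ++ l₂' from rfl,
          List.getLast?_append_of_ne_nil _ hne] at this
  · intro w hw
    rcases List.mem_append.1 hw with hw | hw
    · exact Or.inl hw
    · exact Or.inr (List.mem_cons_of_mem _ hw)

/-- Glue two walks along an edge `R x y`. -/
theorem DW.appendEdge {R : α → α → Prop} {a x y b : α} {l₁ l₂ : List α}
    (h₁ : DW R a x l₁) (h₂ : DW R y b l₂) (hxy : R x y) :
    DW R a b (l₁ ++ l₂) := by
  refine ⟨List.isChain_append.2 ⟨h₁.1, h₂.1, ?_⟩, ?_, ?_⟩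
  · intro p hp q hq
    rw [h₁.2.2] at hp
    rw [h₂.2.1] at hq
    simp only [Option.mem_def, Option.some_inj] at hp hq
    subst hp; subst hq; exact hxy
  · rw [List.head?_append_of_ne_nil _ h₁.ne_nil, h₁.2.1]
  · rw [List.getLast?_append_of_ne_nil _ h₂.ne_nil, h₂.2.2]


theorem DW.takeTo' {R : α → α → Prop} {a b : α} {l : List α} (h : DW R a b l)
    (hw : ∃ w ∈ l, P w) :
    ∃ c l₀, MengerAux.takeTo P l = l₀ ++ [c] ∧ P c ∧ (∀ u ∈ l₀, ¬ P u) ∧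
      DW R a c (MengerAux.takeTo P l) := by
  obtain ⟨l₀, c, heq, hc, hl₀⟩ := takeTo_spec hw
  obtain ⟨a', t, rfl⟩ := List.exists_cons_of_ne_nil h.ne_nil
  have ha : a' = a := by have := h.2.1; simp_all
  subst ha
  exact ⟨c, l₀, heq, hc, hl₀, takeTo_chain' h.1, takeTo_head? t, by simp [heq]⟩

theorem DW.dropTo' {R : α → α → Prop} {a b : α} {l : List α} (h : DW R a b l)
    (hw : ∃ w ∈ l, P w) :
    ∃ c r, MengerAux.dropTo P l = c :: r ∧ P c ∧ (∀ u ∈ r, ¬ P u) ∧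
      DW R c b (MengerAux.dropTo P l) := by
  obtain ⟨c, r, heq, hc, hr⟩ := dropTo_spec hw
  exact ⟨c, r, heq, hc, hr, dropTo_chain' h.1, by simp [heq],
    by rw [dropTo_getLast? h.ne_nil]; exact h.2.2⟩

/-- A prefix of `l₀ ++ [c]` containing `c` (with `c ∉ l₀`) is the whole list. -/
theorem prefix_concat_eq {l₀ u : List α} {c : α} (hpre : u <+: l₀ ++ [c]) (hcu : c ∈ u)
    (hcl₀ : c ∉ l₀) : u = l₀ ++ [c] := by
  obtain ⟨t, ht⟩ := hpre
  rcases t with - | ⟨d, t⟩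
  · simpa using ht
  · exfalso
    have hlen : u.length ≤ l₀.length := by
      have := congrArg List.length ht
      simp at this
      omega
    have : u <+: l₀ := by
      have h1 : u <+: l₀ ++ [c] := ⟨d :: t, ht⟩
      rw [List.prefix_iff_eq_take] at h1 ⊢
      rwa [List.take_append_of_le_length hlen] at h1
    exact hcl₀ (this.subset hcu)

/-- A suffix of `c :: r` containing `c` (with `c ∉ r`) is the whole list. -/
theorem suffix_cons_eq {r u : List α} {c : α} (hsuf : u <:+ c :: r) (hcu : c ∈ u)
    (hcr : c ∉ r) : u = c :: r := by
  have h1 : u.reverse <+: (c :: r).reverse := List.reverse_prefix.mpr hsuf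
  rw [List.reverse_cons] at h1
  have h2 := prefix_concat_eq h1 (by simpa using hcu) (by simpa using hcr)
  have := congrArg List.reverse h2
  simpa using this

section Menger

variable [DecidableEq α] [Fintype α]

/-- `S` separates `A` from `B` in the digraph of `R`. -/
def DSep (R : α → α → Prop) (A B S : Finset α) : Prop :=
  ∀ a b l, DW R a b l → a ∈ A → b ∈ B → ∃ w ∈ l, w ∈ S

/-- There are `k` pairwise disjoint `A`–`B` walks in the digraph of `R`. -/
def DConn (R : α → α → Prop) (A B : Finset α) (k : ℕ) : Prop :=
  ∃ (f g : Fin k → α) (F : Fin k → List α),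
    (∀ i, DW R (f i) (g i) (F i)) ∧ (∀ i, f i ∈ A) ∧ (∀ i, g i ∈ B) ∧
    ∀ i j, i ≠ j → ∀ w, w ∈ F i → w ∈ F j → False

theorem DSep.mono_rel {R R' : α → α → Prop} {A B S : Finset α}
    (hRR : ∀ c d, R' c d → R c d) (h : DSep R A B S) : DSep R' A B S :=
  fun a b l hl ha hb => h a b l (hl.mono hRR) ha hb

theorem DSep.flip {R : α → α → Prop} {A B S : Finset α} (h : DSep R A B S) :
    DSep (flip R) B A S := by
  intro a b l hl ha hb
  obtain ⟨w, hw, hwS⟩ := h b a l.reverse hl.reverse hb ha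
  exact ⟨w, by simpa using hw, hwS⟩

theorem DConn.mono_rel {R R' : α → α → Prop} {A B : Finset α} {k : ℕ}
    (hRR : ∀ c d, R c d → R' c d) (h : DConn R A B k) : DConn R' A B k := by
  obtain ⟨f, g, F, hF, hfA, hgB, hdisj⟩ := h
  exact ⟨f, g, F, fun i => (hF i).mono hRR, hfA, hgB, hdisj⟩

theorem dmenger_noedge {R : α → α → Prop} (hno : ∀ a b, ¬ R a b) (A B : Finset α) (k : ℕ)
    (hk : ∀ S : Finset α, DSep R A B S → k ≤ S.card) : DConn R A B k := by
  have hwalk : ∀ a b l, DW R a b l → l = [a] ∧ a = b := by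
    intro a b l hl
    obtain ⟨a', t, rfl⟩ := List.exists_cons_of_ne_nil hl.ne_nil
    have ha : a = a' := by have := hl.2.1; simp_all
    subst ha
    rcases t with - | ⟨c, t⟩
    · have : a = b := by have := hl.2.2; simp_all
      exact ⟨rfl, this⟩
    · exact absurd (List.isChain_cons_cons.1 hl.1).1 (hno a c)
  have hsep : DSep R A B (A ∩ B) := by
    intro a b l hl ha hb
    obtain ⟨h1, h2⟩ := hwalk a b l hl
    exact ⟨a, by rw [h1]; simp, Finset.mem_inter.2 ⟨ha, by rw [h2]; exact hb⟩⟩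
  have hcard : k ≤ (A ∩ B).card := hk _ hsep
  obtain ⟨T, hTsub, hTcard⟩ := Finset.exists_subset_card_eq hcard
  have e : Fin k ≃ {v // v ∈ T} := (Fintype.equivFinOfCardEq (by simpa using hTcard)).symm
  refine ⟨fun i => (e i).1, fun i => (e i).1, fun i => [(e i).1],
    fun i => DW.singleton _, ?_, ?_, ?_⟩
  · exact fun i => (Finset.mem_inter.1 (hTsub (e i).2)).1
  · exact fun i => (Finset.mem_inter.1 (hTsub (e i).2)).2
  · intro i j hij w hwi hwj
    simp only [List.mem_singleton] at hwi hwj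
    exact hij (e.injective (Subtype.ext (hwi.symm.trans hwj)))

theorem exists_badpair {R Rd : α → α → Prop} {x y : α}
    (hRdef : ∀ c d, Rd c d ↔ (R c d ∧ (c, d) ≠ (x, y))) :
    ∀ {l : List α}, l.Chain' R → ¬ l.Chain' Rd →
      ∃ l₁ l₂, l = l₁ ++ x :: y :: l₂ ∧ (l₁ ++ [x]).Chain' Rd := by
  intro l
  induction l with
  | nil => intro _ h; exact absurd List.isChain_nil h
  | cons a l ih =>
    intro hR hRd
    rcases l with - | ⟨c, l⟩
    · exact absurd (List.isChain_singleton a) hRd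
    · have hac : R a c := (List.isChain_cons_cons.1 hR).1
      have hRl : (c :: l).Chain' R := (List.isChain_cons_cons.1 hR).2
      by_cases hpair : (a, c) = (x, y)
      · have hax : a = x := congrArg Prod.fst hpair
        have hcy : c = y := congrArg Prod.snd hpair
        exact ⟨[], l, by simp [hax, hcy], by simp [List.Chain']⟩
      · have hRdac : Rd a c := (hRdef a c).2 ⟨hac, hpair⟩
        have hnRd : ¬ (c :: l).Chain' Rd := by
          intro hcl
          exact hRd (List.isChain_cons_cons.2 ⟨hRdac, hcl⟩)
        obtain ⟨l₁, l₂, heq, hch⟩ := ih hRl hnRd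
        refine ⟨a :: l₁, l₂, by rw [List.cons_append, heq], ?_⟩
        rw [List.cons_append]
        refine List.isChain_cons.2 ⟨?_, hch⟩
        intro z hz
        rcases l₁ with - | ⟨c', l₁⟩
        · simp only [List.nil_append, List.head?_cons, Option.mem_def, Option.some_inj] at hz
          subst hz
          have : c = x := by
            have := heq
            simp at this
            exact this.1
          exact this ▸ hRdac
        · have : c' = c := by
            have := heq
            simp at this
            exact this.1.symm
          simp only [List.cons_append, List.head?_cons, Option.mem_def, Option.some_inj] at hz
          subst hz
          exact this ▸ hRdac

theorem sep_bound {R Rd : α → α → Prop} {x y : α} {A B S₀ : Finset α} {k : ℕ}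
    (hRdef : ∀ c d, Rd c d ↔ (R c d ∧ (c, d) ≠ (x, y)))
    (hk : ∀ S : Finset α, DSep R A B S → k ≤ S.card)
    (hS₀ : DSep Rd A B S₀) :
    ∀ T : Finset α, DSep Rd A (insert x S₀) T → k ≤ T.card := by
  intro T hT
  apply hk
  intro a b l hl ha hb
  by_cases hc : l.Chain' Rd
  · have hl' : DW Rd a b l := ⟨hc, hl.2.1, hl.2.2⟩
    obtain ⟨w₀, hw₀, hw₀S⟩ := hS₀ a b l hl' ha hb
    have hmeet : ∃ w ∈ l, w ∈ insert x S₀ := ⟨w₀, hw₀, Finset.mem_insert_of_mem hw₀S⟩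
    obtain ⟨c, hcP, hwalk, _⟩ := hl'.takeTo (P := (· ∈ insert x S₀)) hmeet
    obtain ⟨w, hw, hwT⟩ := hT a c _ hwalk ha hcP
    exact ⟨w, mem_of_mem_takeTo hw, hwT⟩
  · obtain ⟨l₁, l₂, heq, hch⟩ := exists_badpair hRdef hl.1 hc
    have hhead : (l₁ ++ [x]).head? = some a := by
      have := hl.2.1
      rw [heq] at this
      rcases l₁ with - | ⟨c', l₁⟩ <;> simp_all
    have hpre : DW Rd a x (l₁ ++ [x]) := ⟨hch, hhead, by simp⟩
    obtain ⟨w, hw, hwT⟩ := hT a x _ hpre ha (Finset.mem_insert_self x S₀)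
    refine ⟨w, ?_, hwT⟩
    rw [heq]
    rcases List.mem_append.1 hw with hw | hw
    · exact List.mem_append_left _ hw
    · simp only [List.mem_singleton] at hw
      subst hw
      simp

theorem dmenger : ∀ (n : ℕ) (R : α → α → Prop),
    {p : α × α | R p.1 p.2}.ncard ≤ n → ∀ (A B : Finset α) (k : ℕ),
    (∀ S : Finset α, DSep R A B S → k ≤ S.card) → DConn R A B k := by
  intro n
  induction n with
  | zero =>
    intro R hn A B k hk
    have hno : ∀ a b, ¬ R a b := by
      intro a b hab
      have hmem : (a, b) ∈ {p : α × α | R p.1 p.2} := hab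
      have hpos : 0 < {p : α × α | R p.1 p.2}.ncard :=
        (Set.ncard_pos (Set.toFinite _)).2 ⟨_, hmem⟩
      omega
    exact dmenger_noedge hno A B k hk
  | succ n ih =>
    intro R hn A B k hk
    by_cases hno : ∀ a b, ¬ R a b
    · exact dmenger_noedge hno A B k hk
    push_neg at hno
    obtain ⟨x, y, hxy⟩ := hno
    set Rd : α → α → Prop := fun c d => R c d ∧ (c, d) ≠ (x, y) with hRdDef
    have hRdef : ∀ c d, Rd c d ↔ R c d ∧ (c, d) ≠ (x, y) := fun _ _ => Iff.rfl
    have hRdR : ∀ c d, Rd c d → R c d := fun _ _ h => h.1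
    have hEset : {p : α × α | Rd p.1 p.2} = {p : α × α | R p.1 p.2} \ {(x, y)} := by
      ext ⟨cc, dd⟩
      exact Iff.rfl
    have hfin : {p : α × α | R p.1 p.2}.Finite := Set.toFinite _
    have hmem : (x, y) ∈ {p : α × α | R p.1 p.2} := hxy
    have hn' : {p : α × α | Rd p.1 p.2}.ncard ≤ n := by
      rw [hEset]
      have h1 : ({p : α × α | R p.1 p.2} \ {(x, y)}).ncard =
          {p : α × α | R p.1 p.2}.ncard - 1 := Set.ncard_diff_singleton_of_mem hmem
      have h2 : 0 < {p : α × α | R p.1 p.2}.ncard := (Set.ncard_pos hfin).2 ⟨_, hmem⟩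
      omega
    by_cases hbig : ∀ S : Finset α, DSep Rd A B S → k ≤ S.card
    · exact (ih Rd hn' A B k hbig).mono_rel hRdR
    push_neg at hbig
    obtain ⟨S₀, hS₀, hS₀card⟩ := hbig
    have hPsep : DSep R A B (insert x S₀) := by
      intro a b l hl ha hb
      by_cases hch : l.Chain' Rd
      · obtain ⟨w, hw, hwS⟩ := hS₀ a b l ⟨hch, hl.2.1, hl.2.2⟩ ha hb
        exact ⟨w, hw, Finset.mem_insert_of_mem hwS⟩
      · obtain ⟨l₁, l₂, heq, -⟩ := exists_badpair hRdef hl.1 hch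
        exact ⟨x, by rw [heq]; simp, Finset.mem_insert_self _ _⟩
    have hQsep : DSep R A B (insert y S₀) := by
      intro a b l hl ha hb
      by_cases hch : l.Chain' Rd
      · obtain ⟨w, hw, hwS⟩ := hS₀ a b l ⟨hch, hl.2.1, hl.2.2⟩ ha hb
        exact ⟨w, hw, Finset.mem_insert_of_mem hwS⟩
      · obtain ⟨l₁, l₂, heq, -⟩ := exists_badpair hRdef hl.1 hch
        exact ⟨y, by rw [heq]; simp, Finset.mem_insert_self _ _⟩
    have hxS₀ : x ∉ S₀ := by
      intro hx
      have h1 := hk _ hPsep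
      rw [Finset.insert_eq_self.2 hx] at h1
      omega
    have hyS₀ : y ∉ S₀ := by
      intro hy
      have h1 := hk _ hQsep
      rw [Finset.insert_eq_self.2 hy] at h1
      omega
    have hScard : S₀.card + 1 = k := by
      have h1 := hk _ hPsep
      have h2 : (insert x S₀).card = S₀.card + 1 := Finset.card_insert_of_notMem hxS₀
      omega
    have hPcard : (insert x S₀).card = k := by
      rw [Finset.card_insert_of_notMem hxS₀]; omega
    have hQcard : (insert y S₀).card = k := by
      rw [Finset.card_insert_of_notMem hyS₀]; omega
    have hsepA : ∀ T : Finset α, DSep Rd A (insert x S₀) T → k ≤ T.card :=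
      sep_bound hRdef hk hS₀
    have hsepB : ∀ T : Finset α, DSep Rd (insert y S₀) B T → k ≤ T.card := by
      intro T hT
      have hkf : ∀ S : Finset α, DSep (flip R) B A S → k ≤ S.card := by
        intro S h
        apply hk
        intro a b l hl ha hb
        exact h.flip a b l hl ha hb
      have hS₀f : DSep (fun cc dd => flip R cc dd ∧ (cc, dd) ≠ (y, x)) B A S₀ := by
        apply hS₀.flip.mono_rel
        intro cc dd hcd
        refine ⟨hcd.1, ?_⟩
        intro h
        rw [Prod.mk.injEq] at h
        exact hcd.2 (by rw [Prod.mk.injEq]; exact ⟨h.2, h.1⟩)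
      have hbound := sep_bound (R := flip R)
        (Rd := fun cc dd => flip R cc dd ∧ (cc, dd) ≠ (y, x)) (x := y) (y := x)
        (fun _ _ => Iff.rfl) hkf hS₀f
      apply hbound T
      apply hT.flip.mono_rel
      intro cc dd hcd
      refine ⟨hcd.1, ?_⟩
      intro h
      rw [Prod.mk.injEq] at h
      exact hcd.2 (by rw [Prod.mk.injEq]; exact ⟨h.2, h.1⟩)
    obtain ⟨fA, gA, FA, hFA, hfAA, hgAP, hdisjA⟩ := ih Rd hn' A (insert x S₀) k hsepA
    obtain ⟨fB, gB, FB, hFB, hfBQ, hgBB, hdisjB⟩ := ih Rd hn' (insert y S₀) B k hsepB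
    -- truncate the A-side walks at their first hit of `insert x S₀`
    have hWA0 : ∀ i, ∃ (Wl : List α) (ci : α) (l₀ : List α), Wl = l₀ ++ [ci] ∧
        ci ∈ insert x S₀ ∧ (∀ u ∈ l₀, u ∉ insert x S₀) ∧ DW Rd (fA i) ci Wl ∧
        Wl <+: FA i := by
      intro i
      obtain ⟨ci, l₀, heq, h1, h2, h3⟩ :=
        (hFA i).takeTo' (P := (· ∈ insert x S₀)) ⟨gA i, (hFA i).end_mem, hgAP i⟩
      exact ⟨_, ci, l₀, heq, h1, h2, h3, takeTo_prefix _⟩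
    choose W c l₀ hWeq hcP hl₀ hWA hWpre using hWA0
    have hWsub : ∀ i, ∀ w ∈ W i, w ∈ FA i := fun i w hw => (hWpre i).subset hw
    have hWonly : ∀ i, ∀ w ∈ W i, w ∈ insert x S₀ → w = c i := by
      intro i w hw hwP
      rw [hWeq i] at hw
      rcases List.mem_append.1 hw with hw | hw
      · exact absurd hwP (hl₀ i w hw)
      · simpa using hw
    have hcmemW : ∀ i, c i ∈ W i := by
      intro i; rw [hWeq i]; simp
    -- truncate the B-side walks at their last hit of `insert y S₀`
    have hZB0 : ∀ j, ∃ (Zl : List α) (dj : α) (rr : List α), Zl = dj :: rr ∧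
        dj ∈ insert y S₀ ∧ (∀ u ∈ rr, u ∉ insert y S₀) ∧ DW Rd dj (gB j) Zl ∧
        Zl <:+ FB j := by
      intro j
      obtain ⟨dj, rr, heq, h1, h2, h3⟩ :=
        (hFB j).dropTo' (P := (· ∈ insert y S₀)) ⟨fB j, (hFB j).start_mem, hfBQ j⟩
      exact ⟨_, dj, rr, heq, h1, h2, h3, dropTo_suffix _⟩
    choose Z d rr hZeq hdQ hrr hZB hZsuf using hZB0
    have hZsub : ∀ j, ∀ w ∈ Z j, w ∈ FB j := fun j w hw => (hZsuf j).subset hw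
    have hZonly : ∀ j, ∀ w ∈ Z j, w ∈ insert y S₀ → w = d j := by
      intro j w hw hwQ
      rw [hZeq j] at hw
      rcases List.mem_cons.1 hw with rfl | hw
      · rfl
      · exact absurd hwQ (hrr j w hw)
    have hdmemZ : ∀ j, d j ∈ Z j := by
      intro j; rw [hZeq j]; simp
    -- injectivity and surjectivity of the endpoints
    have hcinj : Function.Injective c := by
      intro i j hij
      by_contra hne
      exact hdisjA i j hne (c i) (hWsub i _ (hcmemW i)) (hWsub j _ (hij ▸ hcmemW j))
    have hdinj : Function.Injective d := by
      intro i j hij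
      by_contra hne
      exact hdisjB i j hne (d i) (hZsub i _ (hdmemZ i)) (hZsub j _ (hij ▸ hdmemZ j))
    have hcsurj : ∀ p ∈ insert x S₀, ∃ i, c i = p := by
      intro p hp
      have himg : Finset.univ.image c = insert x S₀ := by
        apply Finset.eq_of_subset_of_card_le
        · intro q hq
          obtain ⟨i, -, rfl⟩ := Finset.mem_image.1 hq
          exact hcP i
        · rw [Finset.card_image_of_injective _ hcinj, Finset.card_univ, Fintype.card_fin,
            hPcard]
      rw [← himg] at hp
      obtain ⟨i, -, hi⟩ := Finset.mem_image.1 hp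
      exact ⟨i, hi⟩
    have hdsurj : ∀ p ∈ insert y S₀, ∃ j, d j = p := by
      intro p hp
      have himg : Finset.univ.image d = insert y S₀ := by
        apply Finset.eq_of_subset_of_card_le
        · intro q hq
          obtain ⟨i, -, rfl⟩ := Finset.mem_image.1 hq
          exact hdQ i
        · rw [Finset.card_image_of_injective _ hdinj, Finset.card_univ, Fintype.card_fin,
            hQcard]
      rw [← himg] at hp
      obtain ⟨i, -, hi⟩ := Finset.mem_image.1 hp
      exact ⟨i, hi⟩
    -- the matching between the two families
    have htQ : ∀ i, (if c i = x then y else c i) ∈ insert y S₀ := by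
      intro i
      by_cases h : c i = x
      · simp [h]
      · rcases Finset.mem_insert.1 (hcP i) with h' | h'
        · exact absurd h' h
        · simp only [if_neg h]
          exact Finset.mem_insert_of_mem h'
    have hσ0 : ∀ i, ∃ j, d j = (if c i = x then y else c i) := fun i => hdsurj _ (htQ i)
    choose σ hσ using hσ0
    have hσinj : Function.Injective σ := by
      intro i j hij
      have h1 : (if c i = x then y else c i) = (if c j = x then y else c j) := by
        rw [← hσ i, ← hσ j, hij]
      apply hcinj
      by_cases hi : c i = x <;> by_cases hj : c j = x
      · rw [hi, hj]
      · rw [if_pos hi, if_neg hj] at h1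
        rcases Finset.mem_insert.1 (hcP j) with h' | h'
        · exact absurd h' hj
        · exact absurd (h1 ▸ h') hyS₀
      · rw [if_neg hi, if_pos hj] at h1
        rcases Finset.mem_insert.1 (hcP i) with h' | h'
        · exact absurd h' hi
        · exact absurd (h1 ▸ h') hyS₀
      · rwa [if_neg hi, if_neg hj] at h1
    -- key disjointness lemma
    have key : ∀ i j w, w ∈ W i → w ∈ Z j →
        (w = c i ∧ c i ∈ S₀) ∨ (w = d j ∧ d j ∈ S₀) := by
      intro i j w hwW hwZ
      obtain ⟨c', l₀', hueq, hc', hl₀', hu⟩ :=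
        (hWA i).takeTo' (P := (· = w)) ⟨w, hwW, rfl⟩
      have hc'' : c' = w := hc'
      rw [hc''] at hu
      obtain ⟨d', r', hveq, hd', hr', hv⟩ :=
        (hZB j).dropTo' (P := (· = w)) ⟨w, hwZ, rfl⟩
      have hd'' : d' = w := hd'
      rw [hd''] at hv
      obtain ⟨hglue, hgluemem⟩ := hu.append hv
      obtain ⟨t, ht, htS₀⟩ := hS₀ _ _ _ hglue (hfAA i) (hgBB j)
      rcases hgluemem t ht with htu | htv
      · have htW : t ∈ W i := mem_of_mem_takeTo htu
        have htci : t = c i := hWonly i t htW (Finset.mem_insert_of_mem htS₀)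
        left
        have hciu : c i ∈ MengerAux.takeTo (· = w) (W i) := htci ▸ htu
        have hci_nl₀ : c i ∉ l₀ i := fun h => hl₀ i _ h (hcP i)
        have hueq' : MengerAux.takeTo (· = w) (W i) = l₀ i ++ [c i] :=
          prefix_concat_eq ((hWeq i) ▸ takeTo_prefix (W i)) hciu hci_nl₀
        have hlast := hu.2.2
        rw [hueq'] at hlast
        simp only [List.getLast?_append_of_ne_nil _ (by simp : [c i] ≠ ([] : List α)),
          List.getLast?_singleton, Option.some_inj] at hlast
        exact ⟨hlast.symm, htci ▸ htS₀⟩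
      · have htv' : t ∈ MengerAux.dropTo (· = w) (Z j) := htv
        have htZ : t ∈ Z j := mem_of_mem_dropTo htv'
        have htdj : t = d j := hZonly j t htZ (Finset.mem_insert_of_mem htS₀)
        right
        have hdjv : d j ∈ MengerAux.dropTo (· = w) (Z j) := htdj ▸ htv'
        have hdj_nr : d j ∉ rr j := fun h => hrr j _ h (hdQ j)
        have hveq' : MengerAux.dropTo (· = w) (Z j) = d j :: rr j :=
          suffix_cons_eq ((hZeq j) ▸ dropTo_suffix (Z j)) hdjv hdj_nr
        have hhead := hv.2.1
        rw [hveq'] at hhead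
        simp only [List.head?_cons, Option.some_inj] at hhead
        exact ⟨hhead.symm, htdj ▸ htS₀⟩
    -- assemble the final family of walks
    refine ⟨fA, fun i => gB (σ i),
      fun i => if c i = x then W i ++ Z (σ i) else W i ++ (Z (σ i)).tail,
      ?_, hfAA, fun i => hgBB (σ i), ?_⟩
    · intro i
      show DW R (fA i) (gB (σ i)) (if c i = x then W i ++ Z (σ i) else W i ++ (Z (σ i)).tail)
      by_cases h : c i = x
      · rw [if_pos h]
        have h1 : DW R (fA i) x (W i) := h ▸ (hWA i).mono hRdR
        have hd : d (σ i) = y := by rw [hσ i, if_pos h]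
        have h2 : DW R y (gB (σ i)) (Z (σ i)) := hd ▸ (hZB (σ i)).mono hRdR
        exact h1.appendEdge h2 hxy
      · rw [if_neg h]
        have hd : d (σ i) = c i := by rw [hσ i, if_neg h]
        have h1 : DW R (fA i) (c i) (W i) := (hWA i).mono hRdR
        have h2 : DW R (c i) (gB (σ i)) (Z (σ i)) := hd ▸ (hZB (σ i)).mono hRdR
        exact (h1.append h2).1
    · intro i j hij w hwi hwj
      have hwi' : w ∈ (if c i = x then W i ++ Z (σ i) else W i ++ (Z (σ i)).tail) := hwi
      have hwj' : w ∈ (if c j = x then W j ++ Z (σ j) else W j ++ (Z (σ j)).tail) := hwj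
      have hmemsplit : ∀ i', w ∈ (if c i' = x then W i' ++ Z (σ i')
          else W i' ++ (Z (σ i')).tail) → w ∈ W i' ∨ w ∈ Z (σ i') := by
        intro i' hw
        by_cases h : c i' = x
        · rw [if_pos h] at hw
          exact List.mem_append.1 hw
        · rw [if_neg h] at hw
          rcases List.mem_append.1 hw with hw | hw
          · exact Or.inl hw
          · exact Or.inr (List.mem_of_mem_tail hw)
      rcases hmemsplit i hwi' with h1 | h1 <;> rcases hmemsplit j hwj' with h2 | h2
      · exact hdisjA i j hij w (hWsub i w h1) (hWsub j w h2)
      · rcases key i (σ j) w h1 h2 with ⟨rfl, hciS⟩ | ⟨rfl, hdS⟩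
        · have h3 := hZonly (σ j) (c i) h2 (Finset.mem_insert_of_mem hciS)
          rw [hσ j] at h3
          by_cases hj : c j = x
          · rw [if_pos hj] at h3
            exact hyS₀ (h3 ▸ hciS)
          · rw [if_neg hj] at h3
            exact hij (hcinj h3)
        · have h3 := hWonly i (d (σ j)) h1 (Finset.mem_insert_of_mem hdS)
          have hciS : c i ∈ S₀ := h3 ▸ hdS
          have hcix : c i ≠ x := fun h => hxS₀ (h ▸ hciS)
          have h4 : d (σ i) = c i := by rw [hσ i, if_neg hcix]
          have h5 : σ i = σ j := hdinj (by rw [h4, ← h3])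
          exact hij (hσinj h5)
      · rcases key j (σ i) w h2 h1 with ⟨rfl, hcjS⟩ | ⟨rfl, hdS⟩
        · have h3 := hZonly (σ i) (c j) h1 (Finset.mem_insert_of_mem hcjS)
          rw [hσ i] at h3
          by_cases hi : c i = x
          · rw [if_pos hi] at h3
            exact hyS₀ (h3 ▸ hcjS)
          · rw [if_neg hi] at h3
            exact hij (hcinj h3.symm)
        · have h3 := hWonly j (d (σ i)) h2 (Finset.mem_insert_of_mem hdS)
          have hcjS : c j ∈ S₀ := h3 ▸ hdS
          have hcjx : c j ≠ x := fun h => hxS₀ (h ▸ hcjS)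
          have h4 : d (σ j) = c j := by rw [hσ j, if_neg hcjx]
          have h5 : σ i = σ j := hdinj (by rw [h4, ← h3])
          exact hij (hσinj h5)
      · exact hdisjB (σ i) (σ j) (fun h => hij (hσinj h)) w
          (hZsub (σ i) w h1) (hZsub (σ j) w h2)

end Menger

section GraphSide

open SimpleGraph

variable {V : Type*} [Fintype V] [DecidableEq V]

theorem getLast?_cons_of_ne_nil' {a : V} {l : List V} (h : l ≠ []) :
    (a :: l).getLast? = l.getLast? := by
  rw [show a :: l = [a] ++ l from rfl, List.getLast?_append_of_ne_nil _ h]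

theorem walk_to_DW {G : SimpleGraph V} {x : V} {a b : V} (q : G.Walk a b)
    (h : ∀ w ∈ q.support, w ≠ x) :
    DW (fun c d => G.Adj c d ∧ c ≠ x ∧ d ≠ x) a b q.support := by
  induction q with
  | nil =>
    rw [SimpleGraph.Walk.support_nil]
    exact DW.singleton _
  | @cons u v w hadj q ih =>
    rw [SimpleGraph.Walk.support_cons]
    have hx' : ∀ z ∈ q.support, z ≠ x := fun z hz =>
      h z (by rw [SimpleGraph.Walk.support_cons]; exact List.mem_cons_of_mem _ hz)
    have hq := ih hx'
    refine ⟨?_, by simp, ?_⟩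
    · refine List.isChain_cons.2 ⟨?_, hq.1⟩
      intro z hz
      rw [hq.2.1] at hz
      have hv : v = z := by simpa using hz
      exact hv ▸ ⟨hadj, h u (by simp), hx' v (SimpleGraph.Walk.start_mem_support q)⟩
    · rw [getLast?_cons_of_ne_nil' q.support_ne_nil]
      exact hq.2.2

theorem DW_toWalk {G : SimpleGraph V} {R : V → V → Prop} (hRG : ∀ c d, R c d → G.Adj c d) :
    ∀ (l : List V) (a b : V), DW R a b l → ∃ w : G.Walk a b, w.support = l
  | [], _, _, h => absurd rfl h.ne_nil
  | [c], a, b, h => by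
    have ha : a = c := by have := h.2.1; simp_all
    subst ha
    have hb : b = a := by have := h.2.2; simp_all
    subst hb
    exact ⟨SimpleGraph.Walk.nil, by simp⟩
  | c :: c₂ :: t, a, b, h => by
    have ha : a = c := by have := h.2.1; simp_all
    subst ha
    have h1 : R a c₂ := (List.isChain_cons_cons.1 h.1).1
    have h2 : DW R c₂ b (c₂ :: t) := ⟨(List.isChain_cons_cons.1 h.1).2, by simp, by
      have h3 := h.2.2
      rwa [show a :: c₂ :: t = [a] ++ (c₂ :: t) from rfl,
        List.getLast?_append_of_ne_nil _ (by simp)] at h3⟩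
    obtain ⟨q, hq⟩ := DW_toWalk hRG (c₂ :: t) c₂ b h2
    exact ⟨SimpleGraph.Walk.cons (hRG _ _ h1) q, by simp [hq]⟩

theorem DW_avoid {R : V → V → Prop} {x : V} (hR : ∀ c d, R c d → c ≠ x ∧ d ≠ x) :
    ∀ (l : List V) (a b : V), DW R a b l → a ≠ x → ∀ w ∈ l, w ≠ x
  | [], _, _, h, _, _, _ => absurd rfl h.ne_nil
  | [c], a, b, h, hax, w, hw => by
    have ha : a = c := by have := h.2.1; simp_all
    subst ha
    simp only [List.mem_singleton] at hw
    exact hw ▸ hax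
  | c :: c₂ :: t, a, b, h, hax, w, hw => by
    have ha : a = c := by have := h.2.1; simp_all
    subst ha
    have h1 : R a c₂ := (List.isChain_cons_cons.1 h.1).1
    have h2 : DW R c₂ b (c₂ :: t) := ⟨(List.isChain_cons_cons.1 h.1).2, by simp, by
      have h3 := h.2.2
      rwa [show a :: c₂ :: t = [a] ++ (c₂ :: t) from rfl,
        List.getLast?_append_of_ne_nil _ (by simp)] at h3⟩
    rcases List.mem_cons.1 hw with rfl | hw
    · exact hax
    · exact DW_avoid hR (c₂ :: t) c₂ b h2 (hR _ _ h1).2 w hw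

end GraphSide

end MengerAux


open MengerAux

/-- Fan version of Menger's theorem: in an s-connected graph, from a vertex x there are
min(s, |Y|) paths to distinct vertices of Y, pairwise disjoint except at x, each meeting
Y only in its endpoint. -/
theorem stmt_13 [Fintype V] [DecidableEq V] (G : SimpleGraph V) (s : ℕ) (hs : 1 ≤ s)
    (hG : SConnected G s) (x : V) (Y : Finset V) (hxY : x ∉ Y) :
    ∃ y : Fin (min s Y.card) → V, Function.Injective y ∧ (∀ i, y i ∈ Y) ∧
      ∃ p : ∀ i, G.Walk x (y i),
        (∀ i, (p i).IsPath) ∧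
        (∀ i, ∀ w ∈ (p i).support, w ∈ Y → w = y i) ∧
        (∀ i j, i ≠ j → ∀ w, w ∈ (p i).support → w ∈ (p j).support → w = x) := by
  classical
  have hRa : ∀ c d : V, (G.Adj c d ∧ c ≠ x ∧ d ≠ x) → c ≠ x ∧ d ≠ x := fun c d h => h.2
  have hRG : ∀ c d : V, (G.Adj c d ∧ c ≠ x ∧ d ≠ x) → G.Adj c d := fun c d h => h.1
  -- the separation hypothesis for the digraph Menger theorem
  have hk : ∀ S : Finset V, DSep (fun a b => G.Adj a b ∧ a ≠ x ∧ b ≠ x)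
      (G.neighborFinset x) Y S → min s Y.card ≤ S.card := by
    intro S hsep
    by_contra hlt
    push_neg at hlt
    have hcs : ((S.erase x : Finset V) : Set V).ncard < s := by
      rw [Set.ncard_coe_finset]
      have h1 := Finset.card_erase_le (a := x) (s := S)
      omega
    have hconn := hG.2 _ hcs
    have hxmem : x ∈ (((S.erase x : Finset V) : Set V))ᶜ := by simp
    obtain ⟨yv, hyY, hyS⟩ : ∃ yv ∈ Y, yv ∉ S := by
      by_contra hno
      push_neg at hno
      have h1 : Y ⊆ S := hno
      have h2 := Finset.card_le_card h1
      omega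
    have hymem : yv ∈ (((S.erase x : Finset V) : Set V))ᶜ := by
      intro h
      rw [Finset.mem_coe, Finset.mem_erase] at h
      exact hyS h.2
    obtain ⟨p⟩ := hconn.preconnected ⟨x, hxmem⟩ ⟨yv, hymem⟩
    have hxyv : x ≠ yv := fun h => hxY (h ▸ hyY)
    set p' : G.Walk x yv := p.map (SimpleGraph.Embedding.induce _).toHom with hp'def
    have hp'S : ∀ w ∈ p'.support, w ∉ S.erase x := by
      intro w hw
      replace hw : w ∈ p.support.map (SimpleGraph.Embedding.induce (G := G) _).toHom := by
        rw [← SimpleGraph.Walk.support_map]; exact hw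
      obtain ⟨⟨w', hw'⟩, -, rfl⟩ := List.mem_map.1 hw
      exact fun hmem => hw' (Finset.mem_coe.2 hmem)
    have hsub := SimpleGraph.Walk.support_toPath_subset p'
    have hpath := p'.toPath.2
    have hπS : ∀ w ∈ (p'.toPath : G.Walk x yv).support, w ∉ S.erase x :=
      fun w hw => hp'S w (hsub hw)
    cases hc : (p'.toPath : G.Walk x yv) with
    | nil => exact hxyv rfl
    | @cons _ u _ hadj q =>
      rw [hc] at hπS hpath
      rw [SimpleGraph.Walk.cons_isPath_iff] at hpath
      have hqx : ∀ w ∈ q.support, w ≠ x := by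
        intro w hw hwx
        exact hpath.2 (hwx ▸ hw)
      have hDW := walk_to_DW (x := x) q hqx
      obtain ⟨w, hw, hwS⟩ := hsep u yv q.support hDW
        ((SimpleGraph.mem_neighborFinset G x u).2 hadj) hyY
      have hwerase : w ∈ S.erase x := Finset.mem_erase.2 ⟨hqx w hw, hwS⟩
      exact hπS w (by rw [SimpleGraph.Walk.support_cons]; exact List.mem_cons_of_mem _ hw)
        hwerase
  obtain ⟨f, g, F, hF, hfN, hgY, hdisj⟩ :=
    dmenger _ (fun a b => G.Adj a b ∧ a ≠ x ∧ b ≠ x) le_rfl (G.neighborFinset x) Y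
      (min s Y.card) hk
  -- truncate each walk at its first hit of Y
  have htr : ∀ i, ∃ ci, ci ∈ Y ∧
      DW (fun a b => G.Adj a b ∧ a ≠ x ∧ b ≠ x) (f i) ci (takeTo (· ∈ Y) (F i)) ∧
      ∀ w ∈ takeTo (· ∈ Y) (F i), w ∈ Y → w = ci :=
    fun i => (hF i).takeTo ⟨g i, (hF i).end_mem, hgY i⟩
  choose yf hyfY hDWt honly using htr
  have hyinj : Function.Injective yf := by
    intro i j hij
    by_contra hne
    exact hdisj i j hne (yf i) (mem_of_mem_takeTo (hDWt i).end_mem)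
      (mem_of_mem_takeTo (hij ▸ (hDWt j).end_mem))
  have hwex : ∀ i, ∃ w : G.Walk (f i) (yf i), w.support = takeTo (· ∈ Y) (F i) :=
    fun i => DW_toWalk hRG _ _ _ (hDWt i)
  choose wlks hwlks using hwex
  have hfadj : ∀ i, G.Adj x (f i) := fun i => (SimpleGraph.mem_neighborFinset G x (f i)).1 (hfN i)
  have hfx : ∀ i, f i ≠ x := fun i => (hfadj i).ne.symm
  have havoid : ∀ i, ∀ w ∈ takeTo (· ∈ Y) (F i), w ≠ x :=
    fun i => DW_avoid hRa _ _ _ (hDWt i) (hfx i)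
  have hsubi : ∀ i, ∀ w ∈ ((wlks i).toPath : G.Walk (f i) (yf i)).support,
      w ∈ takeTo (· ∈ Y) (F i) := by
    intro i w hw
    have := SimpleGraph.Walk.support_toPath_subset (wlks i) hw
    rwa [hwlks i] at this
  refine ⟨yf, hyinj, hyfY, fun i => SimpleGraph.Walk.cons (hfadj i) ((wlks i).toPath :
    G.Walk (f i) (yf i)), ?_, ?_, ?_⟩
  · intro i
    rw [SimpleGraph.Walk.cons_isPath_iff]
    refine ⟨(wlks i).toPath.2, ?_⟩
    intro hx
    exact havoid i x (hsubi i x hx) rfl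
  · intro i w hw hwY
    rw [SimpleGraph.Walk.support_cons] at hw
    rcases List.mem_cons.1 hw with rfl | hw
    · exact absurd hwY hxY
    · exact honly i w (hsubi i w hw) hwY
  · intro i j hij w hwi hwj
    rw [SimpleGraph.Walk.support_cons] at hwi hwj
    rcases List.mem_cons.1 hwi with rfl | hwi
    · rfl
    rcases List.mem_cons.1 hwj with rfl | hwj
    · rfl
    exact absurd (hdisj i j hij w (mem_of_mem_takeTo (hsubi i w hwi))
      (mem_of_mem_takeTo (hsubi j w hwj))) (fun h => h)
end
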